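/- arXiv:math/0112067 — 9 statements merged into one kernel-verified Lean document; each statement's English description precedes it below -/
import Mathlib

section
/- Let S be a finite set with n elements and let A_1, ..., A_m be distinct subsets of S such that A_k is not a subset of A_j whenever k ≠ j. Then m ≤ C(n, ⌊n/2⌋) (the binomial coefficient of n over ⌊n/2⌋). Moreover, for every n this bound is attained by some such family. -/
/-- **Sperner's theorem.** If `A_1, …, A_m` are distinct subsets of an `n`-element set `S`
such that `A_k ⊄ A_j` for `k ≠ j`, then `m ≤ C(n, ⌊n/2⌋)`; moreover this bound is attained. -/
theorem sperner {α : Type*} [Fintype α] [DecidableEq α] (n : ℕ)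
    (hcard : Fintype.card α = n) :
    (∀ (m : ℕ) (A : Fin m → Finset α), Function.Injective A →
      (∀ j k : Fin m, j ≠ k → ¬ A k ⊆ A j) → m ≤ n.choose (n / 2)) ∧
    (∃ (m : ℕ) (A : Fin m → Finset α), Function.Injective A ∧
      (∀ j k : Fin m, j ≠ k → ¬ A k ⊆ A j) ∧ m = n.choose (n / 2)) := by
  subst hcard
  constructor
  · intro m A hA hno
    have hanti : IsAntichain (· ⊆ ·)
        ((Finset.image A Finset.univ : Finset (Finset α)) : Set (Finset α)) := by
      rintro x hx y hy hxy hsub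
      simp only [Finset.coe_image, Finset.coe_univ, Set.image_univ] at hx hy
      obtain ⟨j, rfl⟩ := hx
      obtain ⟨k, rfl⟩ := hy
      exact hno k j (fun h => hxy (by rw [h])) hsub
    have := IsAntichain.sperner hanti
    rwa [Finset.card_image_of_injective _ hA, Finset.card_univ, Fintype.card_fin] at this
  · classical
    let 𝒜 : Finset (Finset α) := Finset.powersetCard (Fintype.card α / 2) Finset.univ
    have hc : 𝒜.card = (Fintype.card α).choose (Fintype.card α / 2) := by
      simp [𝒜, Finset.card_powersetCard]
    refine ⟨𝒜.card, fun i => (𝒜.equivFin.symm i : Finset α), ?_, ?_, hc⟩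
    · intro i j h
      exact 𝒜.equivFin.symm.injective (Subtype.ext h)
    · intro j k hjk hsub
      have hj := (𝒜.equivFin.symm j).2
      have hk := (𝒜.equivFin.symm k).2
      rw [Finset.mem_powersetCard] at hj hk
      have heq : ((𝒜.equivFin.symm k : Finset α)) = (𝒜.equivFin.symm j : Finset α) :=
        Finset.eq_of_subset_of_card_le hsub (by rw [hj.2, hk.2])
      exact hjk (𝒜.equivFin.symm.injective (Subtype.ext heq)).symm
end

section
/- Let S be a finite set with n elements and let {A_1, ..., A_m} be a family of m distinct subsets of S that is r-chain-free (contains no chain with r+1 elements). Then m is at most the sum of the r largest binomial coefficients C(n,k) for 0 ≤ k ≤ n. Moreover, for every n and r this bound is attained by some such family. -/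
/-- A family `F` of subsets is `r`-chain-free if it contains no chain with `r+1` elements,
i.e. every chain contained in `F` has at most `r` elements. -/
def ChainFree {α : Type*} (F : Set (Finset α)) (r : ℕ) : Prop :=
  ∀ C : Finset (Finset α), ↑C ⊆ F → IsChain (· ⊆ ·) (C : Set (Finset α)) → C.card ≤ r

/-- The sum of the `R` largest values of `f` on `s` (extended by zeros if `R > s.card`):
the maximum of `∑ i ∈ t, f i` over subsets `t ⊆ s` with `t.card ≤ R`. -/
def sumLargest {ι : Type*} (s : Finset ι) (f : ι → ℕ) (R : ℕ) : ℕ :=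
  (s.powerset.filter fun t => t.card ≤ R).sup fun t => ∑ i ∈ t, f i

open Finset

lemma choose_mono_le_half {n k j : ℕ} (hkj : k ≤ j) (hj : 2 * j ≤ n) :
    n.choose k ≤ n.choose j := by
  induction j with
  | zero => simp [Nat.le_zero.mp hkj]
  | succ j ih =>
    rcases Nat.eq_or_lt_of_le hkj with rfl | h
    · exact le_rfl
    · exact (ih (Nat.le_of_lt_succ h) (by omega)).trans
        (Nat.choose_le_succ_of_lt_half_left (by omega))

lemma choose_nu {n k : ℕ} (hk : k ≤ n) : n.choose k = n.choose (min k (n - k)) := by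
  rcases le_total k (n - k) with h' | h'
  · rw [min_eq_left h']
  · rw [min_eq_right h', Nat.choose_symm hk]

lemma choose_le_choose_of_nu {n k j : ℕ} (hk : k ≤ n) (hj : j ≤ n)
    (h : min k (n - k) ≤ min j (n - j)) : n.choose k ≤ n.choose j := by
  rw [choose_nu hk, choose_nu hj]
  exact choose_mono_le_half h (by omega)

lemma sumLargest_eq (n r : ℕ) :
    sumLargest (Finset.range (n + 1)) (fun k => n.choose k) r
      = ∑ k ∈ Finset.Ico ((n + 1 - r) / 2) (min ((n + 1 - r) / 2 + r) (n + 1)),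
          n.choose k := by
  set l := (n + 1 - r) / 2 with hl
  set u := min (l + r) (n + 1) with hu
  set T := Finset.Ico l u with hT
  have hTsub : T ⊆ Finset.range (n + 1) := by
    intro k hk; rw [hT, mem_Ico] at hk; rw [mem_range]; omega
  have hTcard : T.card = u - l := Nat.card_Ico l u
  apply le_antisymm
  · apply Finset.sup_le
    intro t ht
    rw [mem_filter, mem_powerset] at ht
    obtain ⟨hts, htc⟩ := ht
    rcases le_or_gt r (n + 1) with hr | hr
    · have hulr : u = l + r := by rw [hu]; omega
      have hTc : T.card = r := by rw [hTcard]; omega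
      have hcards : (t \ T).card ≤ (T \ t).card := by
        have h1 := Finset.card_sdiff_add_card_inter t T
        have h2 := Finset.card_sdiff_add_card_inter T t
        rw [Finset.inter_comm T t] at h2
        omega
      have hleB : ∀ k ∈ t \ T, n.choose k ≤ n.choose l := by
        intro k hk
        rw [mem_sdiff, hT, mem_Ico] at hk
        have hkn : k ≤ n := by have := hts hk.1; rw [mem_range] at this; omega
        exact choose_le_choose_of_nu hkn (by omega) (by omega)
      have hBle : ∀ j ∈ T \ t, n.choose l ≤ n.choose j := by
        intro j hj
        rw [mem_sdiff, hT, mem_Ico] at hj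
        exact choose_le_choose_of_nu (by omega) (by omega) (by omega)
      calc ∑ k ∈ t, n.choose k
          = ∑ k ∈ t ∩ T, n.choose k + ∑ k ∈ t \ T, n.choose k :=
            (Finset.sum_inter_add_sum_sdiff t T _).symm
        _ ≤ ∑ k ∈ t ∩ T, n.choose k + ∑ k ∈ T \ t, n.choose k := by
            gcongr ?_ + ?_
            · exact le_rfl
            · calc ∑ k ∈ t \ T, n.choose k ≤ (t \ T).card • n.choose l :=
                    Finset.sum_le_card_nsmul _ _ _ hleB
                _ ≤ (T \ t).card • n.choose l := by
                    simp only [smul_eq_mul]; exact Nat.mul_le_mul_right _ hcards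
                _ ≤ ∑ k ∈ T \ t, n.choose k := Finset.card_nsmul_le_sum _ _ _ hBle
        _ = ∑ k ∈ T ∩ t, n.choose k + ∑ k ∈ T \ t, n.choose k := by
            rw [Finset.inter_comm]
        _ = ∑ k ∈ T, n.choose k := Finset.sum_inter_add_sum_sdiff T t _
    · have : T = Finset.range (n + 1) := by
        rw [hT]; ext k; rw [mem_Ico, mem_range]; omega
      rw [this]
      exact Finset.sum_le_sum_of_subset hts
  · apply Finset.le_sup (f := fun t => ∑ i ∈ t, n.choose i)
    rw [mem_filter, mem_powerset]
    exact ⟨hTsub, by rw [hTcard]; omega⟩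

lemma chainFree_sum_div_le {α : Type*} [Fintype α] [DecidableEq α]
    {F : Finset (Finset α)} {r : ℕ} (hF : ChainFree (↑F : Set (Finset α)) r) :
    ∑ k ∈ range (Fintype.card α + 1), ((F # k).card : ℚ) / ((Fintype.card α).choose k)
      ≤ r := by
  classical
  set P : Finset α → Finset (Finset α) → Prop := fun A C =>
    A ∈ C ∧ (∀ B ∈ C, B ⊆ A) ∧ IsChain (· ⊆ ·) (C : Set (Finset α)) with hP
  set h : Finset α → ℕ := fun A => (F.powerset.filter (P A)).sup Finset.card with hdef
  have hub : ∀ A, h A ≤ r := by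
    intro A
    apply Finset.sup_le
    intro C hC
    rw [mem_filter, mem_powerset] at hC
    exact hF C (Finset.coe_subset.mpr hC.1) hC.2.2.2
  have hsingle : ∀ A ∈ F, ({A} : Finset (Finset α)) ∈ F.powerset.filter (P A) := by
    intro A hA
    rw [mem_filter, mem_powerset]
    refine ⟨singleton_subset_iff.mpr hA, mem_singleton_self A, ?_, ?_⟩
    · intro B hB; rw [mem_singleton] at hB; subst hB; exact subset_rfl
    · rw [coe_singleton]; exact Set.subsingleton_singleton.isChain
  have hone : ∀ A ∈ F, 1 ≤ h A := by
    intro A hA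
    calc 1 = ({A} : Finset (Finset α)).card := (card_singleton A).symm
      _ ≤ h A := Finset.le_sup (hsingle A hA)
  have hmono : ∀ A ∈ F, ∀ B ∈ F, A ⊂ B → h A < h B := by
    intro A hA B hB hAB
    obtain ⟨C, hC, hCsup⟩ := Finset.exists_mem_eq_sup (F.powerset.filter (P A))
      ⟨{A}, hsingle A hA⟩ Finset.card
    rw [mem_filter, mem_powerset] at hC
    obtain ⟨hCF, _, hCle, hCchain⟩ := hC
    have hBnotC : B ∉ C := fun hBC => (hAB.2 (hCle B hBC)).elim
    have hins : insert B C ∈ F.powerset.filter (P B) := by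
      rw [mem_filter, mem_powerset]
      refine ⟨insert_subset hB hCF, mem_insert_self B C, ?_, ?_⟩
      · intro X hX
        rcases mem_insert.mp hX with rfl | hX
        · exact subset_rfl
        · exact (hCle X hX).trans hAB.1
      · rw [coe_insert]
        exact hCchain.insert fun X hX _ => Or.inr ((hCle X hX).trans hAB.1)
    calc h A = C.card := hCsup
      _ < (insert B C).card := by rw [card_insert_of_notMem hBnotC]; omega
      _ ≤ h B := Finset.le_sup hins
  set L : ℕ → Finset (Finset α) := fun i => F.filter (fun A => h A = i) with hL
  have hanti : ∀ i, IsAntichain (· ⊆ ·) ((L i : Finset (Finset α)) : Set (Finset α)) := by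
    intro i A hA B hB hne hsub
    rw [Finset.mem_coe, hL, mem_filter] at hA hB
    have : h A < h B := hmono A hA.1 B hB.1 ⟨hsub, fun hBA =>
      hne (Finset.Subset.antisymm hsub hBA)⟩
    omega
  have hfib : ∀ k i, (F # k).filter (fun A => h A = i) = (L i) # k := by
    intro k i
    ext A
    simp only [mem_filter, mem_slice, hL]
    tauto
  have hkey : ∀ k, ((F # k).card : ℚ) = ∑ i ∈ Icc 1 r, (((L i) # k).card : ℚ) := by
    intro k
    rw [← Nat.cast_sum]
    norm_cast
    rw [Finset.card_eq_sum_card_fiberwise (f := h) (t := Icc 1 r)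
      (fun A hA => by rw [Finset.mem_coe, mem_Icc]; exact ⟨hone A (mem_slice.mp hA).1, hub A⟩)]
    exact Finset.sum_congr rfl fun i _ => by rw [hfib]
  calc ∑ k ∈ range (Fintype.card α + 1), ((F # k).card : ℚ) / ((Fintype.card α).choose k)
      = ∑ k ∈ range (Fintype.card α + 1), ∑ i ∈ Icc 1 r,
          (((L i) # k).card : ℚ) / ((Fintype.card α).choose k) := by
        refine Finset.sum_congr rfl fun k _ => ?_
        rw [hkey k, Finset.sum_div]
    _ = ∑ i ∈ Icc 1 r, ∑ k ∈ range (Fintype.card α + 1),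
          (((L i) # k).card : ℚ) / ((Fintype.card α).choose k) := Finset.sum_comm
    _ ≤ ∑ i ∈ Icc 1 r, 1 :=
        Finset.sum_le_sum fun i _ => Finset.sum_card_slice_div_choose_le_one (hanti i)
    _ = r := by rw [Finset.sum_const, Nat.card_Icc]; simp

lemma arith_main {n r : ℕ} (hr : 1 ≤ r) (hrn : r ≤ n + 1) (c : ℕ → ℕ)
    (hc : ∀ k ∈ range (n + 1), c k ≤ n.choose k)
    (hsum : ∑ k ∈ range (n + 1), (c k : ℚ) / (n.choose k) ≤ r) :
    ∑ k ∈ range (n + 1), c k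
      ≤ ∑ k ∈ Ico ((n + 1 - r) / 2) ((n + 1 - r) / 2 + r), n.choose k := by
  set l := (n + 1 - r) / 2 with hl
  set T := Finset.Ico l (l + r) with hT
  have hTR : T ⊆ range (n + 1) := by
    intro k hk; rw [hT, mem_Ico] at hk; rw [mem_range]; omega
  have hTcard : T.card = r := by rw [hT, Nat.card_Ico]; omega
  have hbpos : ∀ k ∈ range (n + 1), (0 : ℚ) < n.choose k := by
    intro k hk; rw [mem_range] at hk
    exact_mod_cast Nat.choose_pos (by omega)
  have hBle : ∀ j ∈ T, (n.choose l : ℚ) ≤ n.choose j := by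
    intro j hj; rw [hT, mem_Ico] at hj
    exact_mod_cast choose_le_choose_of_nu (by omega) (by omega) (by omega)
  have hleB : ∀ k ∈ range (n + 1) \ T, (n.choose k : ℚ) ≤ n.choose l := by
    intro k hk
    rw [mem_sdiff, mem_range, hT, mem_Ico] at hk
    exact_mod_cast choose_le_choose_of_nu (by omega) (by omega) (by omega)
  have hBpos : (0 : ℚ) ≤ n.choose l := by positivity
  have hsplit : ∑ k ∈ range (n + 1) \ T, (c k : ℚ) / n.choose k
      + ∑ k ∈ T, (c k : ℚ) / n.choose k
      = ∑ k ∈ range (n + 1), (c k : ℚ) / n.choose k := Finset.sum_sdiff hTR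
  have key : ∑ k ∈ range (n + 1) \ T, (c k : ℚ)
      ≤ ∑ j ∈ T, ((n.choose j : ℚ) - c j) := by
    have hdivnn : ∀ k ∈ range (n + 1), (0 : ℚ) ≤ (c k : ℚ) / n.choose k := by
      intro k hk; positivity
    calc ∑ k ∈ range (n + 1) \ T, (c k : ℚ)
        = ∑ k ∈ range (n + 1) \ T, ((c k : ℚ) / n.choose k) * n.choose k := by
          refine Finset.sum_congr rfl fun k hk => ?_
          rw [div_mul_cancel₀ _ (ne_of_gt (hbpos k (mem_sdiff.mp hk).1))]
      _ ≤ ∑ k ∈ range (n + 1) \ T, ((c k : ℚ) / n.choose k) * n.choose l := by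
          refine Finset.sum_le_sum fun k hk => ?_
          exact mul_le_mul_of_nonneg_left (hleB k hk) (hdivnn k (mem_sdiff.mp hk).1)
      _ = (∑ k ∈ range (n + 1) \ T, (c k : ℚ) / n.choose k) * n.choose l := by
          rw [Finset.sum_mul]
      _ ≤ ((r : ℚ) - ∑ k ∈ T, (c k : ℚ) / n.choose k) * n.choose l := by
          apply mul_le_mul_of_nonneg_right _ hBpos
          linarith
      _ = ∑ j ∈ T, ((1 : ℚ) - (c j : ℚ) / n.choose j) * n.choose l := by
          rw [← Finset.sum_mul]
          congr 1
          rw [Finset.sum_sub_distrib, Finset.sum_const, hTcard]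
          simp
      _ ≤ ∑ j ∈ T, ((1 : ℚ) - (c j : ℚ) / n.choose j) * n.choose j := by
          refine Finset.sum_le_sum fun j hj => ?_
          apply mul_le_mul_of_nonneg_left (hBle j hj)
          have hj' := hTR hj
          have h1 : (c j : ℚ) / n.choose j ≤ 1 := by
            rw [div_le_one (hbpos j hj')]
            exact_mod_cast hc j hj'
          linarith
      _ = ∑ j ∈ T, ((n.choose j : ℚ) - c j) := by
          refine Finset.sum_congr rfl fun j hj => ?_
          have hne := ne_of_gt (hbpos j (hTR hj))
          field_simp
  have final : ∑ k ∈ range (n + 1), (c k : ℚ) ≤ ∑ k ∈ T, (n.choose k : ℚ) := by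
    have h2 : ∑ k ∈ range (n + 1) \ T, (c k : ℚ) + ∑ k ∈ T, (c k : ℚ)
        = ∑ k ∈ range (n + 1), (c k : ℚ) := Finset.sum_sdiff hTR
    have h3 : ∑ j ∈ T, ((n.choose j : ℚ) - c j)
        = ∑ j ∈ T, (n.choose j : ℚ) - ∑ j ∈ T, (c j : ℚ) := Finset.sum_sub_distrib _ _
    linarith
  exact_mod_cast final

/-- **Erdős's theorem.** An `r`-chain-free family of `m` distinct subsets of an `n`-element set
satisfies: `m` is at most the sum of the `r` largest binomial coefficients `C(n,k)`, `0 ≤ k ≤ n`;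
moreover this bound is attained for every `n` and `r`. -/
theorem erdos {α : Type*} [Fintype α] [DecidableEq α] (n r : ℕ)
    (hcard : Fintype.card α = n) :
    (∀ (m : ℕ) (𝒜 : Finset (Finset α)), 𝒜.card = m → ChainFree (↑𝒜 : Set (Finset α)) r →
      m ≤ sumLargest (Finset.range (n + 1)) (fun k => n.choose k) r) ∧
    (∃ 𝒜 : Finset (Finset α), ChainFree (↑𝒜 : Set (Finset α)) r ∧
      𝒜.card = sumLargest (Finset.range (n + 1)) (fun k => n.choose k) r) := by
  classical
  subst hcard
  set n := Fintype.card α with hn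
  set l := (n + 1 - r) / 2 with hl
  set u := min (l + r) (n + 1) with hu
  have hIic : Finset.Iic n = Finset.range (n + 1) := by
    ext x; simp [Nat.lt_succ_iff]
  constructor
  · intro m 𝒜 hm hcf
    rcases Nat.eq_zero_or_pos r with rfl | hr
    · -- r = 0 : family must be empty
      have h𝒜 : 𝒜 = ∅ := by
        by_contra hne
        obtain ⟨A, hA⟩ := Finset.nonempty_iff_ne_empty.mpr hne
        have hch : IsChain (· ⊆ ·) (({A} : Finset (Finset α)) : Set (Finset α)) := by
          rw [coe_singleton]; exact Set.subsingleton_singleton.isChain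
        have := hcf {A} (by simp [hA]) hch
        simp at this
      subst h𝒜
      simp at hm
      omega
    · have hmsum : m = ∑ k ∈ range (n + 1), (𝒜 # k).card := by
        rw [← hm, ← Finset.sum_card_slice 𝒜, hIic]
      have hc : ∀ k ∈ range (n + 1), (𝒜 # k).card ≤ n.choose k := by
        intro k hk
        have hsub : 𝒜 # k ⊆ Finset.powersetCard k Finset.univ := by
          intro A hA
          exact Finset.mem_powersetCard_univ.mpr (mem_slice.mp hA).2
        calc (𝒜 # k).card ≤ (Finset.powersetCard k Finset.univ).card :=
              Finset.card_le_card hsub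
          _ = n.choose k := by rw [Finset.card_powersetCard, Finset.card_univ]
      have hsum := chainFree_sum_div_le hcf
      rcases le_or_gt r (n + 1) with hrn | hrn
      · have harith := arith_main hr hrn (fun k => (𝒜 # k).card) hc hsum
        rw [sumLargest_eq]
        have humin : min ((n + 1 - r) / 2 + r) (n + 1) = (n + 1 - r) / 2 + r := by
          omega
        rw [humin]
        omega
      · rw [sumLargest_eq, ← hl, ← hu]
        have hu' : u = n + 1 := by rw [hu]; omega
        have hl' : l = 0 := by rw [hl]; omega
        rw [hu', hl']
        calc m = ∑ k ∈ range (n + 1), (𝒜 # k).card := hmsum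
          _ ≤ ∑ k ∈ range (n + 1), n.choose k := Finset.sum_le_sum hc
          _ = ∑ k ∈ Finset.Ico 0 (n + 1), n.choose k := by
              rw [Finset.range_eq_Ico]
  · refine ⟨Finset.univ.filter (fun A => A.card ∈ Finset.Ico l u), ?_, ?_⟩
    · intro C hC hchain
      have hinj : Set.InjOn Finset.card (C : Set (Finset α)) := by
        intro A hA B hB hAB
        rcases eq_or_ne A B with h | h
        · exact h
        · rcases hchain hA hB h with hsub | hsub
          · exact Finset.eq_of_subset_of_card_le hsub (le_of_eq hAB.symm)
          · exact (Finset.eq_of_subset_of_card_le hsub (le_of_eq hAB)).symm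
      have himg : C.image Finset.card ⊆ Finset.Ico l u := by
        intro k hk
        obtain ⟨A, hA, rfl⟩ := Finset.mem_image.mp hk
        have := hC hA
        rw [Finset.mem_coe, mem_filter] at this
        exact this.2
      calc C.card = (C.image Finset.card).card :=
            (Finset.card_image_of_injOn hinj).symm
        _ ≤ (Finset.Ico l u).card := Finset.card_le_card himg
        _ = u - l := Nat.card_Ico l u
        _ ≤ r := by omega
    · rw [sumLargest_eq, ← hl, ← hu]
      rw [Finset.card_eq_sum_card_fiberwise (f := Finset.card) (t := Finset.Ico l u)
        (s := Finset.univ.filter (fun A : Finset α => A.card ∈ Finset.Ico l u))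
        (fun A hA => (mem_filter.mp hA).2)]
      refine Finset.sum_congr rfl fun k hk => ?_
      have : (Finset.univ.filter (fun A : Finset α => A.card ∈ Finset.Ico l u)).filter
          (fun A => A.card = k) = Finset.powersetCard k Finset.univ := by
        ext A
        simp only [mem_filter, Finset.mem_powersetCard_univ, Finset.mem_univ, true_and]
        constructor
        · rintro ⟨_, h⟩; exact h
        · rintro rfl; exact ⟨hk, rfl⟩
      rw [this, Finset.card_powersetCard, Finset.card_univ]
end

section
/- Let p ≥ 2 and let S be a finite set with n elements. Suppose (A_{j1}, ..., A_{jp}) for j = 1, ..., m are m distinct weak compositions of S into p parts such that for every k ∈ {1,...,p} the set of distinct values {A_{jk} : 1 ≤ j ≤ m} is an antichain. Then m is at most the largest p-multinomial coefficient for n, namely n!/((⌊n/p⌋+1)!)^ρ (⌊n/p⌋!)^{p-ρ} where ρ = n − p⌊n/p⌋. Moreover, for every n and p this bound is attained by some such family. -/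
open Finset
namespace Meshalkin


variable {p : ℕ} {a : Fin p → ℕ}

def pad (p : ℕ) (a : Fin p → ℕ) (j : ℕ) : ℕ := if h : j < p then a ⟨j, h⟩ else 0

def psum (p : ℕ) (a : Fin p → ℕ) (m : ℕ) : ℕ := ∑ j ∈ Finset.range m, pad p a j

lemma pad_coe (k : Fin p) : pad p a k = a k := by simp [pad, k.2]

lemma psum_zero : psum p a 0 = 0 := by simp [psum]

lemma psum_succ (m : ℕ) : psum p a (m + 1) = psum p a m + pad p a m := by
  simp [psum, Finset.sum_range_succ]

lemma psum_mono {m m' : ℕ} (h : m ≤ m') : psum p a m ≤ psum p a m' :=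
  Finset.sum_le_sum_of_subset (Finset.range_subset_range.2 h)

lemma psum_top : psum p a p = ∑ k, a k := by
  rw [psum, ← Fin.sum_univ_eq_sum_range]
  exact Finset.sum_congr rfl fun k _ => pad_coe k

/-- the block index of `i`. -/
def blk (p : ℕ) (a : Fin p → ℕ) (i : ℕ) : ℕ :=
  Nat.find (p := fun k => i < psum p a (k + 1) ∨ p ≤ k + 1) ⟨p, Or.inr (by omega)⟩

lemma blk_lt (hp : 0 < p) (i : ℕ) : blk p a i < p := by
  have h := Nat.find_min' (p := fun k => i < psum p a (k + 1) ∨ p ≤ k + 1)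
    ⟨p, Or.inr (by omega)⟩ (m := p - 1) (Or.inr (by omega))
  unfold blk
  omega

lemma lt_psum_blk_succ (hp : 0 < p) {i : ℕ} (hi : i < psum p a p) :
    i < psum p a (blk p a i + 1) := by
  have h : i < psum p a (blk p a i + 1) ∨ p ≤ blk p a i + 1 :=
    Nat.find_spec (p := fun k => i < psum p a (k + 1) ∨ p ≤ k + 1) ⟨p, Or.inr (by omega)⟩
  have hlt := blk_lt (a := a) hp i
  rcases h with h | h
  · exact h
  · have he : blk p a i + 1 = p := by omega
    rwa [he]

lemma psum_blk_le (i : ℕ) : psum p a (blk p a i) ≤ i := by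
  rcases Nat.eq_zero_or_pos (blk p a i) with h | h
  · rw [h, psum_zero]; omega
  · have hm : ¬(i < psum p a (blk p a i - 1 + 1) ∨ p ≤ blk p a i - 1 + 1) :=
      Nat.find_min (p := fun k => i < psum p a (k + 1) ∨ p ≤ k + 1)
        ⟨p, Or.inr (by omega)⟩ (m := blk p a i - 1) (show blk p a i - 1 < blk p a i by omega)
    have he : blk p a i - 1 + 1 = blk p a i := by omega
    rw [he] at hm
    exact le_of_not_gt (not_or.mp hm).1

lemma blk_eq_iff (hp : 0 < p) {i k : ℕ} (hi : i < psum p a p) (hk : k < p) :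
    blk p a i = k ↔ psum p a k ≤ i ∧ i < psum p a (k + 1) := by
  constructor
  · rintro rfl
    exact ⟨psum_blk_le i, lt_psum_blk_succ hp hi⟩
  · rintro ⟨h1, h2⟩
    by_contra hne
    rcases Nat.lt_or_ge (blk p a i) k with h | h
    · have := psum_mono (a := a) (show blk p a i + 1 ≤ k from h)
      have := psum_blk_le (a := a) i
      have := lt_psum_blk_succ (a := a) hp hi
      omega
    · have hlt : k < blk p a i := by omega
      have := psum_mono (a := a) (show k + 1 ≤ blk p a i from hlt)
      have := psum_blk_le (a := a) i
      omega




/-- Bijections commuting with fibrations correspond to families of fiber bijections. -/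
def fiberEquiv {β γ δ : Type*} (g : β → δ) (h : γ → δ) :
    {e : β ≃ γ // ∀ x, h (e x) = g x} ≃ ∀ d, ({x // g x = d} ≃ {y // h y = d}) where
  toFun e d := (e : β ≃ γ).subtypeEquiv (fun x => by rw [e.2 x])
  invFun F := ⟨(Equiv.sigmaFiberEquiv g).symm.trans
      ((Equiv.sigmaCongrRight F).trans (Equiv.sigmaFiberEquiv h)), fun x => by
    simp only [Equiv.trans_apply, Equiv.sigmaFiberEquiv, Equiv.sigmaCongrRight,
      Equiv.coe_fn_symm_mk, Equiv.coe_fn_mk]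
    exact (F (g x) ⟨x, rfl⟩).2⟩
  left_inv e := Subtype.ext (Equiv.ext fun x => by
    simp [Equiv.sigmaFiberEquiv, Equiv.sigmaCongrRight, Equiv.subtypeEquiv])
  right_inv F := funext fun d => Equiv.ext fun x => Subtype.ext (by
    obtain ⟨x, rfl⟩ := x
    simp [Equiv.sigmaFiberEquiv, Equiv.sigmaCongrRight, Equiv.subtypeEquiv])

lemma card_compat {β γ δ : Type*} [Fintype β] [Fintype γ] [DecidableEq β] [DecidableEq γ]
    [Fintype δ] [DecidableEq δ] (g : β → δ) (h : γ → δ) (c : δ → ℕ)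
    (hg : ∀ d, Fintype.card {x // g x = d} = c d)
    (hh : ∀ d, Fintype.card {y // h y = d} = c d) :
    Fintype.card {e : β ≃ γ // ∀ x, h (e x) = g x} = ∏ d, (c d).factorial := by
  rw [Fintype.card_congr (fiberEquiv g h), Fintype.card_pi]
  refine Finset.prod_congr rfl fun d _ => ?_
  have : Nonempty ({x // g x = d} ≃ {y // h y = d}) :=
    ⟨Fintype.equivOfCardEq (by rw [hg, hh])⟩
  obtain ⟨e⟩ := this
  rw [Fintype.card_equiv e, hg]




lemma min_prod_aux (p : ℕ) (hp : 0 < p) :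
    ∀ N : ℕ, ∀ a : Fin p → ℕ, (∑ k, (a k) ^ 2) ≤ N →
      ((∑ k, a k) / p + 1).factorial ^ ((∑ k, a k) % p) *
        ((∑ k, a k) / p).factorial ^ (p - (∑ k, a k) % p) ≤ ∏ k, (a k).factorial := by
  intro N
  induction N using Nat.strong_induction_on with
  | _ N ih =>
    intro a hN
    by_cases hex : ∃ k l, a l + 2 ≤ a k
    · obtain ⟨k, l, hkl⟩ := hex
      have hne : l ≠ k := by rintro rfl; omega
      set a' := Function.update (Function.update a k (a k - 1)) l (a l + 1) with ha'
      have hkm : k ∈ (univ : Finset (Fin p)) \ {l} := by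
        simp [Finset.mem_sdiff, hne.symm]
      -- sum decompositions
      have hsum' : ∑ x, a' x = (a l + 1) + ((a k - 1) + ∑ x ∈ ((univ : Finset (Fin p)) \ {l}) \ {k}, a x) := by
        rw [ha', Finset.sum_update_of_mem (Finset.mem_univ l),
          Finset.sum_update_of_mem hkm]
      have hsum : ∑ x, a x = a l + (a k + ∑ x ∈ ((univ : Finset (Fin p)) \ {l}) \ {k}, a x) := by
        conv_lhs => rw [show a = Function.update (Function.update a k (a k)) l (a l) by
          simp [Function.update_eq_self]]
        rw [Function.update_eq_self, Function.update_eq_self] at *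
        rw [← Finset.sum_update_of_mem hkm (f := a) (b := a k),
          Function.update_eq_self,
          ← Finset.sum_update_of_mem (Finset.mem_univ l) (f := a) (b := a l),
          Function.update_eq_self]
      have hsums : ∑ x, a' x = ∑ x, a x := by omega
      -- squares
      have hsq' : ∑ x, (a' x) ^ 2 = (a l + 1) ^ 2 + ((a k - 1) ^ 2 + ∑ x ∈ ((univ : Finset (Fin p)) \ {l}) \ {k}, (a x) ^ 2) := by
        have : (fun x => (a' x) ^ 2) = Function.update (Function.update (fun x => (a x) ^ 2) k ((a k - 1) ^ 2)) l ((a l + 1) ^ 2) := by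
          rw [ha']
          funext x
          by_cases hxl : x = l
          · subst hxl; simp
          · by_cases hxk : x = k
            · subst hxk
              simp [Function.update_of_ne hxl, Function.update_of_ne hne.symm]
            · simp [Function.update_of_ne hxl, Function.update_of_ne hxk]
        rw [show ∑ x, (a' x) ^ 2 = ∑ x, (fun x => (a' x) ^ 2) x from rfl, this,
          Finset.sum_update_of_mem (Finset.mem_univ l), Finset.sum_update_of_mem hkm]
      have hsq : ∑ x, (a x) ^ 2 = a l ^ 2 + (a k ^ 2 + ∑ x ∈ ((univ : Finset (Fin p)) \ {l}) \ {k}, (a x) ^ 2) := by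
        rw [← Finset.sum_update_of_mem hkm (f := fun x => (a x)^2) (b := a k ^ 2),
          Function.update_eq_self,
          ← Finset.sum_update_of_mem (Finset.mem_univ l) (f := fun x => (a x)^2) (b := a l ^ 2),
          Function.update_eq_self]
      have hsqlt : ∑ x, (a' x) ^ 2 < ∑ x, (a x) ^ 2 := by
        rw [hsq', hsq]
        have h1 : (a l + 1) ^ 2 + (a k - 1) ^ 2 < a l ^ 2 + a k ^ 2 := by
          have h2 : a k - 1 + 1 = a k := by omega
          nlinarith [h2, hkl]
        omega
      -- products
      have hprod' : ∏ x, (a' x).factorial = (a l + 1).factorial * ((a k - 1).factorial * ∏ x ∈ ((univ : Finset (Fin p)) \ {l}) \ {k}, (a x).factorial) := by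
        have : (fun x => (a' x).factorial) = Function.update (Function.update (fun x => (a x).factorial) k ((a k - 1).factorial)) l ((a l + 1).factorial) := by
          rw [ha']
          funext x
          by_cases hxl : x = l
          · subst hxl; simp
          · by_cases hxk : x = k
            · subst hxk
              simp [Function.update_of_ne hxl, Function.update_of_ne hne.symm]
            · simp [Function.update_of_ne hxl, Function.update_of_ne hxk]
        rw [show ∏ x, (a' x).factorial = ∏ x, (fun x => (a' x).factorial) x from rfl, this,
          Finset.prod_update_of_mem (Finset.mem_univ l), Finset.prod_update_of_mem hkm]
      have hprod : ∏ x, (a x).factorial = (a l).factorial * ((a k).factorial * ∏ x ∈ ((univ : Finset (Fin p)) \ {l}) \ {k}, (a x).factorial) := by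
        rw [← Finset.prod_update_of_mem hkm (f := fun x => (a x).factorial) (b := (a k).factorial),
          Function.update_eq_self,
          ← Finset.prod_update_of_mem (Finset.mem_univ l) (f := fun x => (a x).factorial) (b := (a l).factorial),
          Function.update_eq_self]
      have hple : ∏ x, (a' x).factorial ≤ ∏ x, (a x).factorial := by
        rw [hprod', hprod]
        set P := ∏ x ∈ ((univ : Finset (Fin p)) \ {l}) \ {k}, (a x).factorial with hP
        have h1 : (a l + 1).factorial = (a l + 1) * (a l).factorial := Nat.factorial_succ _
        have h2 : (a k).factorial = a k * (a k - 1).factorial := by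
          conv_lhs => rw [show a k = (a k - 1) + 1 by omega]
          rw [Nat.factorial_succ, show a k - 1 + 1 = a k by omega]
        rw [h1, h2]
        calc (a l + 1) * (a l).factorial * ((a k - 1).factorial * P)
            = (a l + 1) * ((a l).factorial * ((a k - 1).factorial * P)) := by ring
          _ ≤ a k * ((a l).factorial * ((a k - 1).factorial * P)) :=
              Nat.mul_le_mul_right _ (by omega)
          _ = (a l).factorial * (a k * (a k - 1).factorial * P) := by ring
      have := ih (∑ x, (a' x) ^ 2) (by omega) a' le_rfl
      rw [hsums] at this
      exact this.trans hple
    · -- balanced case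
      push_neg at hex
      have hball : ∀ k l, a k ≤ a l + 1 := fun k l => by have := hex k l; omega
      obtain ⟨k0, _, hk0⟩ := Finset.exists_min_image univ a ⟨⟨0, hp⟩, Finset.mem_univ _⟩
      set c := a k0 with hc
      have hcle : ∀ k, c ≤ a k := fun k => hk0 k (Finset.mem_univ k)
      have hvals : ∀ k, a k = c ∨ a k = c + 1 := fun k => by
        have := hball k k0; have := hcle k; omega
      obtain ⟨ρ, hρ⟩ : ∃ ρ, (univ.filter (fun k => a k = c + 1)).card = ρ := ⟨_, rfl⟩
      have hρle : ρ ≤ p := by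
        rw [← hρ]; exact (Finset.card_filter_le _ _).trans (by simp)
      have hcards : (univ.filter (fun k => ¬ a k = c + 1)).card = p - ρ := by
        have := Finset.card_filter_add_card_filter_not
          (s := (univ : Finset (Fin p))) (p := fun k => a k = c + 1)
        simp only [Finset.card_univ, Fintype.card_fin] at this
        omega
      have hsum : ∑ x, a x = c * p + ρ := by
        rw [← Finset.sum_filter_add_sum_filter_not univ (fun k => a k = c + 1)]
        have e1 : ∑ x ∈ univ.filter (fun k => a k = c + 1), a x = (c + 1) * ρ := by
          rw [Finset.sum_congr rfl (fun x hx => (Finset.mem_filter.mp hx).2),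
            Finset.sum_const, smul_eq_mul, hρ, mul_comm]
        have e2 : ∑ x ∈ univ.filter (fun k => ¬ a k = c + 1), a x = c * (p - ρ) := by
          have hcc : ∀ x ∈ univ.filter (fun k => ¬ a k = c + 1), a x = c := fun x hx => by
            have h := (Finset.mem_filter.mp hx).2
            have := hvals x; omega
          rw [Finset.sum_congr rfl hcc, Finset.sum_const, smul_eq_mul, hcards, mul_comm]
        rw [e1, e2, add_mul, one_mul]
        have h2 : c * (p - ρ) + c * ρ = c * p := by
          rw [← Nat.mul_add, Nat.sub_add_cancel hρle]
        omega
      have hprodeq : ∏ x, (a x).factorial = (c + 1).factorial ^ ρ * c.factorial ^ (p - ρ) := by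
        rw [← Finset.prod_filter_mul_prod_filter_not univ (fun k => a k = c + 1)]
        congr 1
        · rw [Finset.prod_congr rfl (fun x hx => by rw [(Finset.mem_filter.mp hx).2]),
            Finset.prod_const, hρ]
        · have hcc : ∀ x ∈ univ.filter (fun k => ¬ a k = c + 1),
              (a x).factorial = c.factorial := fun x hx => by
            have h := (Finset.mem_filter.mp hx).2
            have h2 := hvals x
            have h3 : a x = c := by omega
            rw [h3]
          rw [Finset.prod_congr rfl hcc, Finset.prod_const, hcards]
      rcases eq_or_lt_of_le hρle with heq | hlt
      · -- all parts equal c + 1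
        have hsum2 : ∑ x, a x = (c + 1) * p := by rw [hsum, heq]; ring
        have hdiv : (∑ x, a x) / p = c + 1 := by rw [hsum2, Nat.mul_div_cancel _ hp]
        have hmod : (∑ x, a x) % p = 0 := by rw [hsum2, Nat.mul_mod_left]
        rw [hdiv, hmod, hprodeq, heq]
        simp
      · have hdiv : (∑ x, a x) / p = c := by
          rw [hsum, mul_comm, Nat.mul_add_div hp, Nat.div_eq_of_lt hlt]
          omega
        have hmod : (∑ x, a x) % p = ρ := by
          rw [hsum, mul_comm, Nat.mul_add_mod, Nat.mod_eq_of_lt hlt]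
        rw [hdiv, hmod, hprodeq]

lemma min_prod {p n : ℕ} (hp : 0 < p) (a : Fin p → ℕ) (hsum : ∑ k, a k = n) :
    (n / p + 1).factorial ^ (n % p) * (n / p).factorial ^ (p - n % p) ≤
      ∏ k, (a k).factorial := by
  subst hsum
  exact min_prod_aux p hp _ a le_rfl




lemma card_filter_interval (n s1 s2 : ℕ) (h : s2 ≤ n) :
    ((univ : Finset (Fin n)).filter fun i => s1 ≤ i.1 ∧ i.1 < s2).card = s2 - s1 := by
  rw [← Nat.card_Ico s1 s2]
  apply Finset.card_bij (fun i _ => i.1)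
  · intro i hi
    simp only [Finset.mem_filter] at hi
    simp [Finset.mem_Ico, hi.2.1, hi.2.2]
  · intro i hi i' hi' hii
    exact Fin.ext hii
  · intro m hm
    simp only [Finset.mem_Ico] at hm
    exact ⟨⟨m, lt_of_lt_of_le hm.2 h⟩, by simp [hm.1, hm.2], rfl⟩

variable {p n : ℕ} {a : Fin p → ℕ}

/-- the block function on `Fin n`. -/
def hfun (p : ℕ) (a : Fin p → ℕ) (n : ℕ) (hp : 0 < p) : Fin n → Fin p :=
  fun i => ⟨blk p a i.1, blk_lt hp i.1⟩

lemma hfun_eq_iff (hp : 0 < p) (hn : psum p a p = n) (i : Fin n) (d : Fin p) :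
    hfun p a n hp i = d ↔ psum p a d.1 ≤ i.1 ∧ i.1 < psum p a (d.1 + 1) := by
  rw [hfun, Fin.ext_iff]
  exact blk_eq_iff hp (by rw [hn]; exact i.2) d.2

lemma card_hfun_fiber (hp : 0 < p) (hn : psum p a p = n) (d : Fin p) :
    Fintype.card {i : Fin n // hfun p a n hp i = d} = a d := by
  classical
  rw [Fintype.card_subtype]
  have he : (univ : Finset (Fin n)).filter (fun i => hfun p a n hp i = d) =
      univ.filter (fun i => psum p a d.1 ≤ i.1 ∧ i.1 < psum p a (d.1 + 1)) := by
    ext i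
    simp [hfun_eq_iff hp hn i d]
  rw [he, card_filter_interval n _ _ (by rw [← hn]; exact psum_mono d.2)]
  rw [psum_succ]
  have : pad p a d.1 = a d := pad_coe d
  omega

lemma card_compat_set {α : Type*} [Fintype α] [DecidableEq α]
    (hp : 0 < p) (hn : psum p a p = n) (g : α → Fin p)
    (hg : ∀ d, ((univ : Finset α).filter fun x => g x = d).card = a d) :
    ((univ : Finset (α ≃ Fin n)).filter fun e => ∀ x, hfun p a n hp (e x) = g x).card =
      ∏ d, (a d).factorial := by
  classical
  rw [← Fintype.card_subtype]
  exact card_compat g (hfun p a n hp) a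
    (fun d => by rw [Fintype.card_subtype]; exact hg d)
    (fun d => card_hfun_fiber hp hn d)



lemma upper {α : Type*} [Fintype α] [DecidableEq α] (n p m : ℕ)
    (hcard : Fintype.card α = n) (hp : 2 ≤ p) (A : Fin m → Fin p → Finset α)
    (hinj : Function.Injective A)
    (hdisj : ∀ j, ∀ k l : Fin p, k ≠ l → Disjoint (A j k) (A j l))
    (hcover : ∀ j, Finset.univ.biUnion (A j) = (Finset.univ : Finset α))
    (hanti : ∀ k : Fin p, IsAntichain (· ⊆ ·) (Set.range fun j => A j k)) :
    m ≤ n.factorial /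
      ((n / p + 1).factorial ^ (n % p) * (n / p).factorial ^ (p - n % p)) := by
  classical
  have hp0 : 0 < p := by omega
  have hsum : ∀ j, ∑ k, (A j k).card = n := fun j => by
    rw [← Finset.card_biUnion (fun k _ l _ hkl => hdisj j k l hkl), hcover j,
      Finset.card_univ, hcard]
  have hn : ∀ j, psum p (fun k => (A j k).card) p = n := fun j =>
    (psum_top).trans (hsum j)
  have hgex : ∀ j x, ∃ k, x ∈ A j k := fun j x => by
    have : x ∈ Finset.univ.biUnion (A j) := by rw [hcover j]; exact Finset.mem_univ x
    simpa using this
  choose g hg using hgex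
  have hgiff : ∀ j x k, g j x = k ↔ x ∈ A j k := fun j x k => by
    constructor
    · rintro rfl; exact hg j x
    · intro hx
      by_contra hne
      exact (Finset.disjoint_left.mp (hdisj j (g j x) k hne)) (hg j x) hx
  have hgcard : ∀ j d, ((univ : Finset α).filter fun x => g j x = d).card = (A j d).card := by
    intro j d
    congr 1
    ext x
    simp [hgiff j x d]
  set S : Fin m → Finset (α ≃ Fin n) := fun j =>
    univ.filter fun e => ∀ x, hfun p (fun k => (A j k).card) n hp0 (e x) = g j x with hS
  have hScard : ∀ j, (S j).card = ∏ k, ((A j k).card).factorial := fun j =>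
    card_compat_set hp0 (hn j) (g j) (hgcard j)
  have hmem : ∀ j e, e ∈ S j → ∀ k : Fin p, A j k =
      univ.filter (fun x => psum p (fun k => (A j k).card) k.1 ≤ (e x).1 ∧
        (e x).1 < psum p (fun k => (A j k).card) (k.1 + 1)) := by
    intro j e he k
    rw [hS] at he
    simp only [Finset.mem_filter, Finset.mem_univ, true_and] at he
    ext x
    simp only [Finset.mem_filter, Finset.mem_univ, true_and]
    rw [← hgiff j x k, ← he x, hfun_eq_iff hp0 (hn j)]
  have hSdisj : ∀ j j', j ≠ j' → Disjoint (S j) (S j') := by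
    intro j j' hjj
    rw [Finset.disjoint_left]
    intro e hej hej'
    have key : ∀ k : ℕ, k ≤ p →
        psum p (fun l => (A j l).card) k = psum p (fun l => (A j' l).card) k ∧
        ∀ l : Fin p, l.1 < k → A j l = A j' l := by
      intro k
      induction k with
      | zero => intro _; exact ⟨by rw [psum_zero, psum_zero], fun l hl => absurd hl (by omega)⟩
      | succ k ihk =>
        intro hk
        obtain ⟨hps, hAs⟩ := ihk (by omega)
        have hkp : k < p := hk
        set K : Fin p := ⟨k, hkp⟩ with hK
        have hAj := hmem j e hej K
        have hAj' := hmem j' e hej' K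
        have hsub : A j K ⊆ A j' K ∨ A j' K ⊆ A j K := by
          rcases le_total (psum p (fun l => (A j l).card) (k + 1))
              (psum p (fun l => (A j' l).card) (k + 1)) with h | h
          · left
            rw [hAj, hAj']
            intro x hx
            simp only [Finset.mem_filter, Finset.mem_univ, true_and, hK, Fin.val_mk] at hx ⊢
            omega
          · right
            rw [hAj, hAj']
            intro x hx
            simp only [Finset.mem_filter, Finset.mem_univ, true_and, hK, Fin.val_mk] at hx ⊢
            omega
        have hAeqK : A j K = A j' K := by
          rcases hsub with h | h
          · by_contra hne
            exact hanti K ⟨j, rfl⟩ ⟨j', rfl⟩ hne h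
          · by_contra hne
            exact hanti K ⟨j', rfl⟩ ⟨j, rfl⟩ (fun hh => hne hh.symm) h
        refine ⟨?_, ?_⟩
        · rw [psum_succ, psum_succ, hps]
          have h1 : pad p (fun l => (A j l).card) k = (A j K).card := pad_coe K
          have h2 : pad p (fun l => (A j' l).card) k = (A j' K).card := pad_coe K
          rw [h1, h2, hAeqK]
        · intro l hl
          rcases Nat.lt_or_ge l.1 k with h | h
          · exact hAs l h
          · have : l = K := Fin.ext (by simp [hK]; omega)
            rw [this]
            exact hAeqK
    have hAeq : A j = A j' := funext fun l => (key p le_rfl).2 l l.2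
    exact hjj (hinj hAeq)
  have hB : 0 < (n / p + 1).factorial ^ (n % p) * (n / p).factorial ^ (p - n % p) :=
    Nat.mul_pos (Nat.pow_pos (Nat.factorial_pos _))
      (Nat.pow_pos (Nat.factorial_pos _))
  rw [Nat.le_div_iff_mul_le hB]
  calc m * ((n / p + 1).factorial ^ (n % p) * (n / p).factorial ^ (p - n % p))
      = ∑ _j : Fin m, ((n / p + 1).factorial ^ (n % p) * (n / p).factorial ^ (p - n % p)) := by
        simp [Finset.sum_const, mul_comm]
    _ ≤ ∑ j : Fin m, (S j).card := by
        apply Finset.sum_le_sum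
        intro j _
        rw [hScard j]
        exact min_prod hp0 _ (hsum j)
    _ = (Finset.univ.biUnion S).card :=
        (Finset.card_biUnion (fun j _ j' _ h => hSdisj j j' h)).symm
    _ ≤ Fintype.card (α ≃ Fin n) := Finset.card_le_univ _
    _ = n.factorial := by
        rw [Fintype.card_equiv (Fintype.equivFinOfCardEq hcard), hcard]



lemma lower {α : Type*} [Fintype α] [DecidableEq α] (n p : ℕ)
    (hcard : Fintype.card α = n) (hp : 2 ≤ p) :
    ∃ (m : ℕ) (A : Fin m → Fin p → Finset α), Function.Injective A ∧
      (∀ j, ∀ k l : Fin p, k ≠ l → Disjoint (A j k) (A j l)) ∧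
      (∀ j, Finset.univ.biUnion (A j) = (Finset.univ : Finset α)) ∧
      (∀ k : Fin p, IsAntichain (· ⊆ ·) (Set.range fun j => A j k)) ∧
      m = n.factorial /
        ((n / p + 1).factorial ^ (n % p) * (n / p).factorial ^ (p - n % p)) := by
  classical
  have hp0 : 0 < p := by omega
  have hρ : n % p < p := Nat.mod_lt n hp0
  set bal : Fin p → ℕ := fun k => if k.1 < n % p then n / p + 1 else n / p with hbal
  have hbalsum : ∑ k, bal k = n := by
    rw [hbal, ← Finset.sum_filter_add_sum_filter_not univ (fun k : Fin p => k.1 < n % p)]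
    have e1 : ∑ k ∈ univ.filter (fun k : Fin p => k.1 < n % p),
        (if k.1 < n % p then n / p + 1 else n / p) = (n % p) * (n / p + 1) := by
      rw [Finset.sum_congr rfl (fun k hk => if_pos (Finset.mem_filter.mp hk).2),
        Finset.sum_const, smul_eq_mul]
      congr 1
      have he : (univ.filter fun k : Fin p => k.1 < n % p) =
          (univ.filter fun k : Fin p => 0 ≤ k.1 ∧ k.1 < n % p) := by ext k; simp
      rw [he, card_filter_interval p 0 (n % p) (le_of_lt hρ)]
      omega
    have e2 : ∑ k ∈ univ.filter (fun k : Fin p => ¬ k.1 < n % p),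
        (if k.1 < n % p then n / p + 1 else n / p) = (p - n % p) * (n / p) := by
      rw [Finset.sum_congr rfl (fun k hk => if_neg (Finset.mem_filter.mp hk).2),
        Finset.sum_const, smul_eq_mul]
      congr 1
      have := Finset.card_filter_add_card_filter_not
        (s := (univ : Finset (Fin p))) (p := fun k : Fin p => k.1 < n % p)
      simp only [Finset.card_univ, Fintype.card_fin] at this
      have he : (univ.filter fun k : Fin p => k.1 < n % p) =
          (univ.filter fun k : Fin p => 0 ≤ k.1 ∧ k.1 < n % p) := by ext k; simp
      rw [he, card_filter_interval p 0 (n % p) (le_of_lt hρ)] at this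
      omega
    rw [e1, e2]
    obtain ⟨d, hd⟩ : ∃ d, p = n % p + d := ⟨p - n % p, by omega⟩
    have hd2 : p - n % p = d := by omega
    have hdm := Nat.div_add_mod n p
    rw [hd2]
    calc (n % p) * (n / p + 1) + d * (n / p) = (n % p + d) * (n / p) + n % p := by ring
      _ = p * (n / p) + n % p := by rw [← hd]
      _ = n := hdm
  have hn : psum p bal p = n := psum_top.trans hbalsum
  set Ψ : (α ≃ Fin n) → (Fin p → Finset α) := fun e k =>
    univ.filter fun x => psum p bal k.1 ≤ (e x).1 ∧ (e x).1 < psum p bal (k.1 + 1) with hΨ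
  -- part sizes
  have hfiltercard : ∀ (e : α ≃ Fin n) (P : Fin n → Prop) [DecidablePred P],
      (univ.filter fun x => P (e x)).card = (univ.filter P).card := by
    intro e P _
    apply Finset.card_bij (fun x _ => e x)
    · intro x hx
      simp only [Finset.mem_filter, Finset.mem_univ, true_and] at hx ⊢
      exact hx
    · intro x _ x' _ h
      exact e.injective h
    · intro i hi
      simp only [Finset.mem_filter, Finset.mem_univ, true_and] at hi
      exact ⟨e.symm i, by simp [hi], by simp⟩
  have hpartcard : ∀ (e : α ≃ Fin n) (k : Fin p), (Ψ e k).card = bal k := by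
    intro e k
    rw [hΨ]
    simp only
    rw [hfiltercard e (fun i => psum p bal k.1 ≤ i.1 ∧ i.1 < psum p bal (k.1 + 1)),
      card_filter_interval n _ _ (by rw [← hn]; exact psum_mono k.2), psum_succ]
    have := pad_coe (a := bal) k
    omega
  -- interval membership iff hfun
  have hmemiff : ∀ (e : α ≃ Fin n) (k : Fin p) (x : α),
      x ∈ Ψ e k ↔ hfun p bal n hp0 (e x) = k := by
    intro e k x
    rw [hΨ, hfun_eq_iff hp0 hn]
    simp
  -- disjointness of parts
  have hdisj : ∀ (e : α ≃ Fin n) (k l : Fin p), k ≠ l → Disjoint (Ψ e k) (Ψ e l) := by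
    intro e k l hkl
    rw [Finset.disjoint_left]
    intro x hx hx'
    rw [hmemiff] at hx hx'
    exact hkl (hx ▸ hx')
  -- cover
  have hcover : ∀ e : α ≃ Fin n, Finset.univ.biUnion (Ψ e) = (Finset.univ : Finset α) := by
    intro e
    apply Finset.eq_univ_of_forall
    intro x
    rw [Finset.mem_biUnion]
    exact ⟨hfun p bal n hp0 (e x), Finset.mem_univ _, (hmemiff e _ x).mpr rfl⟩
  set F := (univ : Finset (α ≃ Fin n)).image Ψ with hF
  -- fiber counting
  have hfiber : ∀ A ∈ F, ((univ : Finset (α ≃ Fin n)).filter fun e => Ψ e = A).card =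
      ∏ k, (bal k).factorial := by
    intro A hA
    rw [hF, Finset.mem_image] at hA
    obtain ⟨e0, _, he0⟩ := hA
    have hiff : ∀ e : α ≃ Fin n,
        Ψ e = A ↔ ∀ x, hfun p bal n hp0 (e x) = hfun p bal n hp0 (e0 x) := by
      intro e
      constructor
      · intro hEq x
        have h1 : x ∈ Ψ e (hfun p bal n hp0 (e x)) := (hmemiff e _ x).mpr rfl
        rw [hEq, ← he0, hmemiff e0] at h1
        exact h1.symm
      · intro hc
        simp only [← he0]
        funext k
        ext x
        rw [hmemiff, hmemiff, hc x]
    have he : ((univ : Finset (α ≃ Fin n)).filter fun e => Ψ e = A) =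
        (univ.filter fun e => ∀ x, hfun p bal n hp0 (e x) = hfun p bal n hp0 (e0 x)) := by
      ext e
      simp [hiff e]
    rw [he]
    apply card_compat_set hp0 hn
    intro d
    have : ((univ : Finset α).filter fun x => hfun p bal n hp0 (e0 x) = d) = Ψ e0 d := by
      ext x
      rw [hmemiff]
      simp
    rw [this, hpartcard]
  -- total count
  have hB : 0 < ∏ k, (bal k).factorial :=
    Finset.prod_pos fun k _ => Nat.factorial_pos _
  have hcount : n.factorial = F.card * ∏ k, (bal k).factorial := by
    have h1 : (univ : Finset (α ≃ Fin n)).card =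
        ∑ A ∈ F, ((univ : Finset (α ≃ Fin n)).filter fun e => Ψ e = A).card :=
      Finset.card_eq_sum_card_image Ψ univ
    rw [Finset.sum_congr rfl hfiber, Finset.sum_const, smul_eq_mul] at h1
    rw [← h1, Finset.card_univ, Fintype.card_equiv (Fintype.equivFinOfCardEq hcard), hcard]
  have hprodB : ∏ k, (bal k).factorial =
      (n / p + 1).factorial ^ (n % p) * (n / p).factorial ^ (p - n % p) := by
    rw [← Finset.prod_filter_mul_prod_filter_not univ (fun k : Fin p => k.1 < n % p)]
    have he : (univ.filter fun k : Fin p => k.1 < n % p) =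
        (univ.filter fun k : Fin p => 0 ≤ k.1 ∧ k.1 < n % p) := by ext k; simp
    have hc1 : (univ.filter fun k : Fin p => k.1 < n % p).card = n % p := by
      rw [he, card_filter_interval p 0 (n % p) (le_of_lt hρ)]
      omega
    have hc2 : (univ.filter fun k : Fin p => ¬ k.1 < n % p).card = p - n % p := by
      have := Finset.card_filter_add_card_filter_not
        (s := (univ : Finset (Fin p))) (p := fun k : Fin p => k.1 < n % p)
      simp only [Finset.card_univ, Fintype.card_fin] at this
      omega
    have f1 : ∀ k ∈ univ.filter (fun k : Fin p => k.1 < n % p),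
        (bal k).factorial = (n / p + 1).factorial := fun k hk => by
      have := (Finset.mem_filter.mp hk).2
      rw [hbal]; simp [this]
    have f2 : ∀ k ∈ univ.filter (fun k : Fin p => ¬ k.1 < n % p),
        (bal k).factorial = (n / p).factorial := fun k hk => by
      have := (Finset.mem_filter.mp hk).2
      rw [hbal]; simp [this]
    rw [Finset.prod_congr rfl f1, Finset.prod_congr rfl f2, Finset.prod_const,
      Finset.prod_const, hc1, hc2]
  refine ⟨F.card, fun i => (F.equivFin.symm i : F).1, ?_, ?_, ?_, ?_, ?_⟩
  · intro i i' h
    exact F.equivFin.symm.injective (Subtype.ext h)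
  · intro j k l hkl
    obtain ⟨e0, _, he0⟩ := Finset.mem_image.mp (show _ ∈ Finset.image Ψ univ from (F.equivFin.symm j).2)
    simp only [← he0]
    exact hdisj e0 k l hkl
  · intro j
    obtain ⟨e0, _, he0⟩ := Finset.mem_image.mp (show _ ∈ Finset.image Ψ univ from (F.equivFin.symm j).2)
    simp only [← he0]
    exact hcover e0
  · intro k X hX Y hY hne hsub
    obtain ⟨i, hi⟩ := hX
    obtain ⟨i', hi'⟩ := hY
    apply hne
    obtain ⟨e0, _, he0⟩ := Finset.mem_image.mp (show _ ∈ Finset.image Ψ univ from (F.equivFin.symm i).2)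
    obtain ⟨e1, _, he1⟩ := Finset.mem_image.mp (show _ ∈ Finset.image Ψ univ from (F.equivFin.symm i').2)
    have hXc : X.card = bal k := by simp only [← hi, ← he0]; exact hpartcard e0 k
    have hYc : Y.card = bal k := by simp only [← hi', ← he1]; exact hpartcard e1 k
    exact Finset.eq_of_subset_of_card_le hsub (by omega)
  · exact (Nat.div_eq_of_eq_mul_left (hprodB ▸ hB) (by rw [← hprodB, hcount])).symm


end Meshalkin

/-- **Meshalkin's theorem.** If `(A_{j1}, …, A_{jp})`, `j = 1, …, m`, are distinct weak
compositions of an `n`-element set `S` into `p ≥ 2` parts such that for each coordinate `k`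
the set of distinct values `{A_{jk}}` is an antichain, then `m` is at most the largest
`p`-multinomial coefficient for `n`, namely `n!/((⌊n/p⌋+1)!)^ρ(⌊n/p⌋!)^{p-ρ}` where
`ρ = n - p⌊n/p⌋`; moreover this bound is attained for every `n` and `p`. -/
theorem meshalkin {α : Type*} [Fintype α] [DecidableEq α] (n p : ℕ)
    (hcard : Fintype.card α = n) (hp : 2 ≤ p) :
    (∀ (m : ℕ) (A : Fin m → Fin p → Finset α), Function.Injective A →
      (∀ j, ∀ k l : Fin p, k ≠ l → Disjoint (A j k) (A j l)) →
      (∀ j, Finset.univ.biUnion (A j) = (Finset.univ : Finset α)) →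
      (∀ k : Fin p, IsAntichain (· ⊆ ·) (Set.range fun j => A j k)) →
      m ≤ n.factorial /
        ((n / p + 1).factorial ^ (n - p * (n / p)) *
          (n / p).factorial ^ (p - (n - p * (n / p))))) ∧
    (∃ (m : ℕ) (A : Fin m → Fin p → Finset α), Function.Injective A ∧
      (∀ j, ∀ k l : Fin p, k ≠ l → Disjoint (A j k) (A j l)) ∧
      (∀ j, Finset.univ.biUnion (A j) = (Finset.univ : Finset α)) ∧
      (∀ k : Fin p, IsAntichain (· ⊆ ·) (Set.range fun j => A j k)) ∧
      m = n.factorial /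
        ((n / p + 1).factorial ^ (n - p * (n / p)) *
          (n / p).factorial ^ (p - (n - p * (n / p))))) := by
  have hm : n - p * (n / p) = n % p := by
    have := Nat.mod_add_div n p
    omega
  rw [hm]
  exact ⟨fun m A h1 h2 h3 h4 => Meshalkin.upper n p m hcard hp A h1 h2 h3 h4,
    Meshalkin.lower n p hcard hp⟩
end

section
/- Let S be a finite set with n elements and let {A_{j0}, A_{j1}, ..., A_{jq}} for j = 1, ..., m be m distinct chains in the power set of S, each with q+1 elements, such that A_{ji} is not a subset of A_{kl} for all i, l whenever j ≠ k. Then m ≤ C(n−q, ⌊(n−q)/2⌋). Moreover, for all n and q this bound is attained. -/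
open Finset

/-- A strictly increasing chain of `q+1` finsets gains at least `q` in cardinality. -/
lemma gst_chain_card {α : Type*} {q : ℕ} (f : Fin (q + 1) → Finset α)
    (hf : StrictMono f) : (f 0).card + q ≤ (f (Fin.last q)).card := by
  have key : ∀ i : ℕ, ∀ h : i < q + 1, (f 0).card + i ≤ (f ⟨i, h⟩).card := by
    intro i
    induction i with
    | zero => intro h; simp [show (⟨0, h⟩ : Fin (q+1)) = 0 from rfl]
    | succ i ih =>
      intro h
      have h' : i < q + 1 := Nat.lt_of_succ_lt h
      have h1 := ih h'
      have h2 : f ⟨i, h'⟩ ⊂ f ⟨i + 1, h⟩ := hf (by simp [Fin.lt_def])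
      have h3 := Finset.card_lt_card h2
      omega
  have := key q q.lt_succ_self
  simpa [Fin.last] using this

lemma gst_choose_id (p qq : ℕ) (h : 1 ≤ qq) :
    (p + qq) * ((p + (qq - 1)).choose p) = qq * ((p + qq).choose p) := by
  obtain ⟨q', rfl⟩ : ∃ q', qq = q' + 1 := ⟨qq - 1, by omega⟩
  simp only [Nat.add_sub_cancel]
  have h1 : (p + q').choose p = (p + q').choose q' := Nat.choose_symm_add
  have h2 : (p + (q' + 1)).choose p = (p + (q' + 1)).choose (q' + 1) := Nat.choose_symm_add
  have h3 := Nat.add_one_mul_choose_eq (p + q') q'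
  have e2 : p + q' + 1 = p + (q' + 1) := by omega
  rw [e2] at h3
  rw [h1, h2, h3]
  exact Nat.mul_comm _ _

/-- The inner sum computation for the Bollobás inequality. -/
lemma gst_inner {α : Type*} [DecidableEq α] (S Pj Qj : Finset α)
    (hP : Pj ⊆ S) (hQ : Qj ⊆ S) (hd : Disjoint Pj Qj) (hq1 : 1 ≤ Qj.card) :
    (∑ x ∈ S, if x ∉ Pj then
        (1 : ℚ) / ((Pj.card + (Qj.erase x).card).choose Pj.card) else 0)
      = S.card * ((1 : ℚ) / ((Pj.card + Qj.card).choose Pj.card)) := by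
  classical
  have hPQS : Pj ∪ Qj ⊆ S := Finset.union_subset hP hQ
  have hcardPQ : (Pj ∪ Qj).card = Pj.card + Qj.card := Finset.card_union_of_disjoint hd
  have hple : Pj.card + Qj.card ≤ S.card := by
    rw [← hcardPQ]; exact Finset.card_le_card hPQS
  set c1 : ℚ := (1 : ℚ) / ((Pj.card + (Qj.card - 1)).choose Pj.card) with hc1
  set c2 : ℚ := (1 : ℚ) / ((Pj.card + Qj.card).choose Pj.card) with hc2
  set F : α → ℚ := fun x => if x ∉ Pj then (if x ∈ Qj then c1 else c2) else 0 with hF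
  have hstep1 : (∑ x ∈ S, if x ∉ Pj then
      (1 : ℚ) / ((Pj.card + (Qj.erase x).card).choose Pj.card) else 0) = ∑ x ∈ S, F x := by
    refine Finset.sum_congr rfl fun x _ => ?_
    by_cases hxP : x ∈ Pj
    · simp [hF, hxP]
    · by_cases hxQ : x ∈ Qj
      · simp [hF, hxP, hxQ, Finset.card_erase_of_mem hxQ, hc1]
      · simp [hF, hxP, hxQ, Finset.erase_eq_of_notMem hxQ, hc2]
  have hPpart : (∑ x ∈ Pj, F x) = 0 := Finset.sum_eq_zero fun x hx => by simp [hF, hx]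
  have hQpart : (∑ x ∈ Qj, F x) = Qj.card * c1 := by
    have h : ∀ x ∈ Qj, F x = c1 := fun x hx => by
      simp [hF, Finset.disjoint_right.mp hd hx, hx]
    rw [Finset.sum_congr rfl h, Finset.sum_const, nsmul_eq_mul]
  have hRpart : (∑ x ∈ S \ (Pj ∪ Qj), F x)
      = ((S.card : ℚ) - (Pj.card + Qj.card)) * c2 := by
    have h : ∀ x ∈ S \ (Pj ∪ Qj), F x = c2 := by
      intro x hx
      rw [Finset.mem_sdiff, Finset.mem_union] at hx
      have h1 : x ∉ Pj := fun h' => hx.2 (Or.inl h')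
      have h2 : x ∉ Qj := fun h' => hx.2 (Or.inr h')
      simp [hF, h1, h2]
    rw [Finset.sum_congr rfl h, Finset.sum_const, nsmul_eq_mul,
      Finset.card_sdiff_of_subset hPQS, hcardPQ, Nat.cast_sub hple]
    push_cast
    ring
  have hsplit : (∑ x ∈ S, F x)
      = ((∑ x ∈ Pj, F x) + (∑ x ∈ Qj, F x)) + (∑ x ∈ S \ (Pj ∪ Qj), F x) := by
    rw [← Finset.sum_union hd, ← Finset.sum_union Finset.disjoint_sdiff,
      Finset.union_sdiff_of_subset hPQS]
  have hA : (0:ℚ) < (((Pj.card + (Qj.card - 1)).choose Pj.card : ℕ) : ℚ) := by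
    exact_mod_cast Nat.choose_pos (Nat.le_add_right _ _)
  have hB : (0:ℚ) < (((Pj.card + Qj.card).choose Pj.card : ℕ) : ℚ) := by
    exact_mod_cast Nat.choose_pos (Nat.le_add_right _ _)
  have hid := gst_choose_id Pj.card Qj.card hq1
  have step3 : (Qj.card : ℚ) * c1 = ((Pj.card : ℚ) + Qj.card) * c2 := by
    rw [hc1, hc2, mul_one_div, mul_one_div,
      div_eq_div_iff (ne_of_gt hA) (ne_of_gt hB)]
    exact_mod_cast hid.symm
  rw [hstep1, hsplit, hPpart, hQpart, hRpart]
  linear_combination step3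

/-- Symmetric Bollobás set-pair inequality, LYM form. -/
lemma bollobas_sum : ∀ (N : ℕ) {α ι : Type*} [DecidableEq α] [Fintype ι]
    (S : Finset α) (P Q : ι → Finset α), S.card ≤ N →
    (∀ j, P j ⊆ S) → (∀ j, Q j ⊆ S) → (∀ j, Disjoint (P j) (Q j)) →
    (∀ j k, j ≠ k → ((P j) ∩ (Q k)).Nonempty) →
    ∑ j, ((1 : ℚ) / (((P j).card + (Q j).card).choose (P j).card)) ≤ 1 := by
  intro N
  induction N with
  | zero =>
    intro α ι _ _ S P Q hS hP hQ hd hne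
    have hcard1 : Fintype.card ι ≤ 1 := by
      by_contra hc
      push_neg at hc
      obtain ⟨j, k, hjk⟩ := Fintype.exists_pair_of_one_lt_card hc
      obtain ⟨x, hx⟩ := hne j k hjk
      have := hQ k (Finset.mem_inter.mp hx).2
      have hS0 : S = ∅ := Finset.card_eq_zero.mp (Nat.le_zero.mp hS)
      simp [hS0] at this
    calc ∑ j, ((1 : ℚ) / (((P j).card + (Q j).card).choose (P j).card))
        ≤ ∑ _j : ι, (1 : ℚ) := by
          refine Finset.sum_le_sum fun j _ => ?_
          have hpos : 0 < (((P j).card + (Q j).card).choose (P j).card) :=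
            Nat.choose_pos (Nat.le_add_right _ _)
          rw [div_le_one (by exact_mod_cast hpos)]
          exact_mod_cast hpos
      _ = (Fintype.card ι : ℚ) := by simp
      _ ≤ 1 := by exact_mod_cast hcard1
  | succ N ih =>
    intro α ι _ _ S P Q hS hP hQ hd hne
    by_cases hι : ∀ j k : ι, j = k
    · have hcard1 : Fintype.card ι ≤ 1 := Fintype.card_le_one_iff.mpr hι
      calc ∑ j, ((1 : ℚ) / (((P j).card + (Q j).card).choose (P j).card))
          ≤ ∑ _j : ι, (1 : ℚ) := by
            refine Finset.sum_le_sum fun j _ => ?_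
            have hpos : 0 < (((P j).card + (Q j).card).choose (P j).card) :=
              Nat.choose_pos (Nat.le_add_right _ _)
            rw [div_le_one (by exact_mod_cast hpos)]
            exact_mod_cast hpos
        _ = (Fintype.card ι : ℚ) := by simp
        _ ≤ 1 := by exact_mod_cast hcard1
    · push_neg at hι
      obtain ⟨j0, k0, hj0k0⟩ := hι
      have hQne : ∀ j, (Q j).Nonempty := by
        intro j
        rcases eq_or_ne j0 j with rfl | h
        · exact ((hne k0 j0 (Ne.symm hj0k0)).mono Finset.inter_subset_right)
        · exact ((hne j0 j h).mono Finset.inter_subset_right)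
      have hQ1 : ∀ j, 1 ≤ (Q j).card := fun j => Finset.card_pos.mpr (hQne j)
      have hSne : S.Nonempty := (hQne j0).mono (hQ j0)
      have hSpos : 0 < S.card := Finset.card_pos.mpr hSne
      have key : ∀ x ∈ S,
          (∑ j : ι, (if x ∉ P j then
            (1 : ℚ) / (((P j).card + ((Q j).erase x).card).choose (P j).card) else 0)) ≤ 1 := by
        intro x hx
        have hsub := ih (S.erase x) (fun j : {j : ι // x ∉ P j} => P j.1)
          (fun j : {j : ι // x ∉ P j} => (Q j.1).erase x)
          (by
            have := Finset.card_erase_of_mem hx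
            omega)
          (fun j => Finset.subset_erase.mpr ⟨hP j.1, j.2⟩)
          (fun j => Finset.erase_subset_erase x (hQ j.1))
          (fun j => (hd j.1).mono_right (Finset.erase_subset _ _))
          (by
            intro j k hjk
            obtain ⟨y, hy⟩ := hne j.1 k.1 (fun h => hjk (Subtype.ext h))
            rw [Finset.mem_inter] at hy
            refine ⟨y, Finset.mem_inter.mpr ⟨hy.1, Finset.mem_erase.mpr ⟨?_, hy.2⟩⟩⟩
            rintro rfl
            exact j.2 hy.1)
        calc (∑ j : ι, (if x ∉ P j then
                (1 : ℚ) / (((P j).card + ((Q j).erase x).card).choose (P j).card) else 0))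
            = ∑ j ∈ Finset.univ.filter (fun j => x ∉ P j),
                (1 : ℚ) / (((P j).card + ((Q j).erase x).card).choose (P j).card) := by
              rw [Finset.sum_filter]
          _ = ∑ j : {j : ι // x ∉ P j},
                (1 : ℚ) / (((P j.1).card + ((Q j.1).erase x).card).choose (P j.1).card) := by
              rw [Finset.sum_subtype]
              intro j; simp
          _ ≤ 1 := hsub
      have total : (∑ x ∈ S, ∑ j : ι, (if x ∉ P j then
            (1 : ℚ) / (((P j).card + ((Q j).erase x).card).choose (P j).card) else 0))
          ≤ S.card := by
        calc (∑ x ∈ S, ∑ j : ι, (if x ∉ P j then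
                (1 : ℚ) / (((P j).card + ((Q j).erase x).card).choose (P j).card) else 0))
            ≤ ∑ _x ∈ S, (1 : ℚ) := Finset.sum_le_sum key
          _ = S.card := by simp
      rw [Finset.sum_comm] at total
      have inner : ∀ j : ι, (∑ x ∈ S, (if x ∉ P j then
            (1 : ℚ) / (((P j).card + ((Q j).erase x).card).choose (P j).card) else 0))
          = S.card * ((1 : ℚ) / (((P j).card + (Q j).card).choose (P j).card)) :=
        fun j => gst_inner S (P j) (Q j) (hP j) (hQ j) (hd j) (hQ1 j)
      rw [Finset.sum_congr rfl (fun j _ => inner j), ← Finset.mul_sum] at total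
      have hpos : (0:ℚ) < (S.card : ℚ) := by exact_mod_cast hSpos
      have h2 : (S.card : ℚ) *
          (∑ j : ι, (1 : ℚ) / (((P j).card + (Q j).card).choose (P j).card))
          ≤ (S.card : ℚ) * 1 := by
        rw [mul_one]; exact total
      exact le_of_mul_le_mul_left h2 hpos

/-- **Griggs–Stahl–Trotter theorem.** Suppose `{A_{j0}, …, A_{jq}}`, `j = 1, …, m`, are `m`
distinct chains of `q+1` subsets of an `n`-element set (encoded as strictly increasing
`(q+1)`-tuples), such that `A_{ji} ⊄ A_{kl}` for all `i, l` whenever `j ≠ k`.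
Then `m ≤ C(n-q, ⌊(n-q)/2⌋)`; moreover for all `n` and `q` (with `q ≤ n`, so that such
chains exist) the bound is attained. -/
theorem griggs_stahl_trotter {α : Type*} [Fintype α] [DecidableEq α] (n q : ℕ)
    (hcard : Fintype.card α = n) :
    (∀ (m : ℕ) (A : Fin m → Fin (q + 1) → Finset α),
      (∀ j, StrictMono (A j)) →
      Function.Injective A →
      (∀ j k : Fin m, j ≠ k → ∀ i l : Fin (q + 1), ¬ A j i ⊆ A k l) →
      m ≤ (n - q).choose ((n - q) / 2)) ∧
    (q ≤ n → ∃ (m : ℕ) (A : Fin m → Fin (q + 1) → Finset α),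
      (∀ j, StrictMono (A j)) ∧
      Function.Injective A ∧
      (∀ j k : Fin m, j ≠ k → ∀ i l : Fin (q + 1), ¬ A j i ⊆ A k l) ∧
      m = (n - q).choose ((n - q) / 2)) := by
  constructor
  · -- upper bound
    intro m A hmono hinj hcross
    classical
    have hCpos : 0 < (n - q).choose ((n - q) / 2) := Nat.choose_pos (Nat.div_le_self _ _)
    set P : Fin m → Finset α := fun j => A j 0 with hPdef
    set Q : Fin m → Finset α := fun j => (A j (Fin.last q))ᶜ with hQdef
    have hsub : ∀ j, A j 0 ⊆ A j (Fin.last q) := fun j =>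
      (hmono j).monotone (Fin.zero_le _)
    have hd : ∀ j, Disjoint (P j) (Q j) := by
      intro j
      rw [Finset.disjoint_right]
      intro a ha hap
      rw [hQdef] at ha
      exact (Finset.mem_compl.mp ha) (hsub j hap)
    have hne : ∀ j k, j ≠ k → (P j ∩ Q k).Nonempty := by
      intro j k hjk
      obtain ⟨x, hx1, hx2⟩ := Finset.not_subset.mp (hcross j k hjk 0 (Fin.last q))
      exact ⟨x, Finset.mem_inter.mpr ⟨hx1, Finset.mem_compl.mpr hx2⟩⟩
    have hsum := bollobas_sum (Finset.univ : Finset α).card Finset.univ P Q le_rfl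
      (fun j => Finset.subset_univ _) (fun j => Finset.subset_univ _) hd hne
    have hterm : ∀ j : Fin m, (1:ℚ) / ((n - q).choose ((n - q) / 2))
        ≤ 1 / ((((P j).card + (Q j).card).choose (P j).card) : ℚ) := by
      intro j
      have h1 : (P j).card + q ≤ (A j (Fin.last q)).card := gst_chain_card (A j) (hmono j)
      have h2 : (Q j).card = Fintype.card α - (A j (Fin.last q)).card := by
        rw [hQdef]; exact Finset.card_compl _
      have h3 : (A j (Fin.last q)).card ≤ Fintype.card α := Finset.card_le_univ _
      have h4 : (P j).card + (Q j).card ≤ n - q := by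
        rw [hcard] at h2 h3; omega
      have hcc : (((P j).card + (Q j).card).choose (P j).card)
          ≤ (n - q).choose ((n - q) / 2) := by
        calc (((P j).card + (Q j).card).choose (P j).card)
            ≤ ((P j).card + (Q j).card).choose (((P j).card + (Q j).card) / 2) :=
              Nat.choose_le_middle _ _
          _ ≤ (n - q).choose (((P j).card + (Q j).card) / 2) :=
              Nat.choose_le_choose _ h4
          _ ≤ (n - q).choose ((n - q) / 2) := Nat.choose_le_middle _ _
      have hposj : (0:ℚ) < ((((P j).card + (Q j).card).choose (P j).card) : ℚ) := by
        exact_mod_cast Nat.choose_pos (Nat.le_add_right _ _)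
      apply one_div_le_one_div_of_le hposj
      exact_mod_cast hcc
    have hm : (m : ℚ) * ((1:ℚ) / ((n - q).choose ((n - q) / 2))) ≤ 1 := by
      calc (m : ℚ) * ((1:ℚ) / ((n - q).choose ((n - q) / 2)))
          = ∑ _j : Fin m, ((1:ℚ) / ((n - q).choose ((n - q) / 2))) := by
            rw [Finset.sum_const]
            simp [mul_comm]
        _ ≤ ∑ j : Fin m, 1 / ((((P j).card + (Q j).card).choose (P j).card) : ℚ) :=
            Finset.sum_le_sum fun j _ => hterm j
        _ ≤ 1 := hsum
    have hCq : (0:ℚ) < ((n - q).choose ((n - q) / 2) : ℚ) := by exact_mod_cast hCpos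
    rw [mul_one_div, div_le_one hCq] at hm
    exact_mod_cast hm
  · -- the bound is attained
    intro hqn
    classical
    obtain ⟨D, -, hDcard⟩ := Finset.exists_subset_card_eq
      (show q ≤ (Finset.univ : Finset α).card by rw [Finset.card_univ, hcard]; exact hqn)
    have hRcard : Dᶜ.card = n - q := by
      rw [Finset.card_compl, hDcard, hcard]
    set 𝒜 : Finset (Finset α) := Dᶜ.powersetCard ((n - q) / 2) with h𝒜
    have h𝒜card : 𝒜.card = (n - q).choose ((n - q) / 2) := by
      rw [h𝒜, Finset.card_powersetCard, hRcard]
    -- enumeration of the middle layer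
    set E : Fin ((n - q).choose ((n - q) / 2)) → Finset α :=
      fun j => (𝒜.equivFin.symm (Fin.cast h𝒜card.symm j) : Finset α) with hE
    have hEmem : ∀ j, E j ∈ 𝒜 := fun j => (𝒜.equivFin.symm _).2
    have hEinj : Function.Injective E := by
      intro a b hab
      have := 𝒜.equivFin.symm.injective (Subtype.ext hab)
      exact Fin.cast_injective _ this
    have hEsub : ∀ j, E j ⊆ Dᶜ := fun j => (Finset.mem_powersetCard.mp (hEmem j)).1
    have hEcard : ∀ j, (E j).card = (n - q) / 2 :=
      fun j => (Finset.mem_powersetCard.mp (hEmem j)).2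
    -- enumeration of D
    set φ : Fin q → α := fun t => (D.equivFin.symm (Fin.cast hDcard.symm t) : α) with hφ
    have hφD : ∀ t, φ t ∈ D := fun t => (D.equivFin.symm _).2
    have hφinj : Function.Injective φ := by
      intro a b hab
      have := D.equivFin.symm.injective (Subtype.ext hab)
      exact Fin.cast_injective _ this
    set g : Fin (q + 1) → Finset α :=
      fun i => (Finset.univ.filter (fun t : Fin q => (t : ℕ) < (i : ℕ))).image φ with hg
    have hgD : ∀ i, g i ⊆ D := by
      intro i x hx
      obtain ⟨t, -, rfl⟩ := Finset.mem_image.mp hx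
      exact hφD t
    have hgmono : ∀ i i' : Fin (q + 1), i ≤ i' → g i ⊆ g i' := by
      intro i i' hii' x hx
      obtain ⟨t, ht, rfl⟩ := Finset.mem_image.mp hx
      apply Finset.mem_image_of_mem
      rw [Finset.mem_filter] at ht ⊢
      have h2 : (i : ℕ) ≤ (i' : ℕ) := hii'
      exact ⟨Finset.mem_univ _, by omega⟩
    have hmono : ∀ (j : Fin ((n - q).choose ((n - q) / 2))) (i i' : Fin (q + 1)),
        i < i' → E j ∪ g i ⊂ E j ∪ g i' := by
      intro j i i' hii'
      have hsub : E j ∪ g i ⊆ E j ∪ g i' :=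
        Finset.union_subset_union_right (hgmono i i' (le_of_lt hii'))
      rw [Finset.ssubset_iff_of_subset hsub]
      have hiq : (i : ℕ) < q := by
        have h1 := i'.isLt
        have h2 : (i : ℕ) < (i' : ℕ) := hii'
        omega
      refine ⟨φ ⟨(i : ℕ), hiq⟩, ?_, ?_⟩
      · apply Finset.mem_union_right
        apply Finset.mem_image_of_mem
        simp only [Finset.mem_filter, Finset.mem_univ, true_and]
        exact hii'
      · intro hmem
        rcases Finset.mem_union.mp hmem with h | h
        · exact (Finset.mem_compl.mp (hEsub j h)) (hφD _)
        · obtain ⟨t, ht, hteq⟩ := Finset.mem_image.mp h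
          rw [Finset.mem_filter] at ht
          have := hφinj hteq
          rw [this] at ht
          simp at ht
    have hunrel : ∀ j k : Fin ((n - q).choose ((n - q) / 2)), j ≠ k →
        ∀ i l : Fin (q + 1), ¬ (E j ∪ g i) ⊆ (E k ∪ g l) := by
      intro j k hjk i l hsub
      have hEE : E j ⊆ E k := by
        intro x hx
        have hx' : x ∈ E k ∪ g l := hsub (Finset.mem_union_left _ hx)
        rcases Finset.mem_union.mp hx' with h | h
        · exact h
        · exact absurd (hgD l h) (Finset.mem_compl.mp (hEsub j hx))
      have : E j = E k := Finset.eq_of_subset_of_card_le hEE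
        (by rw [hEcard j, hEcard k])
      exact hjk (hEinj this)
    refine ⟨(n - q).choose ((n - q) / 2), fun j i => E j ∪ g i, ?_, ?_, ?_, rfl⟩
    · exact fun j i i' h => hmono j i i' h
    · intro j k hA
      by_contra hjk
      rw [funext_iff] at hA
      exact hunrel j k hjk 0 0 (le_of_eq (hA 0))
    · exact hunrel
end

section
/- Let n > 0 and suppose (A_j, B_j) for j = 1, ..., m are m pairs of finite sets such that A_j ∩ B_j = ∅ for all j, A_j ∩ B_k ≠ ∅ for all j ≠ k, and |A_j| + |B_j| ≤ n for all j. Then m ≤ C(n, ⌊n/2⌋), and for every n this bound is attained by some such family of pairs. -/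
open Finset

private lemma choose_id_aux (a b : ℕ) (hb : 1 ≤ b) :
    (a + b).choose a * b = (a + b) * ((a + b - 1).choose a) := by
  have hn : a + b = (a + b - 1) + 1 := by omega
  have h1 := Nat.add_one_mul_choose_eq (a + b - 1) a
  have h2 := Nat.choose_succ_right_eq (a + b) a
  have hba : a + b - a = b := by omega
  rw [hba] at h2
  simp only [Nat.succ_eq_add_one, ← hn] at h1
  omega

private lemma qchoose_id (a b : ℕ) (hb : 1 ≤ b) :
    (b : ℚ) * (((a + b - 1).choose a : ℚ))⁻¹ = ((a + b : ℕ) : ℚ) * (((a + b).choose a : ℚ))⁻¹ := by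
  have h1 : 0 < (a + b - 1).choose a := Nat.choose_pos (by omega)
  have h2 : 0 < (a + b).choose a := Nat.choose_pos (by omega)
  have h1' : ((a + b - 1).choose a : ℚ) ≠ 0 := by positivity
  have h2' : (((a + b).choose a : ℚ)) ≠ 0 := by positivity
  field_simp
  have := choose_id_aux a b hb
  have : ((a + b).choose a * b : ℚ) = (a + b) * ((a + b - 1).choose a) := by exact_mod_cast this
  push_cast at this ⊢
  linarith

private lemma bollobas_small {ι α : Type} [DecidableEq ι] [DecidableEq α]
    (s : Finset ι) (A B : ι → Finset α)
    (h2 : ∀ i ∈ s, ∀ k ∈ s, i ≠ k → (A i ∩ B k).Nonempty)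
    (i : ι) (hi : i ∈ s) (hBi : B i = ∅) :
    ∑ i ∈ s, (((((A i).card + (B i).card).choose (A i).card : ℕ)) : ℚ)⁻¹ ≤ 1 := by
  have hs : s = {i} := by
    rw [Finset.eq_singleton_iff_unique_mem]
    refine ⟨hi, fun k hk => ?_⟩
    by_contra hne
    obtain ⟨y, hy⟩ := h2 k hk i hi hne
    rw [hBi] at hy
    simp at hy
  subst hs
  rw [Finset.sum_singleton]
  have h1 : 1 ≤ ((A i).card + (B i).card).choose (A i).card :=
    Nat.choose_pos (Nat.le_add_right _ _)
  rw [inv_le_one_iff₀]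
  right
  exact_mod_cast h1

private lemma bollobas_s4 {ι α : Type} [DecidableEq ι] [DecidableEq α] :
    ∀ (N : ℕ) (s : Finset ι) (A B : ι → Finset α),
    (s.biUnion (fun i => A i ∪ B i)).card ≤ N →
    (∀ i ∈ s, A i ∩ B i = ∅) →
    (∀ i ∈ s, ∀ k ∈ s, i ≠ k → (A i ∩ B k).Nonempty) →
    ∑ i ∈ s, (((((A i).card + (B i).card).choose (A i).card : ℕ)) : ℚ)⁻¹ ≤ 1 := by
  intro N
  induction N with
  | zero =>
    intro s A B hcard h1 h2
    rcases s.eq_empty_or_nonempty with hs | ⟨i, hi⟩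
    · simp [hs]
    · have hX : s.biUnion (fun i => A i ∪ B i) = ∅ := Finset.card_eq_zero.mp (by omega)
      have hBi : B i = ∅ := by
        have : B i ⊆ s.biUnion (fun i => A i ∪ B i) :=
          (Finset.subset_union_right).trans (Finset.subset_biUnion_of_mem (fun i => A i ∪ B i) hi)
        rw [hX] at this
        exact Finset.subset_empty.mp this
      exact bollobas_small s A B h2 i hi hBi
  | succ N IH =>
    intro s A B hcard h1 h2
    rcases s.eq_empty_or_nonempty with hs | ⟨i₀, hi₀⟩
    · simp [hs]
    by_cases hBe : ∃ i ∈ s, B i = ∅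
    · obtain ⟨i, hi, hBi⟩ := hBe
      exact bollobas_small s A B h2 i hi hBi
    push_neg at hBe
    set X := s.biUnion (fun i => A i ∪ B i) with hXdef
    have hsubX : ∀ i ∈ s, A i ∪ B i ⊆ X := fun i hi => Finset.subset_biUnion_of_mem (fun i => A i ∪ B i) hi
    have hXne : X.Nonempty := by
      obtain ⟨y, hy⟩ := (hBe i₀ hi₀)
      exact ⟨y, hsubX i₀ hi₀ (Finset.mem_union_right _ hy)⟩
    have key : ∀ x ∈ X, ∑ i ∈ s, (if x ∉ A i then
        ((((A i).card + ((B i).erase x).card).choose (A i).card : ℕ) : ℚ)⁻¹ else 0) ≤ 1 := by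
      intro x hx
      rw [← Finset.sum_filter]
      refine IH (s.filter (fun i => x ∉ A i)) A (fun i => (B i).erase x) ?_ ?_ ?_
      · show ((s.filter (fun i => x ∉ A i)).biUnion (fun i => A i ∪ (B i).erase x)).card ≤ N
        have hsub : (s.filter (fun i => x ∉ A i)).biUnion (fun i => A i ∪ (B i).erase x)
            ⊆ X.erase x := by
          intro y hy
          simp only [Finset.mem_biUnion, Finset.mem_filter] at hy
          obtain ⟨i, ⟨his, hxA⟩, hyu⟩ := hy
          rcases Finset.mem_union.1 hyu with h | h
          · exact Finset.mem_erase.2 ⟨fun he => hxA (he ▸ h), hsubX i his (Finset.mem_union_left _ h)⟩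
          · exact Finset.mem_erase.2 ⟨(Finset.mem_erase.1 h).1,
              hsubX i his (Finset.mem_union_right _ (Finset.mem_of_mem_erase h))⟩
        have h1' := Finset.card_le_card hsub
        have h2' : (X.erase x).card = X.card - 1 := Finset.card_erase_of_mem hx
        omega
      · intro i hi
        rw [Finset.mem_filter] at hi
        have hsub2 : A i ∩ (B i).erase x ⊆ A i ∩ B i :=
          Finset.inter_subset_inter Finset.Subset.rfl (Finset.erase_subset _ _)
        rw [h1 i hi.1] at hsub2
        exact Finset.subset_empty.mp hsub2
      · intro i hi k hk hne
        rw [Finset.mem_filter] at hi hk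
        obtain ⟨y, hy⟩ := h2 i hi.1 k hk.1 hne
        rw [Finset.mem_inter] at hy
        exact ⟨y, Finset.mem_inter.2 ⟨hy.1,
          Finset.mem_erase.2 ⟨fun he => hi.2 (he ▸ hy.1), hy.2⟩⟩⟩
    have inner : ∀ i ∈ s, ∑ x ∈ X, (if x ∉ A i then
        ((((A i).card + ((B i).erase x).card).choose (A i).card : ℕ) : ℚ)⁻¹ else 0)
        = (X.card : ℚ) * ((((A i).card + (B i).card).choose (A i).card : ℕ) : ℚ)⁻¹ := by
      intro i hi
      have hdisj : Disjoint (A i) (B i) := Finset.disjoint_iff_inter_eq_empty.2 (h1 i hi)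
      have hsub := hsubX i hi
      have hb1 : 1 ≤ (B i).card :=
        Finset.card_pos.2 (hBe i hi)
      have hcardU : (A i ∪ B i).card = (A i).card + (B i).card :=
        Finset.card_union_of_disjoint hdisj
      have hab : (A i).card + (B i).card ≤ X.card := by
        rw [← hcardU]; exact Finset.card_le_card hsub
      rw [← Finset.sum_sdiff hsub, Finset.sum_union hdisj]
      have e1 : ∑ x ∈ X \ (A i ∪ B i), (if x ∉ A i then
          ((((A i).card + ((B i).erase x).card).choose (A i).card : ℕ) : ℚ)⁻¹ else 0)
          = ((X.card - ((A i).card + (B i).card) : ℕ) : ℚ)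
            * ((((A i).card + (B i).card).choose (A i).card : ℕ) : ℚ)⁻¹ := by
        rw [Finset.sum_congr rfl (fun x hx => ?_), Finset.sum_const, Finset.card_sdiff_of_subset hsub,
          hcardU, nsmul_eq_mul]
        rw [Finset.mem_sdiff, Finset.mem_union] at hx
        rw [if_pos (fun h => hx.2 (Or.inl h)), Finset.erase_eq_of_notMem (fun h => hx.2 (Or.inr h))]
      have e2 : ∑ x ∈ A i, (if x ∉ A i then
          ((((A i).card + ((B i).erase x).card).choose (A i).card : ℕ) : ℚ)⁻¹ else 0) = 0 := by
        refine Finset.sum_eq_zero (fun x hx => ?_)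
        rw [if_neg (by simp [hx])]
      have e3 : ∑ x ∈ B i, (if x ∉ A i then
          ((((A i).card + ((B i).erase x).card).choose (A i).card : ℕ) : ℚ)⁻¹ else 0)
          = ((B i).card : ℚ)
            * ((((A i).card + (B i).card - 1).choose (A i).card : ℕ) : ℚ)⁻¹ := by
        rw [Finset.sum_congr rfl (fun x hx => ?_), Finset.sum_const, nsmul_eq_mul]
        have hxA : x ∉ A i := Finset.disjoint_right.1 hdisj hx
        rw [if_pos hxA, Finset.card_erase_of_mem hx]
        have heq : (A i).card + ((B i).card - 1) = (A i).card + (B i).card - 1 := by omega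
        rw [heq]
      rw [e1, e2, e3]
      have e4 := qchoose_id (A i).card (B i).card hb1
      have e5 : ((X.card - ((A i).card + (B i).card) : ℕ) : ℚ)
          = (X.card : ℚ) - (((A i).card + (B i).card : ℕ) : ℚ) := by
        push_cast [Nat.cast_sub hab]
        ring
      rw [e5]
      push_cast at e4 ⊢
      linarith [e4]
    have total : ∑ i ∈ s, ∑ x ∈ X, (if x ∉ A i then
        ((((A i).card + ((B i).erase x).card).choose (A i).card : ℕ) : ℚ)⁻¹ else 0)
        ≤ (X.card : ℚ) := by
      rw [Finset.sum_comm]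
      calc ∑ x ∈ X, ∑ i ∈ s, _ ≤ ∑ _x ∈ X, (1 : ℚ) := Finset.sum_le_sum key
        _ = (X.card : ℚ) := by simp
    rw [Finset.sum_congr rfl inner, ← Finset.mul_sum] at total
    have hX0 : (0 : ℚ) < X.card := by exact_mod_cast Finset.card_pos.2 hXne
    nlinarith [total]

/-- **Griggs–Stahl–Trotter theorem, simplified form.** Let `n > 0` and let `(A_j, B_j)`,
`j = 1, …, m`, be pairs of finite sets with `A_j ∩ B_j = ∅`, `A_j ∩ B_k ≠ ∅` for `j ≠ k`,
and `|A_j| + |B_j| ≤ n`. Then `m ≤ C(n, ⌊n/2⌋)`; moreover for every `n` the bound is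
attained by some such family of pairs. -/
theorem gst_pairs (n : ℕ) (hn : 0 < n) :
    (∀ (α : Type) [DecidableEq α], ∀ (m : ℕ) (A B : Fin m → Finset α),
      (∀ j, A j ∩ B j = ∅) →
      (∀ j k : Fin m, j ≠ k → A j ∩ B k ≠ ∅) →
      (∀ j, (A j).card + (B j).card ≤ n) →
      m ≤ n.choose (n / 2)) ∧
    (∃ (m : ℕ) (A B : Fin m → Finset ℕ),
      (∀ j, A j ∩ B j = ∅) ∧
      (∀ j k : Fin m, j ≠ k → A j ∩ B k ≠ ∅) ∧
      (∀ j, (A j).card + (B j).card ≤ n) ∧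
      m = n.choose (n / 2)) := by
  constructor
  · intro α _ m A B h1 h2 h3
    have hb := bollobas_s4 ((Finset.univ : Finset (Fin m)).biUnion (fun i => A i ∪ B i)).card
      Finset.univ A B le_rfl (fun i _ => h1 i)
      (fun i _ k _ hne => Finset.nonempty_iff_ne_empty.2 (h2 i k hne))
    have hC : 0 < ((n.choose (n / 2) : ℕ) : ℚ) := by
      exact_mod_cast Nat.choose_pos (Nat.div_le_self n 2)
    have hterm : ∀ j : Fin m, ((n.choose (n / 2) : ℕ) : ℚ)⁻¹
        ≤ ((((A j).card + (B j).card).choose (A j).card : ℕ) : ℚ)⁻¹ := by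
      intro j
      have hle : ((A j).card + (B j).card).choose (A j).card ≤ n.choose (n / 2) :=
        le_trans (Nat.choose_le_choose _ (h3 j)) (Nat.choose_le_middle _ _)
      have hpos : 0 < ((((A j).card + (B j).card).choose (A j).card : ℕ) : ℚ) := by
        exact_mod_cast Nat.choose_pos (Nat.le_add_right _ _)
      exact inv_anti₀ hpos (by exact_mod_cast hle)
    have hm : (m : ℚ) * ((n.choose (n / 2) : ℕ) : ℚ)⁻¹ ≤ 1 := by
      calc (m : ℚ) * ((n.choose (n / 2) : ℕ) : ℚ)⁻¹
          = ∑ _j : Fin m, ((n.choose (n / 2) : ℕ) : ℚ)⁻¹ := by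
            rw [Finset.sum_const]; simp [mul_comm]
        _ ≤ ∑ j : Fin m, ((((A j).card + (B j).card).choose (A j).card : ℕ) : ℚ)⁻¹ :=
            Finset.sum_le_sum (fun j _ => hterm j)
        _ ≤ 1 := hb
    have : (m : ℚ) ≤ ((n.choose (n / 2) : ℕ) : ℚ) := by
      have h := mul_le_mul_of_nonneg_right hm (le_of_lt hC)
      rwa [one_mul, mul_assoc, inv_mul_cancel₀ (ne_of_gt hC), mul_one] at h
    exact_mod_cast this
  · set P := (Finset.range n).powersetCard (n / 2) with hPdef
    have hP : P.card = n.choose (n / 2) := by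
      rw [hPdef, Finset.card_powersetCard, Finset.card_range]
    refine ⟨n.choose (n / 2),
      fun j => ((P.equivFin.symm (Fin.cast hP.symm j)) : Finset ℕ),
      fun j => Finset.range n \ ((P.equivFin.symm (Fin.cast hP.symm j)) : Finset ℕ),
      ?_, ?_, ?_, rfl⟩
    case _ =>
      intro j
      exact Finset.inter_sdiff_self _ _
    case _ =>
      intro j k hne hcon
      have hmem : ∀ l, ((P.equivFin.symm (Fin.cast hP.symm l)) : Finset ℕ) ∈ P :=
        fun l => (P.equivFin.symm (Fin.cast hP.symm l)).2
      have hjP := Finset.mem_powersetCard.1 (hmem j)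
      have hkP := Finset.mem_powersetCard.1 (hmem k)
      have hsub : ((P.equivFin.symm (Fin.cast hP.symm j)) : Finset ℕ)
          ⊆ ((P.equivFin.symm (Fin.cast hP.symm k)) : Finset ℕ) := by
        intro y hy
        by_contra hyk
        have : y ∈ ((P.equivFin.symm (Fin.cast hP.symm j)) : Finset ℕ)
            ∩ (Finset.range n \ ((P.equivFin.symm (Fin.cast hP.symm k)) : Finset ℕ)) :=
          Finset.mem_inter.2 ⟨hy, Finset.mem_sdiff.2 ⟨hjP.1 hy, hyk⟩⟩
        rw [hcon] at this
        exact absurd this (Finset.notMem_empty y)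
      have heq : ((P.equivFin.symm (Fin.cast hP.symm j)) : Finset ℕ)
          = ((P.equivFin.symm (Fin.cast hP.symm k)) : Finset ℕ) :=
        Finset.eq_of_subset_of_card_le hsub (by rw [hjP.2, hkP.2])
      have : (Fin.cast hP.symm j) = (Fin.cast hP.symm k) :=
        P.equivFin.symm.injective (Subtype.ext heq)
      exact hne (by simpa [Fin.ext_iff] using this)
    case _ =>
      intro j
      have hjP := Finset.mem_powersetCard.1 (P.equivFin.symm (Fin.cast hP.symm j)).2
      rw [Finset.card_sdiff_of_subset hjP.1, Finset.card_range, hjP.2]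
      omega
end

section
/- Let S be a finite set with n elements and suppose (A_{j1}, ..., A_{jp}) for j = 1, ..., m are m distinct weak compositions of S into p parts such that for every k ∈ {1,...,p} the set of distinct values {A_{jk} : 1 ≤ j ≤ m} is an antichain. Then the sum over j = 1, ..., m of 1/(n!/(|A_{j1}|!···|A_{jp}|!)) is at most 1. -/
/-!
Encode a weak composition by its index function `f : S → Fin p`, and call an ordering
`τ : S ≃ Fin n` compatible with `f` if it lists the part `f⁻¹{1}` first, then `f⁻¹{2}`, and
so on. Some ordering is compatible, and composing it with the `∏ₖ |Aₖ|!` permutations of `S`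
that preserve every part gives that many compatible orderings. No ordering is compatible with
two distinct compositions `A`, `A'`: at the first index `k` with `Aₖ ≠ A'ₖ` the antichain
condition yields `a ∈ Aₖ \ A'ₖ` and `b ∈ A'ₖ \ Aₖ`; then `a` lies in a later part of `A'` and
`b` in a later part of `A`, so the ordering would put `a` before `b` and `b` before `a`. Hence
`∑ⱼ ∏ₖ |Aⱼₖ|! ≤ n!`.
-/

open Finset

section LinearExtension

variable {α ι : Type*} [LinearOrder ι]

def linearExtensions [Fintype α] [DecidableEq α] (f : α → ι) :
    Finset (α ≃ Fin (Fintype.card α)) :=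
  {τ | ∀ a b, f a < f b → τ a < τ b}

theorem exists_equiv_fin_lt_of_lt [Fintype α] (f : α → ι) :
    ∃ τ : α ≃ Fin (Fintype.card α), ∀ a b, f a < f b → τ a < τ b := by
  let key : α → ι ×ₗ Fin (Fintype.card α) := fun a => toLex (f a, Fintype.equivFin α a)
  have key_inj : Function.Injective key := fun a b h =>
    (Fintype.equivFin α).injective (congrArg (·.2) (toLex.injective h))
  let : LinearOrder α := LinearOrder.lift' key key_inj
  exact ⟨(Fintype.orderIsoFinOfCardEq α rfl).symm.toEquiv, fun a b hab =>
    (Fintype.orderIsoFinOfCardEq α rfl).symm.strictMono (Prod.Lex.left _ _ hab)⟩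

open Nat in
theorem prod_factorial_card_fiber_le_card_linearExtensions [Fintype α] [DecidableEq α]
    [Fintype ι] [DecidableEq ι] (f : α → ι) :
    ∏ i, (Fintype.card {a // f a = i})! ≤ #(linearExtensions f) := by
  obtain ⟨τ, hτ⟩ := exists_equiv_fin_lt_of_lt f
  rw [← DomMulAct.stabilizer_card, ← Finset.card_univ]
  refine card_le_card_of_injOn (fun g => (g : Equiv.Perm α).trans τ) (fun g _ => ?_) ?_
  · refine mem_filter.2 ⟨mem_univ _, fun a b hab => hτ _ _ ?_⟩
    simpa only [← Function.comp_apply (f := f), g.2] using hab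
  · intro g _ g' _ h
    exact Subtype.ext (Equiv.ext fun a => τ.injective (DFunLike.congr_fun h a))

theorem eq_of_lt_imp_lt_of_fiber_subset_imp_eq [WellFoundedLT ι] {β : Type*} [Preorder β]
    {f g : α → ι} {τ : α → β} (hf : ∀ a b, f a < f b → τ a < τ b)
    (hg : ∀ a b, g a < g b → τ a < τ b)
    (hfg : ∀ i, f ⁻¹' {i} ⊆ g ⁻¹' {i} → f ⁻¹' {i} = g ⁻¹' {i})
    (hgf : ∀ i, g ⁻¹' {i} ⊆ f ⁻¹' {i} → g ⁻¹' {i} = f ⁻¹' {i}) : f = g := by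
  by_contra hne
  obtain ⟨a₀, ha₀⟩ := Function.ne_iff.1 hne
  have hs : {i | f ⁻¹' {i} ≠ g ⁻¹' {i}}.Nonempty :=
    ⟨f a₀, fun h => ha₀ ((Set.ext_iff.1 h a₀).1 rfl).symm⟩
  obtain ⟨i, hi, hmin⟩ := wellFounded_lt.has_min _ hs
  have hbelow : ∀ j < i, f ⁻¹' {j} = g ⁻¹' {j} := fun j hj => not_not.1 (hmin j · hj)
  have moves_later : ∀ {u v : α → ι}, (∀ j < i, u ⁻¹' {j} = v ⁻¹' {j}) →
      ∀ a, u a = i → v a ≠ i → i < v a := by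
    intro u v huv a hua hva
    refine lt_of_le_of_ne (le_of_not_gt fun hlt => ?_) (Ne.symm hva)
    have hua' : u a = v a := (Set.ext_iff.1 (huv _ hlt) a).2 rfl
    exact hva (hua'.symm.trans hua)
  obtain ⟨a, hfa, hga⟩ := Set.not_subset.1 (mt (hfg i) hi)
  obtain ⟨b, hgb, hfb⟩ := Set.not_subset.1 (mt (hgf i) (Ne.symm hi))
  exact lt_asymm
    (hf a b (hfa.trans_lt (moves_later (fun j hj => (hbelow j hj).symm) b hgb hfb)))
    (hg b a (hgb.trans_lt (moves_later hbelow a hfa hga)))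

open Nat in
theorem sum_prod_factorial_card_fiber_le [Fintype α] [DecidableEq α] [Fintype ι] [DecidableEq ι]
    [WellFoundedLT ι] {J : Type*} [Fintype J] (f : J → α → ι) (hf : Function.Injective f)
    (hanti : ∀ i, IsAntichain (· ⊆ ·) (Set.range fun j => f j ⁻¹' {i})) :
    ∑ j, ∏ i, (Fintype.card {a // f j a = i})! ≤ (Fintype.card α)! := by
  have hdisj : (↑(univ : Finset J) : Set J).PairwiseDisjoint (linearExtensions ∘ f) :=
    fun j _ j' _ hne => disjoint_left.2 fun τ hτ hτ' => hne <| hf <|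
      eq_of_lt_imp_lt_of_fiber_subset_imp_eq (mem_filter.1 hτ).2 (mem_filter.1 hτ').2
        (fun i => (hanti i).eq ⟨j, rfl⟩ ⟨j', rfl⟩) (fun i => (hanti i).eq ⟨j', rfl⟩ ⟨j, rfl⟩)
  calc ∑ j, ∏ i, (Fintype.card {a // f j a = i})!
      ≤ ∑ j, #(linearExtensions (f j)) :=
        sum_le_sum fun j _ => prod_factorial_card_fiber_le_card_linearExtensions (f j)
    _ = #(univ.biUnion (linearExtensions ∘ f)) := (card_biUnion hdisj).symm
    _ ≤ Fintype.card (α ≃ Fin (Fintype.card α)) := card_le_univ _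
    _ = (Fintype.card α)! := Fintype.card_equiv (Fintype.equivFin α)

end LinearExtension

theorem Finset.exists_eq_filter_eq_of_disjoint_of_biUnion_eq_univ {α ι : Type*} [Fintype α]
    [DecidableEq α] [Fintype ι] [DecidableEq ι] {B : ι → Finset α}
    (hdisj : ∀ i j, i ≠ j → Disjoint (B i) (B j)) (hcover : univ.biUnion B = univ) :
    ∃ f : α → ι, ∀ i, B i = ({a | f a = i} : Finset α) := by
  have hmem : ∀ a, ∃ i, a ∈ B i := fun a => by
    simpa using (hcover ▸ mem_univ a : a ∈ univ.biUnion B)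
  choose f hf using hmem
  refine ⟨f, fun i => ext fun a => ?_⟩
  rw [mem_filter_univ]
  refine ⟨fun ha => ?_, fun hfa => hfa ▸ hf a⟩
  by_contra hne
  exact disjoint_left.1 (hdisj i (f a) (Ne.symm hne)) ha (hf a)

/-- **Hochberg–Hirsch LYM inequality.** If `(A_{j1}, …, A_{jp})`, `j = 1, …, m`, are distinct
weak compositions of an `n`-element set `S` into `p` parts such that for each coordinate `k`
the set of distinct values `{A_{jk}}` is an antichain, then
`∑_j 1/(n!/(|A_{j1}|! ⋯ |A_{jp}|!)) ≤ 1`. -/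
theorem hochberg_hirsch {α : Type*} [Fintype α] [DecidableEq α] (n p : ℕ)
    (hcard : Fintype.card α = n)
    (m : ℕ) (A : Fin m → Fin p → Finset α) (hinj : Function.Injective A)
    (hdisj : ∀ j, ∀ k l : Fin p, k ≠ l → Disjoint (A j k) (A j l))
    (hcover : ∀ j, Finset.univ.biUnion (A j) = (Finset.univ : Finset α))
    (hanti : ∀ k : Fin p, IsAntichain (· ⊆ ·) (Set.range fun j => A j k)) :
    ∑ j, (1 : ℝ) /
        ((n.factorial : ℝ) / ∏ k, ((A j k).card.factorial : ℝ)) ≤ 1 := by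
  subst hcard
  choose f hf using fun j =>
    exists_eq_filter_eq_of_disjoint_of_biUnion_eq_univ (hdisj j) (hcover j)
  have hfib : ∀ j k, ↑(A j k) = f j ⁻¹' {k} := fun j k => by ext; simp [hf]
  have hf_inj : Function.Injective f := fun j j' h => hinj (funext fun k => by rw [hf j, hf j', h])
  have hanti' : ∀ k, IsAntichain (· ⊆ ·) (Set.range fun j => f j ⁻¹' {k}) := fun k => by
    have hrange : (Set.range fun j => f j ⁻¹' {k}) = (↑) '' Set.range fun j => A j k := by
      simp only [← Set.range_comp, Function.comp_def, hfib]
    exact hrange ▸ (hanti k).image _ fun _ _ => coe_subset.1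
  have hbound := sum_prod_factorial_card_fiber_le f hf_inj hanti'
  simp only [Fintype.card_subtype, ← hf] at hbound
  calc ∑ j, (1 : ℝ) / ((Fintype.card α).factorial / ∏ k, ((A j k).card.factorial : ℝ))
      = (∑ j, ∏ k, ((A j k).card.factorial : ℝ)) / (Fintype.card α).factorial := by
        simp only [one_div_div, sum_div]
    _ ≤ 1 := div_le_one_of_le₀ (by exact_mod_cast hbound) (by positivity)
end

section
/- Suppose (A_j, B_j) for j = 1, ..., m are m pairs of finite sets such that A_j ∩ B_j = ∅ for all j and A_j ∩ B_k ≠ ∅ for all j ≠ k. Then the sum over j = 1, ..., m of 1/C(|A_j| + |B_j|, |A_j|) is at most 1. -/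
open Finset

lemma bb_key (a b' : ℕ) :
    (b' + 1) * (a + (b' + 1)).choose a = (a + (b' + 1)) * (a + b').choose a := by
  have h1 : (a + (b' + 1)).choose a = (a + (b' + 1)).choose (b' + 1) :=
    Nat.choose_symm_add
  have h2 : (a + b').choose a = (a + b').choose b' := Nat.choose_symm_add
  have h3 := Nat.add_one_mul_choose_eq (a + b') b'
  rw [h1, h2]
  rw [mul_comm]
  exact h3.symm

lemma bb_small {α ι : Type*} [DecidableEq α] (J : Finset ι)
    (A B : ι → Finset α) (hJ : J.card ≤ 1) :
    ∑ j ∈ J, (1 : ℝ) / (((A j).card + (B j).card).choose (A j).card) ≤ 1 := by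
  rcases J.eq_empty_or_nonempty with rfl | ⟨j, hj⟩
  · simp
  · have hJs : J = {j} :=
      Finset.eq_singleton_iff_unique_mem.mpr
        ⟨hj, fun k hk => Finset.card_le_one.mp hJ k hk j hj⟩
    rw [hJs, Finset.sum_singleton]
    have hc : 0 < (((A j).card + (B j).card).choose (A j).card) :=
      Nat.choose_pos (Nat.le_add_right _ _)
    rw [div_le_one (by exact_mod_cast hc)]
    exact_mod_cast hc

lemma bb_aux {α ι : Type*} [DecidableEq α] [DecidableEq ι] (n : ℕ) :
    ∀ (J : Finset ι) (A B : ι → Finset α),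
    (J.biUnion (fun j => A j ∪ B j)).card ≤ n →
    (∀ j ∈ J, A j ∩ B j = ∅) →
    (∀ j ∈ J, ∀ k ∈ J, j ≠ k → A j ∩ B k ≠ ∅) →
    ∑ j ∈ J, (1 : ℝ) / (((A j).card + (B j).card).choose (A j).card) ≤ 1 := by
  induction n with
  | zero =>
    intro J A B hcard hdisj hcross
    apply bb_small J A B
    -- union is empty, so all A j (j ∈ J) are empty, so J has at most one element
    have hU : J.biUnion (fun j => A j ∪ B j) = ∅ :=
      Finset.card_eq_zero.mp (Nat.le_zero.mp hcard)
    rw [Finset.card_le_one]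
    intro j hj k hk
    by_contra hne
    apply hcross j hj k hk hne
    have hAj : A j = ∅ := by
      have := Finset.subset_biUnion_of_mem (s := J) (fun j => A j ∪ B j) hj
      rw [hU] at this
      exact Finset.subset_empty.mp (Finset.union_subset_iff.mp this).1
    rw [hAj]
    exact Finset.empty_inter _
  | succ n ih =>
    intro J A B hcard hdisj hcross
    by_cases hJ1 : J.card ≤ 1
    · exact bb_small J A B hJ1
    set U := J.biUnion (fun j => A j ∪ B j) with hUdef
    by_cases hUn : U.card ≤ n
    · exact ih J A B hUn hdisj hcross
    have hUpos : 0 < U.card := by omega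
    -- every B j, j ∈ J, is nonempty
    have hBne : ∀ j ∈ J, (B j).Nonempty := by
      intro j hj
      obtain ⟨k, hk, hkj⟩ : ∃ k ∈ J, k ≠ j := by
        by_contra h
        push_neg at h
        exact hJ1 (Finset.card_le_one.mpr (fun a ha b hb => (h a ha).trans (h b hb).symm))
      have := hcross k hk j hj hkj
      rcases Finset.nonempty_iff_ne_empty.mpr this with ⟨x, hx⟩
      exact ⟨x, (Finset.mem_inter.mp hx).2⟩
    -- subsets of U
    have hAU : ∀ j ∈ J, A j ⊆ U := fun j hj => by
      intro x hx
      exact Finset.mem_biUnion.mpr ⟨j, hj, Finset.mem_union_left _ hx⟩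
    have hBU : ∀ j ∈ J, B j ⊆ U := fun j hj => by
      intro x hx
      exact Finset.mem_biUnion.mpr ⟨j, hj, Finset.mem_union_right _ hx⟩
    -- apply induction hypothesis for each x ∈ U
    have hIH : ∀ x ∈ U,
        ∑ j ∈ J.filter (fun j => x ∉ A j),
          (1 : ℝ) / (((A j).card + ((B j).erase x).card).choose (A j).card) ≤ 1 := by
      intro x hx
      apply ih (J.filter (fun j => x ∉ A j)) A (fun j => (B j).erase x)
      · calc ((J.filter (fun j => x ∉ A j)).biUnion
              (fun j => A j ∪ (B j).erase x)).card
            ≤ (U.erase x).card := by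
              apply Finset.card_le_card
              intro y hy
              obtain ⟨j, hj, hyj⟩ := Finset.mem_biUnion.mp hy
              have hjJ := (Finset.mem_filter.mp hj).1
              have hxA := (Finset.mem_filter.mp hj).2
              rcases Finset.mem_union.mp hyj with h | h
              · exact Finset.mem_erase.mpr ⟨fun he => hxA (he ▸ h),
                  hAU j hjJ h⟩
              · exact Finset.mem_erase.mpr ⟨(Finset.mem_erase.mp h).1,
                  hBU j hjJ (Finset.mem_erase.mp h).2⟩
          _ ≤ n := by
              rw [Finset.card_erase_of_mem hx]
              omega
      · intro j hj
        have := hdisj j (Finset.mem_filter.mp hj).1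
        apply Finset.subset_empty.mp
        rw [← this]
        exact Finset.inter_subset_inter Finset.Subset.rfl (Finset.erase_subset _ _)
      · intro j hj k hk hne
        have hjJ := (Finset.mem_filter.mp hj).1
        have hxA := (Finset.mem_filter.mp hj).2
        have hkJ := (Finset.mem_filter.mp hk).1
        have hne2 := hcross j hjJ k hkJ hne
        obtain ⟨y, hy⟩ := Finset.nonempty_iff_ne_empty.mpr hne2
        rw [← Finset.nonempty_iff_ne_empty]
        refine ⟨y, Finset.mem_inter.mpr ⟨(Finset.mem_inter.mp hy).1,
          Finset.mem_erase.mpr ⟨?_, (Finset.mem_inter.mp hy).2⟩⟩⟩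
        intro h
        exact hxA (h ▸ (Finset.mem_inter.mp hy).1)
    -- sum over x
    have hsum : ∑ x ∈ U, ∑ j ∈ J.filter (fun j => x ∉ A j),
          (1 : ℝ) / (((A j).card + ((B j).erase x).card).choose (A j).card)
        ≤ (U.card : ℝ) := by
      calc _ ≤ ∑ _x ∈ U, (1:ℝ) := Finset.sum_le_sum hIH
        _ = (U.card : ℝ) := by simp
    -- swap sums
    have hswap : ∑ x ∈ U, ∑ j ∈ J.filter (fun j => x ∉ A j),
          (1 : ℝ) / (((A j).card + ((B j).erase x).card).choose (A j).card)
        = ∑ j ∈ J, ∑ x ∈ U.filter (fun x => x ∉ A j),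
          (1 : ℝ) / (((A j).card + ((B j).erase x).card).choose (A j).card) := by
      simp only [Finset.sum_filter]
      exact Finset.sum_comm
    -- compute inner sum per j
    have hinner : ∀ j ∈ J, ∑ x ∈ U.filter (fun x => x ∉ A j),
          (1 : ℝ) / (((A j).card + ((B j).erase x).card).choose (A j).card)
        = (U.card : ℝ) / (((A j).card + (B j).card).choose (A j).card) := by
      intro j hj
      have hABdisj : Disjoint (A j) (B j) :=
        Finset.disjoint_iff_inter_eq_empty.mpr (hdisj j hj)
      have hsplit : U.filter (fun x => x ∉ A j) = B j ∪ (U \ (A j ∪ B j)) := by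
        ext x
        simp only [Finset.mem_filter, Finset.mem_union, Finset.mem_sdiff]
        constructor
        · rintro ⟨hxU, hxA⟩
          by_cases hxB : x ∈ B j
          · exact Or.inl hxB
          · exact Or.inr ⟨hxU, by tauto⟩
        · rintro (h | ⟨hxU, hx⟩)
          · exact ⟨hBU j hj h, fun hA => (Finset.disjoint_left.mp hABdisj) hA h⟩
          · exact ⟨hxU, fun hA => hx (Or.inl hA)⟩
      have hdisj2 : Disjoint (B j) (U \ (A j ∪ B j)) := by
        rw [Finset.disjoint_left]
        intro x hx hx2
        exact (Finset.mem_sdiff.mp hx2).2 (Finset.mem_union_right _ hx)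
      rw [hsplit, Finset.sum_union hdisj2]
      obtain ⟨b', hb'⟩ : ∃ b', (B j).card = b' + 1 := by
        obtain ⟨x, hx⟩ := hBne j hj
        have := Finset.card_pos.mpr ⟨x, hx⟩
        exact ⟨(B j).card - 1, by omega⟩
      set a := (A j).card
      have h1 : ∑ x ∈ B j,
          (1 : ℝ) / ((a + ((B j).erase x).card).choose a)
          = (b' + 1 : ℝ) / ((a + b').choose a) := by
        rw [Finset.sum_congr rfl (fun x hx => by
          rw [Finset.card_erase_of_mem hx, hb'])]
        rw [Finset.sum_const, hb', nsmul_eq_mul, mul_one_div]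
        push_cast
        ring_nf
      have h2 : ∑ x ∈ U \ (A j ∪ B j),
          (1 : ℝ) / ((a + ((B j).erase x).card).choose a)
          = ((U.card - (a + (b'+1)) : ℕ) : ℝ) / ((a + (b'+1)).choose a) := by
        rw [Finset.sum_congr rfl (fun x hx => by
          rw [Finset.erase_eq_of_notMem
            (fun hB => (Finset.mem_sdiff.mp hx).2 (Finset.mem_union_right _ hB)), hb'])]
        rw [Finset.sum_const, Finset.card_sdiff_of_subset (by
          apply Finset.union_subset (hAU j hj) (hBU j hj))]
        rw [Finset.card_union_of_disjoint hABdisj, hb', nsmul_eq_mul, mul_one_div]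
      rw [h1, h2, hb']
      -- now the numeric identity
      have hle : a + (b' + 1) ≤ U.card := by
        have := Finset.card_le_card (Finset.union_subset (hAU j hj) (hBU j hj))
        rwa [Finset.card_union_of_disjoint hABdisj, hb'] at this
      have hkey := bb_key a b'
      have hc1 : (0:ℝ) < ((a + (b'+1)).choose a : ℝ) := by
        exact_mod_cast Nat.choose_pos (Nat.le_add_right _ _)
      have hc2 : (0:ℝ) < ((a + b').choose a : ℝ) := by
        exact_mod_cast Nat.choose_pos (Nat.le_add_right _ _)
      have hcast : ((U.card - (a + (b'+1)) : ℕ) : ℝ)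
          = (U.card : ℝ) - (a + (b'+1) : ℕ) := by
        exact Nat.cast_sub hle
      rw [hcast]
      have hkeyR : ((b':ℝ) + 1) * ((a + (b'+1)).choose a : ℝ)
          = ((a:ℝ) + (b'+1)) * ((a + b').choose a : ℝ) := by
        exact_mod_cast hkey
      field_simp
      push_cast at hkeyR ⊢
      nlinarith [hkeyR, hc1, hc2]
    -- put it together
    have hfinal : ∑ j ∈ J, (U.card : ℝ) /
        (((A j).card + (B j).card).choose (A j).card) ≤ (U.card : ℝ) := by
      calc ∑ j ∈ J, (U.card : ℝ) / (((A j).card + (B j).card).choose (A j).card)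
          = ∑ j ∈ J, ∑ x ∈ U.filter (fun x => x ∉ A j),
            (1 : ℝ) / (((A j).card + ((B j).erase x).card).choose (A j).card) :=
            (Finset.sum_congr rfl (fun j hj => (hinner j hj).symm))
        _ = _ := hswap.symm
        _ ≤ (U.card : ℝ) := hsum
    have hUposR : (0:ℝ) < (U.card : ℝ) := by exact_mod_cast hUpos
    have heq : ∑ j ∈ J, (1 : ℝ) / (((A j).card + (B j).card).choose (A j).card)
        = (∑ j ∈ J, (U.card : ℝ) /
          (((A j).card + (B j).card).choose (A j).card)) / (U.card : ℝ) := by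
      rw [Finset.sum_div]
      refine Finset.sum_congr rfl fun j _ => ?_
      rw [div_div, mul_comm, ← div_div, div_self hUposR.ne']
    calc ∑ j ∈ J, (1 : ℝ) / (((A j).card + (B j).card).choose (A j).card)
        = (∑ j ∈ J, (U.card : ℝ) /
          (((A j).card + (B j).card).choose (A j).card)) / (U.card : ℝ) := heq
      _ ≤ (U.card : ℝ) / (U.card : ℝ) := by gcongr
      _ = 1 := div_self hUposR.ne'

/-- **Bollobás's LYM inequality.** If `(A_j, B_j)`, `j = 1, …, m`, are pairs of finite sets
with `A_j ∩ B_j = ∅` for all `j` and `A_j ∩ B_k ≠ ∅` for all `j ≠ k`, then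
`∑_j 1/C(|A_j| + |B_j|, |A_j|) ≤ 1`. -/
theorem bollobas {α : Type*} [DecidableEq α] (m : ℕ) (A B : Fin m → Finset α)
    (hdisj : ∀ j, A j ∩ B j = ∅)
    (hcross : ∀ j k : Fin m, j ≠ k → A j ∩ B k ≠ ∅) :
    ∑ j, (1 : ℝ) / (((A j).card + (B j).card).choose (A j).card) ≤ 1 := by
  exact bb_aux (Finset.univ.biUnion (fun j => A j ∪ B j)).card Finset.univ A B
    le_rfl (fun j _ => hdisj j) (fun j _ k _ h => hcross j k h)
end

section
/- Fix integers p ≥ 2 and r ≥ 1. Suppose (A_{j1}, ..., A_{jp}) for j = 1, ..., m are m distinct weak set compositions into p parts satisfying Condition (*). Then the sum over j = 1, ..., m of 1/( (|A_{j1}|+···+|A_{jp}|)! / (|A_{j1}|!···|A_{jp}|!) ) is at most r^p. -/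
set_option linter.unusedSectionVars false

open Finset



variable {p : ℕ} (a : Fin p → ℕ)

/-- partial sums: `csum a k = ∑_{l < k} a l`. -/
def csum (k : ℕ) : ℕ := ∑ l ∈ univ.filter (fun l : Fin p => (l : ℕ) < k), a l

lemma csum_mono : Monotone (csum a) := fun k k' h => by
  apply Finset.sum_le_sum_of_subset
  intro l hl
  simp only [mem_filter, mem_univ, true_and] at *
  omega

lemma csum_zero : csum a 0 = 0 := by simp [csum]

lemma csum_succ {k : ℕ} (hk : k < p) : csum a (k + 1) = csum a k + a ⟨k, hk⟩ := by
  have : univ.filter (fun l : Fin p => (l : ℕ) < k + 1)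
      = insert ⟨k, hk⟩ (univ.filter (fun l : Fin p => (l : ℕ) < k)) := by
    ext l
    simp only [mem_filter, mem_insert, mem_univ, true_and, Fin.ext_iff]
    omega
  rw [csum, this, Finset.sum_insert (by simp), csum]
  ring

lemma csum_top : csum a p = ∑ l, a l := by
  rw [csum]
  congr 1
  apply Finset.filter_true_of_mem
  intro l _
  exact l.2

lemma csum_le_top (k : ℕ) : csum a k ≤ ∑ l, a l := by
  rw [← csum_top a]
  apply Finset.sum_le_sum_of_subset
  intro l hl; simp only [mem_filter, mem_univ, true_and]; exact l.2

lemma p_pos (i : Fin (∑ l, a l)) : 0 < p := by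
  rcases Nat.eq_zero_or_pos p with h | h
  · exfalso; have := i.2; subst h; simp at this
  · exact h

lemma blk_ex (i : Fin (∑ l, a l)) : ∃ k, (i : ℕ) < csum a (k + 1) :=
  ⟨p - 1, by
    have hp := p_pos a i
    have h : p - 1 + 1 = p := by omega
    rw [h, csum_top]
    exact i.2⟩

/-- the block of a rank `i : Fin (∑ a)`. -/
def blk (i : Fin (∑ l, a l)) : Fin p :=
  ⟨Nat.find (blk_ex a i), by
    have hp := p_pos a i
    have h1 : (i : ℕ) < csum a (p - 1 + 1) := by
      have h : p - 1 + 1 = p := by omega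
      rw [h, csum_top]; exact i.2
    have := Nat.find_le (h := blk_ex a i) h1
    omega⟩

lemma blk_spec (i : Fin (∑ l, a l)) :
    csum a (blk a i) ≤ (i : ℕ) ∧ (i : ℕ) < csum a ((blk a i) + 1) := by
  refine ⟨?_, Nat.find_spec (blk_ex a i)⟩
  rcases Nat.eq_zero_or_pos (blk a i : ℕ) with h | h
  · rw [h, csum_zero]; omega
  · have hb : (blk a i : ℕ) = Nat.find (blk_ex a i) := rfl
    have hmin := Nat.find_min (blk_ex a i) (m := (blk a i : ℕ) - 1) (by omega)
    simp only [not_lt] at hmin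
    have h2 : (blk a i : ℕ) - 1 + 1 = (blk a i : ℕ) := by omega
    rw [h2] at hmin
    exact hmin

lemma blk_eq_iff {i : Fin (∑ l, a l)} {k : Fin p} :
    blk a i = k ↔ csum a k ≤ (i : ℕ) ∧ (i : ℕ) < csum a ((k : ℕ) + 1) := by
  constructor
  · rintro rfl; exact blk_spec a i
  · rintro ⟨h1, h2⟩
    have hs := blk_spec a i
    by_contra hne
    rcases lt_or_gt_of_ne (fun h => hne (Fin.ext h) : (blk a i : ℕ) ≠ (k : ℕ)) with h | h
    · have : csum a ((blk a i) + 1) ≤ csum a k := csum_mono a (by omega)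
      omega
    · have : csum a ((k : ℕ) + 1) ≤ csum a (blk a i) := csum_mono a (by omega)
      omega

lemma blk_lt_of_lt {i i' : Fin (∑ l, a l)} {k k' : Fin p}
    (h : blk a i = k) (h' : blk a i' = k') (hkk : k < k') : i < i' := by
  rw [blk_eq_iff] at h h'
  have h3 : csum a ((k : ℕ) + 1) ≤ csum a k' := csum_mono a (by exact hkk)
  show (i : ℕ) < (i' : ℕ)
  omega

lemma card_blk_fiber (k : Fin p) :
    Fintype.card {i : Fin (∑ l, a l) // blk a i = k} = a k := by
  classical
  rw [Fintype.card_subtype]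
  have himg : Finset.image Fin.val (univ.filter (fun i : Fin (∑ l, a l) => blk a i = k))
      = Finset.Ico (csum a k) (csum a ((k : ℕ) + 1)) := by
    ext v
    simp only [Finset.mem_image, mem_filter, mem_univ, true_and, Finset.mem_Ico]
    constructor
    · rintro ⟨i, hi, rfl⟩
      rw [blk_eq_iff] at hi; exact hi
    · rintro ⟨h1, h2⟩
      have hv : v < ∑ l, a l := by
        have h3 : csum a ((k : ℕ) + 1) ≤ ∑ l, a l := csum_le_top a _
        omega
      exact ⟨⟨v, hv⟩, by rw [blk_eq_iff]; exact ⟨h1, h2⟩, rfl⟩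
  have hc := Finset.card_image_of_injective
    (univ.filter (fun i : Fin (∑ l, a l) => blk a i = k)) (Fin.val_injective)
  rw [himg] at hc
  rw [← hc, Nat.card_Ico]
  have h4 : csum a ((k : ℕ) + 1) = csum a k + a k := by
    rw [csum_succ a k.2]
  omega



/-- Equivs between two types that intertwine two classifiers decompose as a
product of equivs between fibers. -/
noncomputable def classifierEquiv {β γ : Type*} {q : ℕ} (c : β → Fin q) (d : γ → Fin q) :
    {σ : β ≃ γ // ∀ x, d (σ x) = c x} ≃ (∀ i : Fin q, {x // c x = i} ≃ {y // d y = i}) where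
  toFun σ i := Equiv.subtypeEquiv σ.1 (fun x => by
    constructor
    · rintro rfl; exact σ.2 x
    · intro h; rw [← σ.2 x, h])
  invFun F := ⟨(Equiv.sigmaFiberEquiv c).symm.trans
      ((Equiv.sigmaCongrRight F).trans (Equiv.sigmaFiberEquiv d)), by
    intro x
    have : (Equiv.sigmaFiberEquiv c).symm x = ⟨c x, ⟨x, rfl⟩⟩ := by
      apply (Equiv.sigmaFiberEquiv c).injective
      simp
    simp [this]
    exact (F (c x) ⟨x, rfl⟩).2⟩
  left_inv σ := by
    apply Subtype.ext
    apply Equiv.ext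
    intro x
    have : (Equiv.sigmaFiberEquiv c).symm x = ⟨c x, ⟨x, rfl⟩⟩ := by
      apply (Equiv.sigmaFiberEquiv c).injective
      simp
    simp [this]
  right_inv F := by
    funext i
    apply Equiv.ext
    rintro ⟨x, rfl⟩
    apply Subtype.ext
    have : (Equiv.sigmaFiberEquiv c).symm x = ⟨c x, ⟨x, rfl⟩⟩ := by
      apply (Equiv.sigmaFiberEquiv c).injective
      simp
    simp [this]

lemma card_classifier {β γ : Type*} [Fintype β] [Fintype γ] [DecidableEq β] [DecidableEq γ]
    {q : ℕ} (c : β → Fin q) (d : γ → Fin q)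
    (h : ∀ i, Fintype.card {x // c x = i} = Fintype.card {y // d y = i}) :
    Fintype.card {σ : β ≃ γ // ∀ x, d (σ x) = c x}
      = ∏ i : Fin q, (Fintype.card {x // c x = i}).factorial := by
  classical
  rw [Fintype.card_congr (classifierEquiv c d), Fintype.card_pi]
  refine Finset.prod_congr rfl (fun i _ => ?_)
  rw [Fintype.card_equiv (Fintype.equivOfCardEq (h i)), ]

section CompatCount

variable {β : Type*} [Fintype β] [DecidableEq β] {p : ℕ} (B : Fin p → Finset β)

/-- compatibility of a bijection to `Fin n` with an ordered family of blocks. -/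
def IsCompat (σ : β ≃ Fin (Fintype.card β)) : Prop :=
  ∀ k l : Fin p, k < l → ∀ x ∈ B k, ∀ y ∈ B l, σ x < σ y

instance : DecidablePred (IsCompat B) := fun σ => by
  unfold IsCompat; infer_instance

/-- classifier on the source: block index, or `last p` for "no block". -/
noncomputable def cOf (x : β) : Fin (p + 1) :=
  if h : ∃ k, x ∈ B k then (Classical.choose h).castSucc else Fin.last p

variable (hdisj : ∀ k l, k ≠ l → Disjoint (B k) (B l))

include hdisj

lemma cOf_eq_castSucc_iff {x : β} {k : Fin p} :
    cOf B x = k.castSucc ↔ x ∈ B k := by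
  constructor
  · intro h
    rw [cOf] at h
    split_ifs at h with hex
    · have hspec := Classical.choose_spec hex
      have : Classical.choose hex = k := Fin.castSucc_injective _ h
      rwa [this] at hspec
    · exact absurd h.symm (Fin.castSucc_lt_last k).ne
  · intro hx
    rw [cOf, dif_pos ⟨k, hx⟩]
    congr 1
    have hspec := Classical.choose_spec (⟨k, hx⟩ : ∃ k, x ∈ B k)
    by_contra hne
    exact Finset.disjoint_left.1 (hdisj _ _ hne) hspec hx

lemma cOf_eq_last_iff {x : β} :
    cOf B x = Fin.last p ↔ ∀ k, x ∉ B k := by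
  constructor
  · intro h k hx
    rw [(cOf_eq_castSucc_iff B hdisj).2 hx] at h
    exact (Fin.castSucc_lt_last k).ne h
  · intro h
    rw [cOf, dif_neg]
    rintro ⟨k, hk⟩
    exact h k hk

lemma card_cOf_fiber_castSucc (k : Fin p) :
    Fintype.card {x : β // cOf B x = k.castSucc} = (B k).card := by
  rw [← Fintype.card_coe (B k)]
  exact Fintype.card_congr (Equiv.subtypeEquivRight fun x => cOf_eq_castSucc_iff B hdisj)

lemma card_cOf_fibers_sum :
    (∑ k : Fin p, (B k).card) + Fintype.card {x : β // cOf B x = Fin.last p}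
      = Fintype.card β := by
  have h1 : Fintype.card β = ∑ i : Fin (p + 1), Fintype.card {x : β // cOf B x = i} := by
    rw [← Fintype.card_sigma]
    exact Fintype.card_congr (Equiv.sigmaFiberEquiv (cOf B)).symm
  rw [h1, Fin.sum_univ_castSucc]
  congr 1
  exact Finset.sum_congr rfl fun k _ => (card_cOf_fiber_castSucc B hdisj k).symm


omit hdisj

/-- classifier on the target `Fin n`: chunk index within `P`, or `last p` outside `P`. -/
noncomputable def dOf (P : Finset (Fin (Fintype.card β))) (hP : P.card = ∑ k, (B k).card)
    (y : Fin (Fintype.card β)) : Fin (p + 1) :=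
  if h : y ∈ P then
    (blk (fun k => (B k).card) ((P.orderIsoOfFin hP).symm ⟨y, h⟩)).castSucc
  else Fin.last p

variable (P : Finset (Fin (Fintype.card β))) (hP : P.card = ∑ k, (B k).card)

lemma dOf_mem {y : Fin (Fintype.card β)} (h : y ∈ P) :
    dOf B P hP y = (blk (fun k => (B k).card) ((P.orderIsoOfFin hP).symm ⟨y, h⟩)).castSucc :=
  dif_pos h

lemma dOf_not_mem {y : Fin (Fintype.card β)} (h : y ∉ P) : dOf B P hP y = Fin.last p :=
  dif_neg h

lemma mem_of_dOf_castSucc {y : Fin (Fintype.card β)} {k : Fin p}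
    (h : dOf B P hP y = k.castSucc) : y ∈ P := by
  by_contra hy
  rw [dOf_not_mem B P hP hy] at h
  exact (Fin.castSucc_lt_last k).ne h.symm

lemma card_dOf_fiber_castSucc (k : Fin p) :
    Fintype.card {y : Fin (Fintype.card β) // dOf B P hP y = k.castSucc}
      = (B k).card := by
  rw [← card_blk_fiber (fun k => (B k).card) k]
  apply Fintype.card_congr
  refine ⟨fun y => ⟨(P.orderIsoOfFin hP).symm ⟨y.1, mem_of_dOf_castSucc B P hP y.2⟩, ?_⟩,
    fun i => ⟨((P.orderIsoOfFin hP) i.1).1, ?_⟩, ?_, ?_⟩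
  · have := y.2
    rw [dOf_mem B P hP (mem_of_dOf_castSucc B P hP y.2)] at this
    exact Fin.castSucc_injective _ this
  · rw [dOf_mem B P hP ((P.orderIsoOfFin hP) i.1).2]
    have h2 : (⟨((P.orderIsoOfFin hP) i.1).1, ((P.orderIsoOfFin hP) i.1).2⟩ :
        {x // x ∈ P}) = (P.orderIsoOfFin hP) i.1 := rfl
    rw [h2, OrderIso.symm_apply_apply, i.2]
  · intro y
    apply Subtype.ext
    simp only
    have h2 : (⟨((P.orderIsoOfFin hP) _).1, ((P.orderIsoOfFin hP) _).2⟩ :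
        {x // x ∈ P}) = (P.orderIsoOfFin hP) ((P.orderIsoOfFin hP).symm
          ⟨y.1, mem_of_dOf_castSucc B P hP y.2⟩) := rfl
    have h3 := congrArg Subtype.val
      (OrderIso.apply_symm_apply (P.orderIsoOfFin hP) ⟨y.1, mem_of_dOf_castSucc B P hP y.2⟩)
    exact h3
  · intro i
    apply Subtype.ext
    simp only
    have h2 : (⟨((P.orderIsoOfFin hP) i.1).1, ((P.orderIsoOfFin hP) i.1).2⟩ :
        {x // x ∈ P}) = (P.orderIsoOfFin hP) i.1 := rfl
    rw [h2, OrderIso.symm_apply_apply]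

lemma card_dOf_fiber_last :
    Fintype.card {y : Fin (Fintype.card β) // dOf B P hP y = Fin.last p}
      = Fintype.card β - ∑ k, (B k).card := by
  have h1 : ∀ y : Fin (Fintype.card β), dOf B P hP y = Fin.last p ↔ y ∉ P := by
    intro y
    constructor
    · intro h hy
      rw [dOf_mem B P hP hy] at h
      exact (Fin.castSucc_lt_last _).ne h
    · exact dOf_not_mem B P hP
  rw [Fintype.card_congr (Equiv.subtypeEquivRight h1),
    Fintype.card_subtype_compl (· ∈ P), Fintype.card_coe, hP, Fintype.card_fin]


include hdisj in
lemma compat_iff_classifier (σ : β ≃ Fin (Fintype.card β)) :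
    (∀ x, dOf B P hP (σ x) = cOf B x) ↔
      (IsCompat B σ ∧ (univ.biUnion B).image σ = P) := by
  have hUcard : (univ.biUnion B).card = ∑ k, (B k).card :=
    card_biUnion (fun k _ l _ hkl => hdisj k l hkl)
  constructor
  · intro hσ
    constructor
    · intro k l hkl x hx y hy
      have h1 : dOf B P hP (σ x) = k.castSucc := by
        rw [hσ x]; exact (cOf_eq_castSucc_iff B hdisj).2 hx
      have h2 : dOf B P hP (σ y) = l.castSucc := by
        rw [hσ y]; exact (cOf_eq_castSucc_iff B hdisj).2 hy
      have hmx : σ x ∈ P := mem_of_dOf_castSucc B P hP h1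
      have hmy : σ y ∈ P := mem_of_dOf_castSucc B P hP h2
      rw [dOf_mem B P hP hmx] at h1
      rw [dOf_mem B P hP hmy] at h2
      have hbx := Fin.castSucc_injective _ h1
      have hby := Fin.castSucc_injective _ h2
      have hlt := blk_lt_of_lt (fun k => (B k).card) hbx hby hkl
      have : (⟨σ x, hmx⟩ : {z // z ∈ P}) < ⟨σ y, hmy⟩ := by
        rwa [← OrderIso.lt_iff_lt (P.orderIsoOfFin hP).symm]
      exact this
    · apply Finset.eq_of_subset_of_card_le
      · intro z hz
        obtain ⟨x, hxU, rfl⟩ := Finset.mem_image.1 hz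
        obtain ⟨k, _, hxk⟩ := Finset.mem_biUnion.1 hxU
        apply mem_of_dOf_castSucc B P hP (k := k)
        rw [hσ x]; exact (cOf_eq_castSucc_iff B hdisj).2 hxk
      · rw [Finset.card_image_of_injective _ σ.injective, hUcard, hP]
  · rintro ⟨hcompat, himg⟩ x
    by_cases hx : ∃ k, x ∈ B k
    · obtain ⟨k, hxk⟩ := hx
      have hxU : x ∈ univ.biUnion B := Finset.mem_biUnion.2 ⟨k, mem_univ k, hxk⟩
      have hmem : σ x ∈ P := himg ▸ Finset.mem_image_of_mem σ hxU
      rw [dOf_mem B P hP hmem, (cOf_eq_castSucc_iff B hdisj).2 hxk]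
      congr 1
      set a : Fin p → ℕ := fun k => (B k).card with ha
      set i := (P.orderIsoOfFin hP).symm ⟨σ x, hmem⟩ with hi
      rw [blk_eq_iff]
      have hρi : (P.orderIsoOfFin hP) i = ⟨σ x, hmem⟩ := OrderIso.apply_symm_apply _ _
      constructor
      · -- lower bound
        set L := (univ.filter (fun l : Fin p => (l : ℕ) < (k : ℕ))).biUnion B with hL
        have hLcard : L.card = csum a (k : ℕ) :=
          card_biUnion (fun k _ l _ hkl => hdisj k l hkl)
        have hle : L.card ≤ (Finset.Iio i).card := by
          apply Finset.card_le_card_of_injOn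
            (fun w => if h : σ w ∈ P then (P.orderIsoOfFin hP).symm ⟨σ w, h⟩ else i)
          · intro w hw
            obtain ⟨l, hlmem, hwl⟩ := Finset.mem_biUnion.1 hw
            have hlk : (l : ℕ) < (k : ℕ) := (Finset.mem_filter.1 hlmem).2
            have hwU : w ∈ univ.biUnion B := Finset.mem_biUnion.2 ⟨l, mem_univ l, hwl⟩
            have hwP : σ w ∈ P := himg ▸ Finset.mem_image_of_mem σ hwU
            simp only [Finset.mem_coe]
            rw [dif_pos hwP, Finset.mem_Iio]
            rw [← OrderIso.lt_iff_lt (P.orderIsoOfFin hP), hρi, OrderIso.apply_symm_apply]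
            exact hcompat l k hlk w hwl x hxk
          · intro w hw w' hw' heq
            simp only at heq
            obtain ⟨l, hlmem, hwl⟩ := Finset.mem_biUnion.1 hw
            obtain ⟨l', hlmem', hwl'⟩ := Finset.mem_biUnion.1 hw'
            have hwP : σ w ∈ P := himg ▸ Finset.mem_image_of_mem σ
              (Finset.mem_biUnion.2 ⟨l, mem_univ l, hwl⟩)
            have hwP' : σ w' ∈ P := himg ▸ Finset.mem_image_of_mem σ
              (Finset.mem_biUnion.2 ⟨l', mem_univ l', hwl'⟩)
            rw [dif_pos hwP, dif_pos hwP'] at heq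
            have := (P.orderIsoOfFin hP).symm.injective heq
            exact σ.injective (Subtype.ext_iff.1 this)
        rw [hLcard, Fin.card_Iio] at hle
        exact hle
      · -- upper bound
        set M := (univ.filter (fun l : Fin p => (l : ℕ) < (k : ℕ) + 1)).biUnion B with hM
        have hMcard : M.card = csum a ((k : ℕ) + 1) :=
          card_biUnion (fun k _ l _ hkl => hdisj k l hkl)
        have hle : (Finset.Iic i).card ≤ M.card := by
          apply Finset.card_le_card_of_injOn (fun j => σ.symm ((P.orderIsoOfFin hP) j))
          · intro j hj
            have hjP := ((P.orderIsoOfFin hP) j).2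
            have : ((P.orderIsoOfFin hP) j : Fin (Fintype.card β)) ∈ Finset.image σ (univ.biUnion B) := by
              rw [himg]; exact hjP
            obtain ⟨w, hwU, hw⟩ := Finset.mem_image.1 this
            obtain ⟨l, _, hwl⟩ := Finset.mem_biUnion.1 hwU
            have hwx : σ.symm ((P.orderIsoOfFin hP) j) = w := by rw [← hw, Equiv.symm_apply_apply]
            simp only [Finset.mem_coe]
            rw [hwx]
            apply Finset.mem_biUnion.2
            refine ⟨l, Finset.mem_filter.2 ⟨mem_univ l, ?_⟩, hwl⟩
            by_contra hlk
            have hkl : k < l := by omega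
            have h5 := hcompat k l hkl x hxk w hwl
            rw [hw] at h5
            have h6 : ((P.orderIsoOfFin hP) j : Fin (Fintype.card β))
                ≤ ((P.orderIsoOfFin hP) i : Fin (Fintype.card β)) := by
              have := (P.orderIsoOfFin hP).le_iff_le.2 (Finset.mem_Iic.1 hj)
              exact this
            rw [hρi] at h6
            exact absurd (lt_of_lt_of_le h5 h6) (lt_irrefl _)
          · intro j _ j' _ heq
            exact (P.orderIsoOfFin hP).injective (Subtype.ext (σ.symm.injective heq))
        rw [hMcard, Fin.card_Iic] at hle
        exact hle
    · have hcx : cOf B x = Fin.last p := (cOf_eq_last_iff B hdisj).2 (fun k hk => hx ⟨k, hk⟩)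
      rw [hcx]
      apply dOf_not_mem
      intro hmem
      rw [← himg] at hmem
      obtain ⟨w, hwU, hw⟩ := Finset.mem_image.1 hmem
      obtain ⟨l, _, hwl⟩ := Finset.mem_biUnion.1 hwU
      exact hx ⟨l, σ.injective hw ▸ hwl⟩


include hdisj in
theorem card_compat :
    Fintype.card {σ : β ≃ Fin (Fintype.card β) // IsCompat B σ} * (∑ k, (B k).card).factorial
      = (Fintype.card β).factorial * ∏ k, ((B k).card).factorial := by
  classical
  set n := Fintype.card β with hn
  set s := ∑ k, (B k).card with hs
  have hUcard : (univ.biUnion B).card = s :=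
    card_biUnion (fun k _ l _ hkl => hdisj k l hkl)
  have hsum := card_cOf_fibers_sum B hdisj
  have hsn : s ≤ n := le_of_add_le_left (le_of_eq hsum)
  have htval : Fintype.card {x : β // cOf B x = Fin.last p} = n - s := by omega
  -- fiber decomposition over the image set P
  set f : {σ : β ≃ Fin n // IsCompat B σ} → {P // P ∈ powersetCard s (univ : Finset (Fin n))} :=
    fun σ => ⟨(univ.biUnion B).image σ.1, by
      rw [mem_powersetCard]
      exact ⟨subset_univ _, by rw [Finset.card_image_of_injective _ σ.1.injective, hUcard]⟩⟩
    with hf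
  have h1 : Fintype.card {σ : β ≃ Fin n // IsCompat B σ}
      = ∑ P : {P // P ∈ powersetCard s (univ : Finset (Fin n))},
          Fintype.card {σf : {σ : β ≃ Fin n // IsCompat B σ} // f σf = P} := by
    rw [← Fintype.card_sigma]
    exact Fintype.card_congr (Equiv.sigmaFiberEquiv f).symm
  have h2 : ∀ P : {P // P ∈ powersetCard s (univ : Finset (Fin n))},
      Fintype.card {σf : {σ : β ≃ Fin n // IsCompat B σ} // f σf = P}
        = (∏ k, ((B k).card).factorial) * (n - s).factorial := by
    rintro ⟨P, hPm⟩
    have hP : P.card = s := (mem_powersetCard.1 hPm).2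
    have e1 : {σf : {σ : β ≃ Fin n // IsCompat B σ} // f σf = ⟨P, hPm⟩}
        ≃ {σ : β ≃ Fin n // IsCompat B σ ∧ (univ.biUnion B).image σ = P} := by
      refine Equiv.trans (Equiv.subtypeEquivRight
        (q := fun σf : {σ : β ≃ Fin n // IsCompat B σ} =>
          (fun σ : β ≃ Fin n => (univ.biUnion B).image σ = P) σf.1)
        (fun σf => ?_))
        (Equiv.subtypeSubtypeEquivSubtypeInter (IsCompat B)
          (fun σ : β ≃ Fin n => (univ.biUnion B).image σ = P))
      rw [hf, Subtype.ext_iff]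
    have e2 : {σ : β ≃ Fin n // IsCompat B σ ∧ (univ.biUnion B).image σ = P}
        ≃ {σ : β ≃ Fin n // ∀ x, dOf B P hP (σ x) = cOf B x} :=
      Equiv.subtypeEquivRight (fun σ => (compat_iff_classifier B hdisj P hP σ).symm)
    rw [Fintype.card_congr (e1.trans e2)]
    rw [card_classifier (cOf B) (dOf B P hP) ?_]
    · rw [Fin.prod_univ_castSucc]
      congr 1
      · exact Finset.prod_congr rfl fun k _ => by rw [card_cOf_fiber_castSucc B hdisj k]
      · rw [htval]
    · intro i
      induction i using Fin.lastCases with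
      | cast k => rw [card_cOf_fiber_castSucc B hdisj k, card_dOf_fiber_castSucc B P hP k]
      | last => rw [htval, card_dOf_fiber_last B P hP]
  rw [h1, Finset.sum_congr rfl (fun P _ => h2 P), Finset.sum_const, smul_eq_mul,
    Finset.card_univ, Fintype.card_coe, Finset.card_powersetCard, Finset.card_univ,
    Fintype.card_fin]
  calc n.choose s * ((∏ k, ((B k).card).factorial) * (n - s).factorial) * s.factorial
      = (n.choose s * s.factorial * (n - s).factorial) * ∏ k, ((B k).card).factorial := by ring
    _ = n.factorial * ∏ k, ((B k).card).factorial := by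
        rw [Nat.choose_mul_factorial_mul_factorial hsn]

end CompatCount




/-- **Main LYM inequality.** Fix `p ≥ 2` and `r ≥ 1`. Let `(A_{j1}, …, A_{jp})`,
`j = 1, …, m`, be distinct weak set compositions into `p` parts such that for all `k ∈ [p]`
and all `I ⊆ [m]` with `|I| = r+1` there are distinct `i, j ∈ I` with `A_{ik} = A_{jk}` or
`A_{ik} ∩ ⋃_{l≠k} A_{jl} ≠ ∅ ≠ A_{jk} ∩ ⋃_{l≠k} A_{il}`. Then
`∑_j 1/((|A_{j1}|+⋯+|A_{jp}|)!/(|A_{j1}|! ⋯ |A_{jp}|!)) ≤ r^p`. -/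
theorem grandmother_lym {α : Type*} [DecidableEq α] (p r : ℕ) (hp : 2 ≤ p) (hr : 1 ≤ r)
    (m : ℕ) (A : Fin m → Fin p → Finset α)
    (hinj : Function.Injective A)
    (hdisj : ∀ j, ∀ k l : Fin p, k ≠ l → Disjoint (A j k) (A j l))
    (hcond : ∀ k : Fin p, ∀ I : Finset (Fin m), I.card = r + 1 →
      ∃ i ∈ I, ∃ j ∈ I, i ≠ j ∧ (A i k = A j k ∨
        ((A i k ∩ (Finset.univ.erase k).biUnion (A j)).Nonempty ∧
         (A j k ∩ (Finset.univ.erase k).biUnion (A i)).Nonempty))) :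
    ∑ j, (1 : ℝ) /
        (((∑ k, (A j k).card).factorial : ℝ) / ∏ k, ((A j k).card.factorial : ℝ))
      ≤ (r : ℝ) ^ p := by
  classical
  set X : Finset α := univ.biUnion (fun j : Fin m => univ.biUnion (A j)) with hX
  have memX : ∀ {j k x}, x ∈ A j k → x ∈ X := by
    intro j k x hx
    exact mem_biUnion.2 ⟨j, mem_univ j, mem_biUnion.2 ⟨k, mem_univ k, hx⟩⟩
  set β := {x // x ∈ X} with hβ
  set n := Fintype.card β with hn
  set B : Fin m → Fin p → Finset β :=
    fun j k => univ.filter (fun x : β => x.1 ∈ A j k) with hB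
  have hBmem : ∀ {j k} {x : β}, x ∈ B j k ↔ x.1 ∈ A j k := by
    intro j k x; simp [hB]
  have hBcard : ∀ j k, (B j k).card = (A j k).card := by
    intro j k
    rw [hB]
    rw [← Fintype.card_subtype (fun x : β => x.1 ∈ A j k)]
    rw [Fintype.card_congr (Equiv.subtypeSubtypeEquivSubtype
      (p := fun x => x ∈ X) (q := fun x => x ∈ A j k) (fun hx => memX hx))]
    exact Fintype.card_coe _
  have hBdisj : ∀ j, ∀ k l, k ≠ l → Disjoint (B j k) (B j l) := by
    intro j k l hkl
    rw [Finset.disjoint_left]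
    intro x hx hx'
    exact Finset.disjoint_left.1 (hdisj j k l hkl) (hBmem.1 hx) (hBmem.1 hx')
  -- the per-ordering bound
  have hbound : ∀ σ : β ≃ Fin n,
      (univ.filter (fun j => IsCompat (B j) σ)).card ≤ r ^ p := by
    intro σ
    set S := univ.filter (fun j => IsCompat (B j) σ) with hS
    have key : ∀ k : ℕ, ∀ hk : k ≤ p,
        (S.image (fun j => fun l : Fin k => A j (Fin.castLE hk l))).card ≤ r ^ k := by
      intro k
      induction k with
      | zero =>
        intro hk
        rw [pow_zero]
        apply Finset.card_le_one.2
        intro g hg g' hg'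
        funext l
        exact l.elim0
      | succ k ih =>
        intro hk
        have hk' : k ≤ p := Nat.le_of_succ_le hk
        have hkp : k < p := hk
        set kk : Fin p := ⟨k, hkp⟩ with hkk
        set T := S.image (fun j => fun l : Fin (k+1) => A j (Fin.castLE hk l)) with hT
        have hres : T.card ≤ r * (T.image (fun g => fun l : Fin k => g l.castSucc)).card := by
          apply Finset.card_le_mul_card_image
          intro b hb
          by_contra hcon
          have hge : r + 1 ≤ (T.filter (fun g => (fun l : Fin k => g l.castSucc) = b)).card :=
            not_le.1 hcon
          obtain ⟨W, hWsub, hWcard⟩ := Finset.exists_subset_card_eq hge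
          -- choose a preimage index for each element of W
          have hWT : ∀ g ∈ W, ∃ j, j ∈ S ∧ (fun l : Fin (k+1) => A j (Fin.castLE hk l)) = g := by
            intro g hg
            have := hWsub hg
            rw [Finset.mem_filter] at this
            exact Finset.mem_image.1 this.1
          choose ch0 hch0S hch0pre using hWT
          set ch : {g // g ∈ W} → Fin m := fun g => ch0 g.1 g.2 with hchdef
          have hchS : ∀ g : {g // g ∈ W}, ch g ∈ S := fun g => hch0S g.1 g.2
          have hchpre : ∀ g : {g // g ∈ W},
              (fun l : Fin (k+1) => A (ch g) (Fin.castLE hk l)) = g.1 :=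
            fun g => hch0pre g.1 g.2
          have hchlast : ∀ g : {g // g ∈ W}, A (ch g) kk = g.1 (Fin.last k) := by
            intro g
            have := congrFun (hchpre g) (Fin.last k)
            have h2 : Fin.castLE hk (Fin.last k) = kk := Fin.ext (by simp [hkk])
            rw [h2] at this
            exact this
          have hchpref : ∀ (g : {g // g ∈ W}) (l : Fin p) (hl : (l : ℕ) < k),
              A (ch g) l = b ⟨l, hl⟩ := by
            intro g l hl
            have h1 := congrFun (hchpre g) ((⟨l, hl⟩ : Fin k).castSucc)
            have h2 : Fin.castLE hk ((⟨(l : ℕ), hl⟩ : Fin k).castSucc) = l := by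
              apply Fin.ext; simp
            rw [h2] at h1
            have h3 := hWsub g.2
            rw [Finset.mem_filter] at h3
            have h4 := congrFun h3.2 ⟨l, hl⟩
            rw [← h4]
            exact h1
          have hchinj : Function.Injective ch := by
            intro g g' h
            apply Subtype.ext
            rw [← hchpre g, ← hchpre g', h]
          set I : Finset (Fin m) := Finset.image ch univ with hI
          have hIcard : I.card = r + 1 := by
            rw [hI, Finset.card_image_of_injective _ hchinj, Finset.card_univ,
              Fintype.card_coe, hWcard]
          obtain ⟨i, hiI, j, hjI, hij, hcase⟩ := hcond kk I hIcard
          obtain ⟨g₁, _, hg₁⟩ := Finset.mem_image.1 hiI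
          obtain ⟨g₂, _, hg₂⟩ := Finset.mem_image.1 hjI
          have hgne : g₁ ≠ g₂ := by rintro rfl; exact hij (hg₁ ▸ hg₂ ▸ rfl)
          have hvalne : A i kk ≠ A j kk := by
            rw [← hg₁, ← hg₂, hchlast g₁, hchlast g₂]
            intro h
            apply hgne
            apply Subtype.ext
            -- g₁.1 = g₂.1 : they agree on castSucc part and on last
            funext l
            induction l using Fin.lastCases with
            | last => exact h
            | cast l' =>
              have h3 := hWsub g₁.2; have h4 := hWsub g₂.2
              rw [Finset.mem_filter] at h3 h4
              rw [congrFun h3.2 l', congrFun h4.2 l']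
          rcases hcase with heq | ⟨⟨x, hx⟩, ⟨y, hy⟩⟩
          · exact hvalne heq
          · rw [Finset.mem_inter] at hx hy
            obtain ⟨l, hlmem, hxl⟩ := Finset.mem_biUnion.1 hx.2
            obtain ⟨l', hlmem', hyl'⟩ := Finset.mem_biUnion.1 hy.2
            have hlne : l ≠ kk := (Finset.mem_erase.1 hlmem).1
            have hlne' : l' ≠ kk := (Finset.mem_erase.1 hlmem').1
            -- prefix agreement between i and j
            have hpref : ∀ (l'' : Fin p), (l'' : ℕ) < k → A i l'' = A j l'' := by
              intro l'' hl''
              rw [← hg₁, ← hg₂, hchpref g₁ l'' hl'', hchpref g₂ l'' hl'']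
            have hlgt : k < (l : ℕ) := by
              rcases Nat.lt_trichotomy (l : ℕ) k with h | h | h
              · exfalso
                have : x ∈ A i l := (hpref l h) ▸ hxl
                exact Finset.disjoint_left.1 (hdisj i kk l (Ne.symm hlne)) hx.1 this
              · exact absurd (Fin.ext h : l = kk) hlne
              · exact h
            have hlgt' : k < (l' : ℕ) := by
              rcases Nat.lt_trichotomy (l' : ℕ) k with h | h | h
              · exfalso
                have : y ∈ A j l' := (hpref l' h) ▸ hyl'
                exact Finset.disjoint_left.1 (hdisj j kk l' (Ne.symm hlne')) hy.1 this
              · exact absurd (Fin.ext h : l' = kk) hlne'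
              · exact h
            -- now use compatibility of i and j with σ
            have hiS : IsCompat (B i) σ := by
              have := hchS g₁; rw [hg₁, hS, Finset.mem_filter] at this; exact this.2
            have hjS : IsCompat (B j) σ := by
              have := hchS g₂; rw [hg₂, hS, Finset.mem_filter] at this; exact this.2
            set x' : β := ⟨x, memX hx.1⟩ with hx'
            set y' : β := ⟨y, memX hy.1⟩ with hy'
            have h5 : σ x' < σ y' :=
              hiS kk l' hlgt' x' (hBmem.2 hx.1) y' (hBmem.2 hyl')
            have h6 : σ y' < σ x' :=
              hjS kk l hlgt y' (hBmem.2 hy.1) x' (hBmem.2 hxl)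
            exact absurd h5 (lt_asymm h6)
        have himg : T.image (fun g => fun l : Fin k => g l.castSucc)
            = S.image (fun j => fun l : Fin k => A j (Fin.castLE hk' l)) := by
          rw [hT, Finset.image_image]
          apply Finset.image_congr
          intro j _
          funext l
          rfl
        calc T.card ≤ r * (T.image (fun g => fun l : Fin k => g l.castSucc)).card := hres
          _ = r * (S.image (fun j => fun l : Fin k => A j (Fin.castLE hk' l))).card := by
              rw [himg]
          _ ≤ r * r ^ k := Nat.mul_le_mul_left r (ih hk')
          _ = r ^ (k + 1) := by ring
    have hScard : S.card = (S.image (fun j => fun l : Fin p => A j (Fin.castLE le_rfl l))).card := by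
      rw [Finset.card_image_of_injOn ?_]
      intro j _ j' _ h
      apply hinj
      funext l
      have := congrFun h l
      simpa using this
    rw [hScard]
    exact key p le_rfl
  -- counting per composition
  set N : Fin m → ℕ := fun j => Fintype.card {σ : β ≃ Fin n // IsCompat (B j) σ} with hN
  have hNj : ∀ j, N j * (∑ k, (A j k).card).factorial
      = n.factorial * ∏ k, ((A j k).card).factorial := by
    intro j
    have := card_compat (B j) (hBdisj j)
    simp only [hBcard] at this
    exact this
  -- double counting
  have hdc : ∑ j, N j = ∑ σ : β ≃ Fin n, (univ.filter (fun j => IsCompat (B j) σ)).card := by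
    have h1 : ∀ j, N j = ∑ σ : β ≃ Fin n, if IsCompat (B j) σ then 1 else 0 := by
      intro j
      show Fintype.card {σ : β ≃ Fin n // IsCompat (B j) σ} = _
      rw [Fintype.card_subtype]
      rw [Finset.card_filter]
    rw [Finset.sum_congr rfl (fun j _ => h1 j)]
    rw [Finset.sum_comm]
    apply Finset.sum_congr rfl
    intro σ _
    rw [Finset.card_filter]
  have hcardEquiv : Fintype.card (β ≃ Fin n) = n.factorial := by
    rw [Fintype.card_equiv (Fintype.equivFin β)]
  have htot : ∑ j, N j ≤ n.factorial * r ^ p := by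
    rw [hdc]
    calc ∑ σ : β ≃ Fin n, (univ.filter (fun j => IsCompat (B j) σ)).card
        ≤ ∑ _σ : β ≃ Fin n, r ^ p := Finset.sum_le_sum (fun σ _ => hbound σ)
      _ = Fintype.card (β ≃ Fin n) * r ^ p := by
          rw [Finset.sum_const, smul_eq_mul, Finset.card_univ]
      _ = n.factorial * r ^ p := by rw [hcardEquiv]
  -- assemble over ℝ
  have hterm : ∀ j, (1 : ℝ) /
      (((∑ k, (A j k).card).factorial : ℝ) / ∏ k, ((A j k).card.factorial : ℝ))
        = (N j : ℝ) / (n.factorial : ℝ) := by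
    intro j
    rw [one_div_div]
    rw [div_eq_div_iff]
    · have := hNj j
      have hcast := congrArg (Nat.cast : ℕ → ℝ) this
      push_cast at hcast ⊢
      linarith [hcast]
    · exact_mod_cast Nat.factorial_pos _ |>.ne'
    · exact_mod_cast Nat.factorial_pos n |>.ne'
  calc ∑ j, (1 : ℝ) /
      (((∑ k, (A j k).card).factorial : ℝ) / ∏ k, ((A j k).card.factorial : ℝ))
      = ∑ j, (N j : ℝ) / (n.factorial : ℝ) := Finset.sum_congr rfl (fun j _ => hterm j)
    _ = (∑ j, (N j : ℝ)) / (n.factorial : ℝ) := by rw [Finset.sum_div]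
    _ ≤ ((n.factorial * r ^ p : ℕ) : ℝ) / (n.factorial : ℝ) := by
        have hpos : (0 : ℝ) < (n.factorial : ℝ) := by exact_mod_cast Nat.factorial_pos n
        have hle : (∑ j, (N j : ℝ)) ≤ ((n.factorial * r ^ p : ℕ) : ℝ) := by
          exact_mod_cast htot
        exact (div_le_div_iff_of_pos_right hpos).2 hle

    _ = (r : ℝ) ^ p := by
        have hne : (n.factorial : ℝ) ≠ 0 := by
          exact_mod_cast (Nat.factorial_pos n).ne'
        push_cast
        field_simp
end

section
/- Fix integers p ≥ 2 and r ≥ 1, and let S be a finite set with n elements. Suppose (A_{j1}, ..., A_{jp}) for j = 1, ..., m are m distinct weak partial compositions of S into p parts such that for every k ∈ {1,...,p} the set of distinct values {A_{jk} : 1 ≤ j ≤ m} is r-chain-free. Then m is at most the sum of the r^p largest (p+1)-multinomial coefficients for n (the list being extended by zeros if r^p exceeds the number of such coefficients). -/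
set_option linter.unusedSectionVars false

namespace RFam

section defs

variable {α : Type*} [DecidableEq α] {p : ℕ}

/-- partial sums of block sizes -/
def cuts (B : Fin p → Finset α) (t : ℕ) : ℕ :=
  ∑ k ∈ Finset.univ.filter (fun k : Fin p => (k : ℕ) < t), (B k).card

/-- classifier of points into blocks (last = leftover) -/
noncomputable def fcl (B : Fin p → Finset α) (x : α) : Fin (p + 1) :=
  if h : ∃ k, x ∈ B k then (h.choose).castSucc else Fin.last p

/-- classifier of positions into intervals -/
def gcl (B : Fin p → Finset α) {n : ℕ} (y : Fin n) : Fin (p + 1) :=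
  if h : (Finset.univ.filter (fun k : Fin p => (y : ℕ) < cuts B ((k : ℕ) + 1))).Nonempty
  then ((Finset.univ.filter (fun k : Fin p => (y : ℕ) < cuts B ((k : ℕ) + 1))).min' h).castSucc
  else Fin.last p

/-- a permutation `σ` is compatible with composition `B` -/
def Compat (B : Fin p → Finset α) {n : ℕ} (σ : α ≃ Fin n) : Prop :=
  ∀ x, gcl B (σ x) = fcl B x

noncomputable instance {B : Fin p → Finset α} {n : ℕ} :
    DecidablePred (fun σ : α ≃ Fin n => Compat B σ) := fun _ => Classical.dec _

lemma cuts_mono (B : Fin p → Finset α) {s t : ℕ} (h : s ≤ t) : cuts B s ≤ cuts B t := by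
  apply Finset.sum_le_sum_of_subset
  intro k hk
  simp only [Finset.mem_filter, Finset.mem_univ, true_and] at hk ⊢
  omega

lemma cuts_succ (B : Fin p → Finset α) (k : Fin p) :
    cuts B ((k : ℕ) + 1) = cuts B (k : ℕ) + (B k).card := by
  unfold cuts
  have : Finset.univ.filter (fun i : Fin p => (i : ℕ) < (k : ℕ) + 1)
      = insert k (Finset.univ.filter (fun i : Fin p => (i : ℕ) < (k : ℕ))) := by
    ext i
    simp only [Finset.mem_filter, Finset.mem_univ, true_and, Finset.mem_insert]
    constructor
    · intro hi
      rcases Nat.lt_succ_iff_lt_or_eq.mp hi with h | h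
      · exact Or.inr h
      · exact Or.inl (Fin.ext h)
    · rintro (rfl | hi)
      · omega
      · omega
  rw [this, Finset.sum_insert (by simp)]
  ring

lemma cuts_p (B : Fin p → Finset α) : cuts B p = ∑ k, (B k).card := by
  unfold cuts
  congr 1
  ext i
  simp [i.isLt]

lemma cuts_congr {B B' : Fin p → Finset α} (h : ∀ k, (B k).card = (B' k).card) (t : ℕ) :
    cuts B t = cuts B' t :=
  Finset.sum_congr rfl fun k _ => h k

lemma fcl_eq_castSucc_iff {B : Fin p → Finset α}
    (hd : ∀ k l, k ≠ l → Disjoint (B k) (B l)) (k : Fin p) (x : α) :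
    fcl B x = Fin.castSucc k ↔ x ∈ B k := by
  unfold fcl
  constructor
  · intro h
    split_ifs at h with he
    · have := he.choose_spec
      rwa [Fin.castSucc_inj.mp h] at this
    · exact absurd h.symm (Fin.castSucc_lt_last k).ne
  · intro hx
    have he : ∃ k, x ∈ B k := ⟨k, hx⟩
    rw [dif_pos he, Fin.castSucc_inj]
    by_contra hne
    exact Finset.disjoint_left.mp (hd _ _ hne) he.choose_spec hx

lemma fcl_eq_last_iff (B : Fin p → Finset α) (x : α) :
    fcl B x = Fin.last p ↔ ∀ k, x ∉ B k := by
  unfold fcl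
  constructor
  · intro h k hx
    rw [dif_pos ⟨k, hx⟩] at h
    exact absurd h (Fin.castSucc_lt_last _).ne
  · intro h
    rw [dif_neg]
    push_neg
    exact h

lemma gcl_eq_castSucc_iff (B : Fin p → Finset α) {n : ℕ} (k : Fin p) (y : Fin n) :
    gcl B y = Fin.castSucc k ↔ cuts B (k : ℕ) ≤ (y : ℕ) ∧ (y : ℕ) < cuts B ((k : ℕ) + 1) := by
  unfold gcl
  constructor
  · intro h
    split_ifs at h with he
    · set S := Finset.univ.filter (fun k : Fin p => (y : ℕ) < cuts B ((k : ℕ) + 1)) with hS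
      have hk : S.min' he = k := Fin.castSucc_inj.mp h
      have hmem : k ∈ S := hk ▸ S.min'_mem he
      have h2 : (y : ℕ) < cuts B ((k : ℕ) + 1) := by
        simpa [hS] using hmem
      refine ⟨?_, h2⟩
      by_contra hlt
      push_neg at hlt
      rcases Nat.eq_zero_or_pos (k : ℕ) with h0 | h0
      · unfold cuts at hlt
        rw [h0] at hlt
        simp at hlt
      · have hk1 : ((k : ℕ) - 1) < p := by omega
        have : (⟨(k : ℕ) - 1, hk1⟩ : Fin p) ∈ S := by
          simp only [hS, Finset.mem_filter, Finset.mem_univ, true_and]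
          have : (k : ℕ) - 1 + 1 = (k : ℕ) := by omega
          rw [this]
          exact hlt
        have := Finset.min'_le S _ this
        rw [hk] at this
        have : (k : ℕ) ≤ (k : ℕ) - 1 := this
        omega
    · exact absurd h.symm (Fin.castSucc_lt_last k).ne
  · rintro ⟨h1, h2⟩
    have he : (Finset.univ.filter (fun k : Fin p => (y : ℕ) < cuts B ((k : ℕ) + 1))).Nonempty :=
      ⟨k, by simp [h2]⟩
    rw [dif_pos he, Fin.castSucc_inj]
    set S := Finset.univ.filter (fun k : Fin p => (y : ℕ) < cuts B ((k : ℕ) + 1)) with hS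
    have hkS : k ∈ S := by simp [hS, h2]
    have hle : S.min' he ≤ k := Finset.min'_le S k hkS
    rcases lt_or_eq_of_le hle with hlt | heq
    · exfalso
      have hmem : (y : ℕ) < cuts B ((S.min' he : ℕ) + 1) :=
        (Finset.mem_filter.mp (S.min'_mem he)).2
      have hmono : cuts B ((S.min' he : ℕ) + 1) ≤ cuts B (k : ℕ) := cuts_mono B (by
        have : (S.min' he : ℕ) < (k : ℕ) := hlt
        omega)
      omega
    · exact heq

lemma gcl_eq_last_iff (B : Fin p → Finset α) {n : ℕ} (y : Fin n) :
    gcl B y = Fin.last p ↔ cuts B p ≤ (y : ℕ) := by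
  unfold gcl
  split_ifs with he
  · simp only [(Fin.castSucc_lt_last _).ne, false_iff]
    intro hle
    obtain ⟨k, hk⟩ := he
    simp only [Finset.mem_filter, Finset.mem_univ, true_and] at hk
    have h1 : cuts B ((k : ℕ) + 1) ≤ cuts B p := cuts_mono B (by have := k.isLt; omega)
    omega
  · simp only [true_iff]
    by_contra hlt
    push_neg at hlt
    rcases Nat.eq_zero_or_pos p with rfl | hp
    · unfold cuts at hlt; simp at hlt
    · have hk1 : p - 1 < p := by omega
      apply he
      refine ⟨⟨p-1, hk1⟩, ?_⟩
      simp only [Finset.mem_filter, Finset.mem_univ, true_and]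
      have : (p - 1) + 1 = p := by omega
      rw [this]
      exact hlt

lemma compat_mem_iff {B : Fin p → Finset α} {n : ℕ} {σ : α ≃ Fin n}
    (hd : ∀ k l, k ≠ l → Disjoint (B k) (B l)) (hσ : Compat B σ) (k : Fin p) (x : α) :
    x ∈ B k ↔ cuts B (k : ℕ) ≤ (σ x : ℕ) ∧ (σ x : ℕ) < cuts B ((k : ℕ) + 1) := by
  rw [← fcl_eq_castSucc_iff hd k x, ← hσ x, gcl_eq_castSucc_iff]

lemma compat_eq_of_cards {B B' : Fin p → Finset α} {n : ℕ} {σ : α ≃ Fin n}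
    (hd : ∀ k l, k ≠ l → Disjoint (B k) (B l)) (hd' : ∀ k l, k ≠ l → Disjoint (B' k) (B' l))
    (hσ : Compat B σ) (hσ' : Compat B' σ) (hc : ∀ k, (B k).card = (B' k).card) : B = B' := by
  funext k
  ext x
  rw [compat_mem_iff hd hσ k x, compat_mem_iff hd' hσ' k x,
    cuts_congr hc, cuts_congr hc]

lemma compat_comparable {B B' : Fin p → Finset α} {n : ℕ} {σ : α ≃ Fin n}
    (hd : ∀ k l, k ≠ l → Disjoint (B k) (B l)) (hd' : ∀ k l, k ≠ l → Disjoint (B' k) (B' l))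
    (hσ : Compat B σ) (hσ' : Compat B' σ) (k : Fin p)
    (hpre : ∀ i, i < k → B i = B' i) : B k ⊆ B' k ∨ B' k ⊆ B k := by
  have hcuts : cuts B (k : ℕ) = cuts B' (k : ℕ) := by
    unfold cuts
    apply Finset.sum_congr rfl
    intro i hi
    simp only [Finset.mem_filter, Finset.mem_univ, true_and] at hi
    rw [hpre i (by exact hi)]
  rcases le_total (cuts B ((k : ℕ) + 1)) (cuts B' ((k : ℕ) + 1)) with h | h
  · left
    intro x hx
    rw [compat_mem_iff hd hσ k x] at hx
    rw [compat_mem_iff hd' hσ' k x]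
    omega
  · right
    intro x hx
    rw [compat_mem_iff hd' hσ' k x] at hx
    rw [compat_mem_iff hd hσ k x]
    omega

end defs

/-- glue injection count -/
lemma glue_card {β γ ι : Type*} [Fintype β] [Fintype γ] [DecidableEq β] [DecidableEq γ]
    [Fintype ι] [DecidableEq ι] (f : β → ι) (g : γ → ι)
    (h : ∀ i, Fintype.card {x // f x = i} = Fintype.card {y // g y = i}) :
    ∏ i, (Fintype.card {x // f x = i}).factorial
      ≤ Fintype.card {σ : β ≃ γ // ∀ x, g (σ x) = f x} := by
  classical
  have key : ∀ e : ∀ i, {x // f x = i} ≃ {y // g y = i},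
      ∀ x : β, (((Equiv.sigmaFiberEquiv f).symm.trans
        ((Equiv.sigmaCongrRight e).trans (Equiv.sigmaFiberEquiv g))) x : γ)
        = (e (f x) ⟨x, rfl⟩ : γ) := by
    intro e x
    simp [Equiv.sigmaFiberEquiv, Equiv.sigmaCongrRight]
  let Φ : (∀ i, {x // f x = i} ≃ {y // g y = i}) → {σ : β ≃ γ // ∀ x, g (σ x) = f x} :=
    fun e => ⟨(Equiv.sigmaFiberEquiv f).symm.trans
        ((Equiv.sigmaCongrRight e).trans (Equiv.sigmaFiberEquiv g)), by
      intro x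
      rw [key e x]
      exact (e (f x) ⟨x, rfl⟩).2⟩
  have hΦ : Function.Injective Φ := by
    intro e e' hee
    funext i
    apply Equiv.ext
    rintro ⟨x, rfl⟩
    have h1 : ∀ x : β, ((Φ e : β ≃ γ) x) = ((Φ e' : β ≃ γ) x) := by
      intro x; rw [hee]
    have := h1 x
    rw [show ((Φ e : β ≃ γ) x) = (e (f x) ⟨x, rfl⟩ : γ) from key e x,
      show ((Φ e' : β ≃ γ) x) = (e' (f x) ⟨x, rfl⟩ : γ) from key e' x] at this
    exact Subtype.ext this
  calc ∏ i, (Fintype.card {x // f x = i}).factorial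
      = Fintype.card (∀ i, {x // f x = i} ≃ {y // g y = i}) := by
        rw [Fintype.card_pi]
        exact Finset.prod_congr rfl fun i _ =>
          (Fintype.card_equiv (Fintype.equivOfCardEq (h i))).symm
    _ ≤ Fintype.card {σ : β ≃ γ // ∀ x, g (σ x) = f x} :=
        Fintype.card_le_of_injective Φ hΦ

section fibers

variable {α : Type*} [DecidableEq α] {p : ℕ}

lemma card_val_Ico {n : ℕ} (lo hi : ℕ) (h : hi ≤ n) :
    Fintype.card {y : Fin n // lo ≤ (y : ℕ) ∧ (y : ℕ) < hi} = hi - lo := by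
  classical
  rw [Fintype.card_subtype, ← Nat.card_Ico lo hi]
  refine Finset.card_bij (fun y _ => (y : ℕ)) ?_ ?_ ?_
  · intro y hy
    simp only [Finset.mem_filter] at hy
    simp [Finset.mem_Ico, hy.2.1, hy.2.2]
  · intro y hy y' hy' hyy
    exact Fin.ext hyy
  · intro t ht
    simp only [Finset.mem_Ico] at ht
    exact ⟨⟨t, lt_of_lt_of_le ht.2 h⟩, by simp [ht.1, ht.2], rfl⟩

variable [Fintype α]

lemma sum_card_le (B : Fin p → Finset α)
    (hd : ∀ k l, k ≠ l → Disjoint (B k) (B l)) :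
    ∑ k, (B k).card ≤ Fintype.card α := by
  classical
  rw [← Finset.card_biUnion (fun x _ y _ hxy => hd x y hxy)]
  exact (Finset.card_le_card (Finset.subset_univ _)).trans_eq (Finset.card_univ)

lemma card_fcl_fiber (B : Fin p → Finset α)
    (hd : ∀ k l, k ≠ l → Disjoint (B k) (B l)) (i : Fin (p + 1)) :
    Fintype.card {x : α // fcl B x = i}
      = (Fin.snoc (fun k => (B k).card) (Fintype.card α - ∑ k, (B k).card) : Fin (p+1) → ℕ) i := by
  classical
  induction i using Fin.lastCases with
  | last =>
    rw [Fin.snoc_last, Fintype.card_subtype]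
    have : Finset.univ.filter (fun x => fcl B x = Fin.last p)
        = Finset.univ \ Finset.univ.biUnion B := by
      ext x
      simp [fcl_eq_last_iff]
    rw [this, Finset.card_sdiff_of_subset (Finset.subset_univ _), Finset.card_univ,
      Finset.card_biUnion (fun x _ y _ hxy => hd x y hxy)]
  | cast k =>
    rw [Fin.snoc_castSucc, Fintype.card_subtype]
    congr 1
    ext x
    simp [fcl_eq_castSucc_iff hd]

lemma card_gcl_fiber (B : Fin p → Finset α) {n : ℕ} (hn : cuts B p ≤ n) (i : Fin (p + 1)) :
    Fintype.card {y : Fin n // gcl B y = i}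
      = (Fin.snoc (fun k => (B k).card) (n - cuts B p) : Fin (p+1) → ℕ) i := by
  classical
  induction i using Fin.lastCases with
  | last =>
    rw [Fin.snoc_last]
    have : Fintype.card {y : Fin n // gcl B y = Fin.last p}
        = Fintype.card {y : Fin n // cuts B p ≤ (y : ℕ) ∧ (y : ℕ) < n} := by
      apply Fintype.card_congr
      apply Equiv.subtypeEquivRight
      intro y
      rw [gcl_eq_last_iff]
      exact ⟨fun hy => ⟨hy, y.isLt⟩, fun hy => hy.1⟩
    rw [this, card_val_Ico _ _ le_rfl]
  | cast k =>
    rw [Fin.snoc_castSucc]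
    have hk1 : cuts B ((k : ℕ) + 1) ≤ n :=
      le_trans (cuts_mono B (by have := k.isLt; omega)) hn
    have : Fintype.card {y : Fin n // gcl B y = Fin.castSucc k}
        = Fintype.card {y : Fin n // cuts B (k : ℕ) ≤ (y : ℕ) ∧ (y : ℕ) < cuts B ((k:ℕ)+1)} := by
      apply Fintype.card_congr
      exact Equiv.subtypeEquivRight fun y => gcl_eq_castSucc_iff B k y
    rw [this, card_val_Ico _ _ hk1, cuts_succ]
    omega

lemma count_compat_ge (B : Fin p → Finset α)
    (hd : ∀ k l, k ≠ l → Disjoint (B k) (B l)) {n : ℕ} (hcard : Fintype.card α = n) :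
    ∏ i : Fin (p + 1),
        ((Fin.snoc (fun k => (B k).card) (n - ∑ k, (B k).card) : Fin (p+1) → ℕ) i).factorial
      ≤ Fintype.card {σ : α ≃ Fin n // Compat B σ} := by
  classical
  have hn : cuts B p ≤ n := by
    rw [cuts_p]
    exact hcard ▸ sum_card_le B hd
  have hfib : ∀ i : Fin (p + 1),
      Fintype.card {x : α // fcl B x = i} = Fintype.card {y : Fin n // gcl B y = i} := by
    intro i
    rw [card_fcl_fiber B hd i, card_gcl_fiber B hn i, hcard, cuts_p]
  have hmain := glue_card (fcl B) (gcl B (n := n)) hfib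
  have heq : Fintype.card {σ : α ≃ Fin n // ∀ x, gcl B (σ x) = fcl B x}
      = Fintype.card {σ : α ≃ Fin n // Compat B σ} :=
    Fintype.card_congr (Equiv.subtypeEquivRight fun _ => Iff.rfl)
  rw [heq] at hmain
  refine le_trans (le_of_eq ?_) hmain
  apply Finset.prod_congr rfl
  intro i _
  rw [card_fcl_fiber B hd i, hcard]

end fibers

/-- key chain bound per permutation -/
lemma chainBound {α : Type*} [DecidableEq α] (r : ℕ) :
    ∀ (q : ℕ) (T : Finset (Fin q → Finset α)),
      (∀ k : Fin q, ∀ s ∈ T, ∀ t ∈ T, (∀ i, i < k → s i = t i) → s k ⊆ t k ∨ t k ⊆ s k) →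
      (∀ k : Fin q, ∀ C : Finset (Finset α),
          (C : Set (Finset α)) ⊆ ↑(T.image fun t => t k) →
          IsChain (· ⊆ ·) (C : Set (Finset α)) → C.card ≤ r) →
      T.card ≤ r ^ q := by
  intro q
  induction q with
  | zero =>
    intro T _ _
    rw [pow_zero]
    refine Finset.card_le_one.mpr (fun s _ t _ => ?_)
    funext i
    exact absurd i.isLt (Nat.not_lt_zero _)
  | succ q ih =>
    intro T H1 H2
    classical
    set V := T.image (fun t => t 0) with hV
    have hchain : IsChain (· ⊆ ·) (V : Set (Finset α)) := by
      rintro v hv w hw hne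
      simp only [hV, Finset.coe_image, Set.mem_image, Finset.mem_coe] at hv hw
      obtain ⟨s, hs, rfl⟩ := hv
      obtain ⟨t, ht, rfl⟩ := hw
      rcases H1 0 s hs t ht (fun i hi => absurd hi (by simp [Fin.not_lt_zero]
        )) with h | h
      · exact Or.inl h
      · exact Or.inr h
    have hVcard : V.card ≤ r := H2 0 V (by rw [hV]) hchain
    have hfib : T.card = ∑ v ∈ V, (T.filter fun t => t 0 = v).card :=
      Finset.card_eq_sum_card_fiberwise (fun t ht => Finset.mem_image_of_mem _ ht)
    have hfibbound : ∀ v ∈ V, (T.filter fun t => t 0 = v).card ≤ r ^ q := by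
      intro v hv
      set W := (T.filter fun t => t 0 = v).image
        (fun t => (Fin.tail t : Fin q → Finset α)) with hW
      have hinj : Set.InjOn (fun t : Fin (q+1) → Finset α => (Fin.tail t : Fin q → Finset α))
          ↑(T.filter fun t => t 0 = v) := by
        intro s hs t ht hst
        simp only [Finset.coe_filter, Set.mem_setOf_eq] at hs ht
        funext i
        induction i using Fin.cases with
        | zero => rw [hs.2, ht.2]
        | succ j => exact congrFun hst j
      have hcardW : (T.filter fun t => t 0 = v).card = W.card :=
        (Finset.card_image_of_injOn hinj).symm
      rw [hcardW]
      apply ih W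
      · intro k s' hs' t' ht' hpre
        simp only [hW, Finset.mem_image, Finset.mem_filter] at hs' ht'
        obtain ⟨s, ⟨hsT, hs0⟩, rfl⟩ := hs'
        obtain ⟨t, ⟨htT, ht0⟩, rfl⟩ := ht'
        exact H1 k.succ s hsT t htT (by
          intro i hi
          induction i using Fin.cases with
          | zero => rw [hs0, ht0]
          | succ j =>
            exact hpre j (by simpa [Fin.succ_lt_succ_iff] using hi))
      · intro k C hC hCchain
        refine H2 k.succ C (hC.trans ?_) hCchain
        intro u hu
        simp only [hW, Finset.coe_image, Set.mem_image, Finset.mem_coe,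
          Finset.mem_image, Finset.mem_filter] at hu ⊢
        obtain ⟨t', ht', rfl⟩ := hu
        obtain ⟨t, ⟨htT, _⟩, rfl⟩ := ht'
        exact ⟨t, htT, rfl⟩
    calc T.card = ∑ v ∈ V, (T.filter fun t => t 0 = v).card := hfib
      _ ≤ ∑ _v ∈ V, r ^ q := Finset.sum_le_sum hfibbound
      _ = V.card * r ^ q := by rw [Finset.sum_const, smul_eq_mul]
      _ ≤ r * r ^ q := Nat.mul_le_mul_right _ hVcard
      _ = r ^ (q + 1) := by rw [pow_succ]; ring

/-- choosing the R largest values -/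
lemma exists_largest {ι : Type*} [DecidableEq ι] (s : Finset ι) (M : ι → ℕ) (R : ℕ) :
    ∃ t ⊆ s, t.card ≤ R ∧
      (t = s ∨ (t.card = R ∧ ∀ a ∈ t, ∀ b ∈ s \ t, M b ≤ M a)) := by
  induction R generalizing s with
  | zero =>
    exact ⟨∅, Finset.empty_subset s, le_rfl, Or.inr ⟨rfl, fun a ha => absurd ha (by simp)⟩⟩
  | succ R ih =>
    rcases Finset.eq_empty_or_nonempty s with rfl | hne
    · exact ⟨∅, Finset.Subset.refl _, by simp, Or.inl rfl⟩
    · obtain ⟨a, has, hamax⟩ := Finset.exists_max_image s M hne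
      obtain ⟨t', ht'sub, ht'card, ht'branch⟩ := ih (s.erase a)
      refine ⟨insert a t', ?_, ?_, ?_⟩
      · exact Finset.insert_subset has (ht'sub.trans (Finset.erase_subset a s))
      · have : a ∉ t' := fun h => (Finset.mem_erase.mp (ht'sub h)).1 rfl
        rw [Finset.card_insert_of_notMem this]
        omega
      · have hat' : a ∉ t' := fun h => (Finset.mem_erase.mp (ht'sub h)).1 rfl
        rcases ht'branch with heq | ⟨hcard, hmax⟩
        · left
          rw [heq, Finset.insert_erase has]
        · right
          constructor
          · rw [Finset.card_insert_of_notMem hat', hcard]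
          · intro a' ha' b hb
            have hbs : b ∈ s := (Finset.mem_sdiff.mp hb).1
            have hbni : b ∉ insert a t' := (Finset.mem_sdiff.mp hb).2
            have hbne : b ≠ a := fun h => hbni (h ▸ Finset.mem_insert_self a t')
            have hb' : b ∈ (s.erase a) \ t' := by
              rw [Finset.mem_sdiff, Finset.mem_erase]
              exact ⟨⟨hbne, hbs⟩, fun h => hbni (Finset.mem_insert_of_mem h)⟩
            rcases Finset.mem_insert.mp ha' with rfl | ha't'
            · exact hamax b hbs
            · exact hmax a' ha't' b hb'

/-- final arithmetic lemma -/
lemma final {ι : Type*} [DecidableEq ι] (s : Finset ι) (M K x : ι → ℕ) (N R : ℕ)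
    (hN : 0 < N) (hMK : ∀ a ∈ s, M a * K a = N) (hx : ∀ a ∈ s, x a * K a ≤ N)
    (hsum : ∑ a ∈ s, x a * K a ≤ R * N) :
    ∑ a ∈ s, x a ≤ sumLargest s M R := by
  classical
  have hKpos : ∀ a ∈ s, 0 < K a := by
    intro a ha
    rcases Nat.eq_zero_or_pos (K a) with h | h
    · exact absurd (hMK a ha) (by rw [h, Nat.mul_zero]; omega)
    · exact h
  have hMpos : ∀ a ∈ s, 0 < M a := by
    intro a ha
    rcases Nat.eq_zero_or_pos (M a) with h | h
    · exact absurd (hMK a ha) (by rw [h, Nat.zero_mul]; omega)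
    · exact h
  have hxM : ∀ a ∈ s, x a ≤ M a := by
    intro a ha
    have h1 : x a * K a ≤ M a * K a := (hx a ha).trans_eq (hMK a ha).symm
    exact Nat.le_of_mul_le_mul_right h1 (hKpos a ha)
  obtain ⟨t, hts, htcard, hbranch⟩ := exists_largest s M R
  have hsup : ∑ a ∈ t, M a ≤ sumLargest s M R := by
    apply Finset.le_sup (f := fun t => ∑ i ∈ t, M i)
    rw [Finset.mem_filter, Finset.mem_powerset]
    exact ⟨hts, htcard⟩
  rcases hbranch with rfl | ⟨hcard, hmax⟩
  · exact le_trans (Finset.sum_le_sum hxM) hsup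
  · rcases Finset.eq_empty_or_nonempty t with rfl | htne
    · have hR : R = 0 := by simpa using hcard.symm
      subst hR
      rw [Nat.zero_mul] at hsum
      have : ∀ a ∈ s, x a = 0 := by
        intro a ha
        have h1 : x a * K a = 0 := by
          have h2 := Finset.single_le_sum (f := fun a => x a * K a)
            (fun i _ => Nat.zero_le _) ha
          omega
        have := hKpos a ha
        rcases Nat.mul_eq_zero.mp h1 with h | h
        · exact h
        · omega
      rw [Finset.sum_congr rfl this, Finset.sum_const, smul_eq_mul, Nat.mul_zero]
      exact Nat.zero_le _
    · obtain ⟨a₀, ha₀t, ha₀min⟩ := Finset.exists_min_image t M htne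
      set μ := M a₀ with hμ
      set κ := K a₀ with hκ
      have ha₀s : a₀ ∈ s := hts ha₀t
      have hμκ : μ * κ = N := hMK a₀ ha₀s
      have hκpos : 0 < κ := hKpos a₀ ha₀s
      have hμpos : 0 < μ := hMpos a₀ ha₀s
      have hterm : ∀ a ∈ t, κ * x a + N ≤ κ * M a + x a * K a := by
        intro a hat
        have has : a ∈ s := hts hat
        have hMa : 0 < M a := hMpos a has
        have hxa : x a ≤ M a := hxM a has
        have hμa : μ ≤ M a := ha₀min a hat
        have hNa : M a * K a = N := hMK a has
        have key : M a * (κ * x a + N) ≤ M a * (κ * M a + x a * K a) := by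
          have expand : M a * (κ * M a + x a * K a) = κ * (M a * M a) + x a * N := by
            rw [Nat.mul_add]
            ring_nf
            rw [Nat.mul_comm (M a) (K a)] at hNa
            nlinarith [hNa]
          have expand2 : M a * (κ * x a + N) = κ * (x a * M a) + μ * κ * M a := by
            rw [Nat.mul_add, ← hμκ]
            ring
          rw [expand, expand2]
          have base : x a * M a + μ * M a ≤ M a * M a + x a * μ := by
            nlinarith [Nat.mul_le_mul (Nat.sub_le (M a) (x a)) (Nat.sub_le (M a) μ)]
          calc κ * (x a * M a) + μ * κ * M a
              = κ * (x a * M a + μ * M a) := by ring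
            _ ≤ κ * (M a * M a + x a * μ) := Nat.mul_le_mul_left κ base
            _ = κ * (M a * M a) + x a * (μ * κ) := by ring
            _ = κ * (M a * M a) + x a * N := by rw [hμκ]
        exact Nat.le_of_mul_le_mul_left key hMa
      have hout : ∀ b ∈ s \ t, κ * x b ≤ x b * K b := by
        intro b hb
        have hbs : b ∈ s := (Finset.mem_sdiff.mp hb).1
        have hMb : M b ≤ μ := hmax a₀ ha₀t b hb
        have hKb : κ ≤ K b := by
          have h1 : M b * K b = N := hMK b hbs
          have h2 : 0 < M b := hMpos b hbs
          by_contra hc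
          push_neg at hc
          have : M b * K b < μ * κ := by
            calc M b * K b ≤ μ * K b := Nat.mul_le_mul_right _ hMb
              _ < μ * κ := (Nat.mul_lt_mul_left hμpos).mpr hc
          omega
        calc κ * x b ≤ K b * x b := Nat.mul_le_mul_right _ hKb
          _ = x b * K b := Nat.mul_comm _ _
      have hsplit : ∑ a ∈ s, x a = ∑ a ∈ t, x a + ∑ a ∈ s \ t, x a := by
        rw [← Finset.sum_sdiff hts, Nat.add_comm]
      have hsplit2 : ∑ a ∈ s, x a * K a = ∑ a ∈ t, x a * K a + ∑ a ∈ s \ t, x a * K a := by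
        rw [← Finset.sum_sdiff hts, Nat.add_comm]
      have hmain : κ * ∑ a ∈ s, x a + ∑ a ∈ t, x a * K a
          ≤ κ * ∑ a ∈ t, M a + ∑ a ∈ t, x a * K a := by
        calc κ * ∑ a ∈ s, x a + ∑ a ∈ t, x a * K a
            = (∑ a ∈ t, κ * x a) + ((∑ a ∈ s \ t, κ * x a) + ∑ a ∈ t, x a * K a) := by
              rw [hsplit, Nat.mul_add, Finset.mul_sum, Finset.mul_sum]; ring
          _ ≤ (∑ a ∈ t, κ * x a) + ((∑ a ∈ s \ t, x a * K a) + ∑ a ∈ t, x a * K a) := by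
              apply Nat.add_le_add_left
              apply Nat.add_le_add_right
              exact Finset.sum_le_sum hout
          _ = (∑ a ∈ t, κ * x a) + ∑ a ∈ s, x a * K a := by rw [hsplit2]; ring
          _ ≤ (∑ a ∈ t, κ * x a) + R * N := Nat.add_le_add_left hsum _
          _ = ∑ a ∈ t, (κ * x a + N) := by
              rw [Finset.sum_add_distrib, Finset.sum_const, smul_eq_mul, hcard]
          _ ≤ ∑ a ∈ t, (κ * M a + x a * K a) := Finset.sum_le_sum hterm
          _ = κ * ∑ a ∈ t, M a + ∑ a ∈ t, x a * K a := by
              rw [Finset.sum_add_distrib, Finset.mul_sum]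
      have hfinal : κ * ∑ a ∈ s, x a ≤ κ * ∑ a ∈ t, M a := Nat.add_le_add_iff_right.mp hmain
      exact le_trans (Nat.le_of_mul_le_mul_left hfinal hκpos) hsup

end RFam

/-- **Corollary (r-families).** Fix `p ≥ 2` and `r ≥ 1`. If `(A_{j1}, …, A_{jp})`,
`j = 1, …, m`, are distinct weak partial compositions of an `n`-element set `S` into `p`
parts such that for each `k ∈ [p]` the set of distinct values `{A_{jk}}` is `r`-chain-free,
then `m` is at most the sum of the `r^p` largest `(p+1)`-multinomial coefficients for `n`. -/
theorem rfamily {α : Type*} [Fintype α] [DecidableEq α] (p r n : ℕ)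
    (hp : 2 ≤ p) (hr : 1 ≤ r) (hcard : Fintype.card α = n)
    (m : ℕ) (A : Fin m → Fin p → Finset α)
    (hinj : Function.Injective A)
    (hdisj : ∀ j, ∀ k l : Fin p, k ≠ l → Disjoint (A j k) (A j l))
    (hcf : ∀ k : Fin p, ChainFree (Set.range fun j => A j k) r) :
    m ≤ sumLargest (Finset.Nat.antidiagonalTuple (p + 1) n)
          (fun a => Nat.multinomial Finset.univ a) (r ^ p) := by
  classical
  set vec : Fin m → (Fin (p+1) → ℕ) :=
    fun j => (Fin.snoc (fun k => (A j k).card) (n - ∑ k, (A j k).card) : Fin (p+1) → ℕ)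
    with hvec
  set Kf : (Fin (p+1) → ℕ) → ℕ := fun a => ∏ k, (a k).factorial with hKf
  have hsum_le : ∀ j, ∑ k, (A j k).card ≤ n :=
    fun j => hcard ▸ RFam.sum_card_le (A j) (hdisj j)
  have hvecmem : ∀ j, vec j ∈ Finset.Nat.antidiagonalTuple (p+1) n := by
    intro j
    rw [Finset.Nat.mem_antidiagonalTuple, Fin.sum_univ_castSucc]
    simp only [hvec, Fin.snoc_castSucc, Fin.snoc_last]
    have := hsum_le j
    omega
  have hEquiv : Fintype.card (α ≃ Fin n) = n.factorial := by
    rw [Fintype.card_equiv (Fintype.equivOfCardEq (by simp [hcard]))]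
    rw [hcard]
  set cnt : Fin m → ℕ :=
    fun j => (Finset.univ.filter fun σ : α ≃ Fin n => RFam.Compat (A j) σ).card with hcnt
  have h1 : ∀ j, Kf (vec j) ≤ cnt j := by
    intro j
    have h := RFam.count_compat_ge (A j) (hdisj j) hcard
    rw [Fintype.card_subtype] at h
    exact h
  have h3 : ∀ σ : α ≃ Fin n, (Finset.univ.filter fun j => RFam.Compat (A j) σ).card ≤ r ^ p := by
    intro σ
    set J := Finset.univ.filter fun j => RFam.Compat (A j) σ with hJ
    have hTcard : J.card = (J.image A).card := (Finset.card_image_of_injective J hinj).symm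
    rw [hTcard]
    apply RFam.chainBound r p (J.image A)
    · intro k s hs t ht hpre
      simp only [Finset.mem_image] at hs ht
      obtain ⟨j, hj, rfl⟩ := hs
      obtain ⟨j', hj', rfl⟩ := ht
      simp only [hJ, Finset.mem_filter, Finset.mem_univ, true_and] at hj hj'
      exact RFam.compat_comparable (hdisj j) (hdisj j') hj hj' k hpre
    · intro k C hC hchain
      refine hcf k C (hC.trans ?_) hchain
      intro u hu
      simp only [Finset.coe_image, Set.mem_image, Finset.mem_coe, Finset.mem_image] at hu
      obtain ⟨t, ⟨j, hj, rfl⟩, rfl⟩ := hu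
      exact ⟨j, rfl⟩
  have hdouble : ∑ j : Fin m, cnt j
      = ∑ σ : α ≃ Fin n, (Finset.univ.filter fun j => RFam.Compat (A j) σ).card := by
    simp only [hcnt, Finset.card_filter]
    rw [Finset.sum_comm]
  have hLYM : ∑ j : Fin m, Kf (vec j) ≤ r ^ p * n.factorial := by
    calc ∑ j : Fin m, Kf (vec j) ≤ ∑ j : Fin m, cnt j := Finset.sum_le_sum (fun j _ => h1 j)
      _ = ∑ σ : α ≃ Fin n, (Finset.univ.filter fun j => RFam.Compat (A j) σ).card := hdouble
      _ ≤ ∑ _σ : α ≃ Fin n, r ^ p := Finset.sum_le_sum (fun σ _ => h3 σ)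
      _ = n.factorial * r ^ p := by
          rw [Finset.sum_const, smul_eq_mul, Finset.card_univ, hEquiv]
      _ = r ^ p * n.factorial := Nat.mul_comm _ _
  have hclass : ∀ a, (Finset.univ.filter fun j => vec j = a).card * Kf a ≤ n.factorial := by
    intro a
    set Q := Finset.univ.filter fun j => vec j = a with hQ
    have hstep2 : ∑ j ∈ Q, cnt j ≤ n.factorial := by
      have : ∑ j ∈ Q, cnt j
          = ∑ σ : α ≃ Fin n, (Q.filter fun j => RFam.Compat (A j) σ).card := by
        simp only [hcnt, Finset.card_filter]
        rw [Finset.sum_comm]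
      rw [this]
      have huniq : ∀ σ : α ≃ Fin n, (Q.filter fun j => RFam.Compat (A j) σ).card ≤ 1 := by
        intro σ
        apply Finset.card_le_one.mpr
        intro j hj j' hj'
        simp only [hQ, Finset.mem_filter, Finset.mem_univ, true_and] at hj hj'
        apply hinj
        apply RFam.compat_eq_of_cards (hdisj j) (hdisj j') hj.2 hj'.2
        intro k
        have h0 : vec j = vec j' := by rw [hj.1, hj'.1]
        have h2 := congrFun h0 (Fin.castSucc k)
        simpa only [hvec, Fin.snoc_castSucc] using h2
      calc ∑ σ : α ≃ Fin n, (Q.filter fun j => RFam.Compat (A j) σ).card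
          ≤ ∑ _σ : α ≃ Fin n, 1 := Finset.sum_le_sum (fun σ _ => huniq σ)
        _ = n.factorial := by rw [Finset.sum_const, smul_eq_mul, Finset.card_univ, hEquiv,
            Nat.mul_one]
    have hstep1 : Q.card * Kf a ≤ ∑ j ∈ Q, cnt j := by
      calc Q.card * Kf a = ∑ _j ∈ Q, Kf a := by rw [Finset.sum_const, smul_eq_mul]
        _ ≤ ∑ j ∈ Q, cnt j := by
            apply Finset.sum_le_sum
            intro j hj
            have hv : vec j = a := (Finset.mem_filter.mp hj).2
            rw [← hv]
            exact h1 j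
    exact hstep1.trans hstep2
  have hm : m = ∑ a ∈ Finset.Nat.antidiagonalTuple (p+1) n,
      (Finset.univ.filter fun j => vec j = a).card := by
    have h := Finset.card_eq_sum_card_fiberwise
      (f := vec) (s := Finset.univ) (t := Finset.Nat.antidiagonalTuple (p+1) n)
      (fun j _ => hvecmem j)
    simpa using h
  have hgroup : ∑ a ∈ Finset.Nat.antidiagonalTuple (p+1) n,
      (Finset.univ.filter fun j => vec j = a).card * Kf a = ∑ j : Fin m, Kf (vec j) := by
    rw [← Finset.sum_fiberwise_of_maps_to (fun j _ => hvecmem j) (fun j => Kf (vec j))]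
    apply Finset.sum_congr rfl
    intro a ha
    rw [Finset.sum_congr rfl (fun j hj => by
      rw [(Finset.mem_filter.mp hj).2]), Finset.sum_const, smul_eq_mul]
  have hMK : ∀ a ∈ Finset.Nat.antidiagonalTuple (p+1) n,
      Nat.multinomial Finset.univ a * Kf a = n.factorial := by
    intro a ha
    have hspec := Nat.multinomial_spec Finset.univ a
    rw [Finset.Nat.mem_antidiagonalTuple] at ha
    rw [Nat.mul_comm, hKf]
    simpa [ha] using hspec
  rw [hm]
  apply RFam.final _ _ Kf _ n.factorial _ (Nat.factorial_pos n) hMK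
  · intro a ha
    exact hclass a
  · rw [hgroup]
    exact hLYM
end
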